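/- arXiv:2209.04500 — 14 statements merged into one kernel-verified Lean document; each statement's English description precedes it below -/
import Mathlib

section
/- If S is a redundant locating-dominating set of a graph G, then for all distinct u, v ∈ V(G) \ S, the symmetric difference (N(v) ∩ S) △ (N(u) ∩ S) has cardinality at least 2. -/
open scoped symmDiff

/-- A locating-dominating (LD) set: every non-detector is dominated, and
distinct non-detectors have distinct neighborhood traces on `S`. -/
def IsLDSet {V : Type*} (G : SimpleGraph V) (S : Set V) : Prop :=
  (∀ v ∉ S, (G.neighborSet v ∩ S).Nonempty) ∧
    ∀ u ∉ S, ∀ v ∉ S, u ≠ v → G.neighborSet u ∩ S ≠ G.neighborSet v ∩ S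

/-- A redundant locating-dominating (RED:LD) set. -/
def IsRedLDSet {V : Type*} (G : SimpleGraph V) (S : Set V) : Prop :=
  IsLDSet G S ∧ ∀ v ∈ S, IsLDSet G (S \ {v})

/-- A leaf is a vertex of degree 1. -/
def IsLeaf {V : Type*} (G : SimpleGraph V) (v : V) : Prop :=
  (G.neighborSet v).ncard = 1

/-- A support vertex is a vertex adjacent to a leaf. -/
def IsSupport {V : Type*} (G : SimpleGraph V) (v : V) : Prop :=
  ∃ u, G.Adj v u ∧ IsLeaf G u

theorem stmt2 {V : Type*} [Fintype V] (G : SimpleGraph V) (S : Set V)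
    (hS : IsRedLDSet G S) (u v : V) (hu : u ∉ S) (hv : v ∉ S) (hne : u ≠ v) :
    2 ≤ ((G.neighborSet v ∩ S) ∆ (G.neighborSet u ∩ S)).ncard := by
  classical
  have h1 : G.neighborSet v ∩ S ≠ G.neighborSet u ∩ S :=
    hS.1.2 v hv u hu hne.symm
  obtain ⟨x, hx⟩ : ((G.neighborSet v ∩ S) ∆ (G.neighborSet u ∩ S)).Nonempty := by
    rw [Set.nonempty_iff_ne_empty, ne_eq, ← Set.bot_eq_empty, symmDiff_eq_bot]
    exact h1
  have hxS : x ∈ S := by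
    rcases Set.mem_symmDiff.mp hx with ⟨⟨_, h⟩, _⟩ | ⟨⟨_, h⟩, _⟩ <;> exact h
  have hLD := hS.2 x hxS
  have hu' : u ∉ S \ {x} := fun h => hu h.1
  have hv' : v ∉ S \ {x} := fun h => hv h.1
  have h2 : G.neighborSet v ∩ (S \ {x}) ≠ G.neighborSet u ∩ (S \ {x}) :=
    hLD.2 v hv' u hu' hne.symm
  obtain ⟨y, hy⟩ : ((G.neighborSet v ∩ (S \ {x})) ∆ (G.neighborSet u ∩ (S \ {x}))).Nonempty := by
    rw [Set.nonempty_iff_ne_empty, ne_eq, ← Set.bot_eq_empty, symmDiff_eq_bot]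
    exact h2
  have hyx : y ≠ x := by
    rcases Set.mem_symmDiff.mp hy with ⟨⟨_, _, h⟩, _⟩ | ⟨⟨_, _, h⟩, _⟩ <;>
      simpa using h
  have hyD : y ∈ (G.neighborSet v ∩ S) ∆ (G.neighborSet u ∩ S) := by
    rcases Set.mem_symmDiff.mp hy with ⟨⟨h1', h2', _⟩, h3⟩ | ⟨⟨h1', h2', _⟩, h3⟩
    · exact Set.mem_symmDiff.mpr (Or.inl ⟨⟨h1', h2'⟩, fun h => h3 ⟨h.1, h.2, hyx⟩⟩)
    · exact Set.mem_symmDiff.mpr (Or.inr ⟨⟨h1', h2'⟩, fun h => h3 ⟨h.1, h.2, hyx⟩⟩)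
  have hfin : ((G.neighborSet v ∩ S) ∆ (G.neighborSet u ∩ S)).Finite :=
    Set.toFinite _
  exact Set.one_lt_ncard_iff hfin |>.mpr ⟨y, x, hyD, hx, hyx⟩
end

section
/- A set S ⊆ V(G) is a redundant locating-dominating set if and only if the following three conditions hold: (i) for all v ∈ V(G), |N[v] ∩ S| ≥ 2; (ii) for all v ∈ S and u ∈ V(G) \ S, |((N(v) ∩ S) △ (N(u) ∩ S)) \ {v}| ≥ 1; (iii) for all distinct u, v ∈ V(G) \ S, |(N(v) ∩ S) △ (N(u) ∩ S)| ≥ 2. -/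
open scoped symmDiff

/-!
Removing a detector `w` from `S` changes the trace `N(x) ∩ S` of every vertex only by deleting
`w` from it. So `S` is RED:LD exactly when the trace of each non-detector, and the symmetric
difference of the traces of two distinct non-detectors, is nonempty and stays nonempty after
deleting any single detector; for a subset of `S` that means having at least two elements,
which gives (i) for `v ∉ S` and (iii). The vertex `w` itself leaves `S` too: it must then be
dominated by `N(w) ∩ S` (this is (i) for `v ∈ S`) and separated from every non-detector (ii).
-/

theorem sdiff_symmDiff_sdiff {α : Type*} [GeneralizedBooleanAlgebra α] (a b c : α) :
    (a \ c) ∆ (b \ c) = (a ∆ b) \ c := by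
  simp only [symmDiff, sup_sdiff, sdiff_sdiff_left, sup_sdiff_self_right]
  rw [sup_comm c b, sup_comm c a]

namespace Set

variable {α : Type*}

theorem two_le_ncard_iff_nonempty_sdiff_singleton {A S : Set α} (hA : A ⊆ S) (hfin : A.Finite) :
    2 ≤ A.ncard ↔ A.Nonempty ∧ ∀ w ∈ S, (A \ {w}).Nonempty := by
  constructor
  · intro h
    refine ⟨(ncard_pos hfin).1 (by omega), fun w _ => ?_⟩
    obtain ⟨b, hb, hbw⟩ := exists_ne_of_one_lt_ncard h w
    exact ⟨b, hb, hbw⟩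
  · rintro ⟨⟨a, ha⟩, hdiff⟩
    obtain ⟨b, hb, hba⟩ := hdiff a (hA ha)
    exact (one_lt_ncard hfin).2 ⟨a, ha, b, hb, fun h => hba h.symm⟩

theorem forall_notMem_sdiff_singleton {S : Set α} {w : α} {P : α → Prop} :
    (∀ x ∉ S \ {w}, P x) ↔ P w ∧ ∀ x ∉ S, P x := by
  grind

end Set

section

variable {V : Type*} (G : SimpleGraph V) (S : Set V)

theorem isLDSet_iff : IsLDSet G S ↔ (∀ v ∉ S, (G.neighborSet v ∩ S).Nonempty) ∧
    ∀ u ∉ S, ∀ v ∉ S, u ≠ v → ((G.neighborSet u ∩ S) ∆ (G.neighborSet v ∩ S)).Nonempty := by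
  simp only [IsLDSet, Set.symmDiff_nonempty]

theorem isLDSet_sdiff_singleton_iff {w : V} (hw : w ∈ S) : IsLDSet G (S \ {w}) ↔
    (G.neighborSet w ∩ S).Nonempty ∧ (∀ v ∉ S, ((G.neighborSet v ∩ S) \ {w}).Nonempty) ∧
    (∀ u ∉ S, (((G.neighborSet w ∩ S) ∆ (G.neighborSet u ∩ S)) \ {w}).Nonempty) ∧
    ∀ u ∉ S, ∀ v ∉ S, u ≠ v →
      (((G.neighborSet u ∩ S) ∆ (G.neighborSet v ∩ S)) \ {w}).Nonempty := by
  simp only [isLDSet_iff, ← Set.inter_sdiff_assoc, sdiff_symmDiff_sdiff,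
    Set.forall_notMem_sdiff_singleton]
  have hself : (G.neighborSet w ∩ S) \ {w} = G.neighborSet w ∩ S :=
    Set.sdiff_singleton_eq_self fun h => G.notMem_neighborSet_self h.1
  have hne : ∀ x ∉ S, x ≠ w := fun x hx h => hx (h ▸ hw)
  grind

variable [Finite V] {G S}

theorem two_le_ncard_insert_neighborSet_inter_iff_of_mem {v : V} (hv : v ∈ S) :
    2 ≤ (insert v (G.neighborSet v) ∩ S).ncard ↔ (G.neighborSet v ∩ S).Nonempty := by
  rw [Set.insert_inter_of_mem hv,
    Set.ncard_insert_of_notMem fun h => G.notMem_neighborSet_self h.1]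
  exact Nat.succ_le_succ_iff.trans (Set.ncard_pos (Set.toFinite _))

theorem two_le_ncard_insert_neighborSet_inter_iff_of_notMem {v : V} (hv : v ∉ S) :
    2 ≤ (insert v (G.neighborSet v) ∩ S).ncard ↔
      (G.neighborSet v ∩ S).Nonempty ∧ ∀ w ∈ S, ((G.neighborSet v ∩ S) \ {w}).Nonempty := by
  rw [Set.insert_inter_of_notMem hv]
  exact Set.two_le_ncard_iff_nonempty_sdiff_singleton Set.inter_subset_right (Set.toFinite _)

theorem two_le_ncard_symmDiff_neighborSet_inter_iff (u v : V) :
    2 ≤ ((G.neighborSet u ∩ S) ∆ (G.neighborSet v ∩ S)).ncard ↔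
      ((G.neighborSet u ∩ S) ∆ (G.neighborSet v ∩ S)).Nonempty ∧
        ∀ w ∈ S, (((G.neighborSet u ∩ S) ∆ (G.neighborSet v ∩ S)) \ {w}).Nonempty :=
  Set.two_le_ncard_iff_nonempty_sdiff_singleton
    (symmDiff_le_sup.trans (sup_le Set.inter_subset_right Set.inter_subset_right))
    (Set.toFinite _)

end

theorem stmt3 {V : Type*} [Fintype V] (G : SimpleGraph V) (S : Set V) :
    IsRedLDSet G S ↔
      ((∀ v : V, 2 ≤ ((insert v (G.neighborSet v)) ∩ S).ncard) ∧
       (∀ v ∈ S, ∀ u ∉ S,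
          1 ≤ (((G.neighborSet v ∩ S) ∆ (G.neighborSet u ∩ S)) \ {v}).ncard) ∧
       (∀ u ∉ S, ∀ v ∉ S, u ≠ v →
          2 ≤ ((G.neighborSet v ∩ S) ∆ (G.neighborSet u ∩ S)).ncard)) := by
  rw [IsRedLDSet, isLDSet_iff]
  constructor
  · rintro ⟨⟨hdom, hsep⟩, hred⟩
    have hdelete := fun w hw => (isLDSet_sdiff_singleton_iff G S hw).1 (hred w hw)
    refine ⟨fun v => ?_,
      fun v hv u hu => (Set.ncard_pos (Set.toFinite _)).2 ((hdelete v hv).2.2.1 u hu),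
      fun u hu v hv huv => ?_⟩
    · by_cases hv : v ∈ S
      · exact (two_le_ncard_insert_neighborSet_inter_iff_of_mem hv).2 (hdelete v hv).1
      · exact (two_le_ncard_insert_neighborSet_inter_iff_of_notMem hv).2
          ⟨hdom v hv, fun w hw => (hdelete w hw).2.1 v hv⟩
    · exact (two_le_ncard_symmDiff_neighborSet_inter_iff v u).2
        ⟨hsep v hv u hu huv.symm, fun w hw => (hdelete w hw).2.2.2 v hv u hu huv.symm⟩
  · rintro ⟨hclosed, hmixed, hpair⟩
    have hdom v (hv : v ∉ S) :=
      (two_le_ncard_insert_neighborSet_inter_iff_of_notMem hv).1 (hclosed v)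
    have hsep u (hu : u ∉ S) v (hv : v ∉ S) (huv : u ≠ v) :=
      (two_le_ncard_symmDiff_neighborSet_inter_iff u v).1 (hpair v hv u hu huv.symm)
    refine ⟨⟨fun v hv => (hdom v hv).1, fun u hu v hv huv => (hsep u hu v hv huv).1⟩,
      fun w hw => (isLDSet_sdiff_singleton_iff G S hw).2 ⟨?_, ?_, ?_, ?_⟩⟩
    · exact (two_le_ncard_insert_neighborSet_inter_iff_of_mem hw).1 (hclosed w)
    · exact fun v hv => (hdom v hv).2 w hw
    · exact fun u hu => (Set.ncard_pos (Set.toFinite _)).1 (hmixed w hw u hu)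
    · exact fun u hu v hv huv => (hsep u hu v hv huv).2 w hw
end

section
/- If a graph G on n vertices has a redundant locating-dominating set of cardinality at most k, then n ≤ 2^{k-1} + k - 2. -/
open scoped symmDiff

/-!
The traces `N(v) ∩ S` of the vertices outside an LD set `S` are distinct nonempty subsets of `S`,
so at most `2 ^ |S| - 1` vertices lie outside `S`. For a redundant LD set, apply this to the LD set
`S \ {v}` with `v ∈ S`.
-/

lemma IsLDSet.ncard_compl_lt {V : Type*} [Finite V] {G : SimpleGraph V} {S : Set V}
    (h : IsLDSet G S) : Sᶜ.ncard < 2 ^ S.ncard := by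
  set trace : V → Set V := fun v ↦ G.neighborSet v ∩ S
  have htrace_inj : Set.InjOn trace Sᶜ := fun u hu v hv huv ↦
    by_contra fun hne ↦ h.2 u hu v hv hne huv
  have htrace_ssubset : trace '' Sᶜ ⊂ 𝒫 S := by
    refine (Set.ssubset_iff_of_subset ?_).mpr ⟨∅, Set.empty_subset S, ?_⟩
    · rintro _ ⟨v, -, rfl⟩
      exact Set.inter_subset_right
    · rintro ⟨v, hv, hempty⟩
      exact (h.1 v hv).ne_empty hempty
  calc Sᶜ.ncard = (trace '' Sᶜ).ncard := htrace_inj.ncard_image.symm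
    _ < (𝒫 S).ncard := Set.ncard_lt_ncard htrace_ssubset
    _ = 2 ^ S.ncard := Set.ncard_powerset S

lemma IsLDSet.card_lt {V : Type*} [Finite V] {G : SimpleGraph V} {S : Set V}
    (h : IsLDSet G S) : Nat.card V < 2 ^ S.ncard + S.ncard := by
  have hcompl := h.ncard_compl_lt
  have hsplit := Set.ncard_add_ncard_compl S
  omega

lemma IsRedLDSet.card_add_one_lt {V : Type*} [Finite V] {G : SimpleGraph V} {S : Set V}
    (h : IsRedLDSet G S) (hne : S.Nonempty) :
    Nat.card V + 1 < 2 ^ (S.ncard - 1) + S.ncard := by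
  obtain ⟨v, hv⟩ := hne
  have hbound := (h.2 v hv).card_lt
  rw [Set.ncard_sdiff_singleton_of_mem hv] at hbound
  have hpos := (Set.ncard_pos (Set.toFinite S)).mpr ⟨v, hv⟩
  omega

theorem stmt5 {V : Type*} [Fintype V] (G : SimpleGraph V) (S : Set V) (k : ℕ)
    (hS : IsRedLDSet G S) (hk : S.ncard ≤ k) :
    Fintype.card V ≤ 2 ^ (k - 1) + k - 2 := by
  rw [← Nat.card_eq_fintype_card]
  rcases S.eq_empty_or_nonempty with rfl | hne
  · have hbound := hS.1.card_lt
    simp only [Set.ncard_empty, pow_zero, add_zero, Nat.lt_one_iff] at hbound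
    omega
  · have hbound := hS.card_add_one_lt hne
    have hpow : 2 ^ (S.ncard - 1) ≤ 2 ^ (k - 1) := Nat.pow_le_pow_right two_pos (by omega)
    omega
end

section
/- For every even positive integer k ≥ 2, there exists a graph G on exactly 2^{k-1} + k - 2 vertices admitting a redundant locating-dominating set of size k. Concretely, the graph consisting of a clique on k vertices together with, for each even 2 ≤ 2i ≤ k-2 and each 2i-element subset A of the clique, one additional vertex adjacent exactly to A, has this property with the clique as the RED:LD set. -/
/-!
On the clique every extra vertex `A` has trace `A`, so the clique is locating-dominating.
After deleting a clique vertex `j`, the traces are `A \ {j}` and, for `j` itself, the rest of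
the clique. Two even sets agreeing off `j` are equal by parity, and `A \ {j}` never covers
the rest of the clique because `|A| ≤ k - 2`. For the count, exactly half of the `2^k`
subsets of the clique have even size, and of these only `∅` and the clique itself (`k` is
even) are excluded.
-/

open scoped symmDiff

/-- Vertex type: a clique on `Fin k` plus one extra vertex for each even-sized
subset `A` of the clique with `2 ≤ |A| ≤ k - 2`. -/
def V6 (k : ℕ) : Type :=
  Fin k ⊕ {A : Finset (Fin k) // Even A.card ∧ 2 ≤ A.card ∧ A.card ≤ k - 2}

instance (k : ℕ) : Fintype (V6 k) := by unfold V6; infer_instance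

/-- The clique vertices are pairwise adjacent, and each extra vertex is adjacent
exactly to the members of its subset. -/
def G6 (k : ℕ) : SimpleGraph (V6 k) where
  Adj a b := a ≠ b ∧
    ((∃ i j : Fin k, a = Sum.inl i ∧ b = Sum.inl j) ∨
     (∃ i A, a = Sum.inl i ∧ b = Sum.inr A ∧ i ∈ A.val) ∨
     (∃ i A, a = Sum.inr A ∧ b = Sum.inl i ∧ i ∈ A.val))
  symm := by
    constructor
    rintro a b ⟨hne, h⟩
    refine ⟨hne.symm, ?_⟩
    rcases h with ⟨i, j, ha, hb⟩ | ⟨i, A, ha, hb, hm⟩ | ⟨i, A, ha, hb, hm⟩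
    · exact Or.inl ⟨j, i, hb, ha⟩
    · exact Or.inr (Or.inr ⟨i, A, hb, ha, hm⟩)
    · exact Or.inr (Or.inl ⟨i, A, hb, ha, hm⟩)
  loopless := by constructor; rintro a ⟨hne, _⟩; exact hne rfl

open scoped Finset

namespace Finset

theorem card_filter_even_card_powerset {α : Type*} {s : Finset α} (hs : s.Nonempty) :
    #{t ∈ s.powerset | Even #t} = 2 ^ (#s - 1) := by
  have hsigned := sum_powerset_neg_one_pow_card_of_nonempty hs
  rw [← sum_filter_add_sum_filter_not _ (fun t => Even #t),
    sum_congr rfl fun t ht => (mem_filter.1 ht).2.neg_one_pow,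
    sum_congr rfl fun t ht => (Nat.not_even_iff_odd.1 (mem_filter.1 ht).2).neg_one_pow] at hsigned
  simp only [sum_const, nsmul_eq_mul, mul_one, mul_neg_one] at hsigned
  have htotal := card_filter_add_card_filter_not (s := s.powerset) (fun t => Even #t)
  rw [card_powerset] at htotal
  have hpow : 2 ^ #s = 2 * 2 ^ (#s - 1) := by
    rw [← pow_succ', Nat.sub_add_cancel hs.card_pos]
  omega

theorem eq_of_erase_eq_of_even_card_iff {α : Type*} [DecidableEq α] {s t : Finset α}
    {a : α} (h : s.erase a = t.erase a) (hst : Even #s ↔ Even #t) : s = t := by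
  have hmem : a ∈ s ↔ a ∈ t := by
    by_contra hne
    wlog has : a ∈ s generalizing s t
    · exact this h.symm hst.symm (by tauto) (by tauto)
    have hat : a ∉ t := by tauto
    have hcard : #t + 1 = #s := by
      rw [← erase_eq_of_notMem hat, ← h, card_erase_add_one has]
    rw [← hcard, Nat.even_add_one] at hst
    tauto
  ext x
  by_cases hx : x = a
  · rw [hx, hmem]
  · simpa [hx] using congrArg (x ∈ ·) h

end Finset

namespace G6

variable {k : ℕ}

-- `Sum.inl` typed as `V6 k`, so that set lemmas rewrite without unfolding `V6`.
def cliqueVertex (i : Fin k) : V6 k := Sum.inl i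

def cliqueNeighbors : V6 k → Set (Fin k) :=
  Sum.elim (fun i => {i}ᶜ) (fun A => A.val)

theorem adj_cliqueVertex_iff {v : V6 k} {i : Fin k} :
    (G6 k).Adj v (cliqueVertex i) ↔ i ∈ cliqueNeighbors v := by
  rcases v with j | A
  · constructor
    · rintro ⟨hne, -⟩ rfl
      exact hne rfl
    · intro hij
      exact ⟨fun h => hij (Sum.inl_injective h).symm, Or.inl ⟨j, i, rfl, rfl⟩⟩
  · constructor
    · rintro ⟨-, ⟨_, _, h, -⟩ | ⟨_, _, h, -⟩ | ⟨_, _, hA, hi, hm⟩⟩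
      · cases h
      · cases h
      · cases hA; cases hi; exact hm
    · intro hi
      exact ⟨Sum.inr_ne_inl, Or.inr (Or.inr ⟨i, A, rfl, rfl, hi⟩)⟩

theorem cliqueVertex_injective : Function.Injective (cliqueVertex : Fin k → V6 k) :=
  Sum.inl_injective

theorem neighborSet_inter_image_cliqueVertex (v : V6 k) (T : Set (Fin k)) :
    (G6 k).neighborSet v ∩ cliqueVertex '' T = cliqueVertex '' (cliqueNeighbors v ∩ T) := by
  ext w
  constructor
  · rintro ⟨hadj, i, hi, rfl⟩
    exact ⟨i, ⟨adj_cliqueVertex_iff.1 hadj, hi⟩, rfl⟩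
  · rintro ⟨i, ⟨hv, hi⟩, rfl⟩
    exact ⟨adj_cliqueVertex_iff.2 hv, i, hi, rfl⟩

theorem isLDSet_image_cliqueVertex_iff (T : Set (Fin k)) :
    IsLDSet (G6 k) (cliqueVertex '' T) ↔
      (∀ v ∉ cliqueVertex '' T, (cliqueNeighbors v ∩ T).Nonempty) ∧
        ∀ u ∉ cliqueVertex '' T, ∀ v ∉ cliqueVertex '' T, u ≠ v →
          cliqueNeighbors u ∩ T ≠ cliqueNeighbors v ∩ T := by
  simp only [IsLDSet, neighborSet_inter_image_cliqueVertex]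
  exact and_congr (forall₂_congr fun _ _ => Set.image_nonempty)
    (forall₂_congr fun _ _ => forall₂_congr fun _ _ => imp_congr_right fun _ =>
      (Set.image_injective.2 cliqueVertex_injective).ne_iff)

theorem isLDSet_image_univ : IsLDSet (G6 k) (cliqueVertex '' Set.univ) := by
  rw [isLDSet_image_cliqueVertex_iff]
  refine ⟨?_, ?_⟩
  · rintro (i | A) hv
    · exact absurd ⟨i, trivial, rfl⟩ hv
    · rw [Set.inter_univ]
      exact Finset.coe_nonempty.2 (Finset.card_pos.1 (by omega : 0 < #A.val))
  · rintro (i | A) hu (j | B) hv hne hAB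
    · exact hu ⟨i, trivial, rfl⟩
    · exact hu ⟨i, trivial, rfl⟩
    · exact hv ⟨j, trivial, rfl⟩
    · simp only [Set.inter_univ] at hAB
      exact hne (congrArg Sum.inr (Subtype.ext (Finset.coe_inj.1 hAB)))

theorem isLDSet_image_compl_singleton (hk : 2 ≤ k) (j : Fin k) :
    IsLDSet (G6 k) (cliqueVertex '' {j}ᶜ) := by
  have : Nontrivial (Fin k) := Fin.nontrivial_iff_two_le.2 hk
  have trace_inr (A) : cliqueNeighbors (Sum.inr A : V6 k) ∩ {j}ᶜ = ↑(A.val.erase j) := by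
    rw [Finset.coe_erase, Set.sdiff_eq]
    rfl
  have trace_inr_ne (A) : cliqueNeighbors (Sum.inr A : V6 k) ∩ {j}ᶜ ≠ {j}ᶜ := by
    obtain ⟨i, hi, hij⟩ := Finset.exists_mem_ne (s := Finset.univ \ A.val)
      (by rw [Finset.card_univ_sdiff, Fintype.card_fin]; have := A.2.2.2; omega) j
    intro h
    have hi' : i ∈ cliqueNeighbors (Sum.inr A : V6 k) ∩ {j}ᶜ := by rw [h]; exact hij
    exact (Finset.mem_sdiff.1 hi).2 hi'.1
  have eq_of_notMem (i : Fin k) (hi : cliqueVertex i ∉ cliqueVertex '' {j}ᶜ) : i = j :=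
    not_not.1 fun hij => hi ⟨i, hij, rfl⟩
  rw [isLDSet_image_cliqueVertex_iff]
  refine ⟨?_, ?_⟩
  · rintro (i | A) hv
    · obtain rfl := eq_of_notMem i hv
      obtain ⟨i', hi'⟩ := exists_ne i
      exact ⟨i', hi', hi'⟩
    · rw [trace_inr]
      obtain ⟨i, hiA, hij⟩ := Finset.exists_mem_ne (by omega : 1 < #A.val) j
      exact ⟨i, Finset.mem_erase.2 ⟨hij, hiA⟩⟩
  · rintro (i | A) hu (i' | B) hv hne hAB
    · exact hne (by rw [eq_of_notMem i hu, eq_of_notMem i' hv])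
    · obtain rfl := eq_of_notMem i hu
      exact trace_inr_ne B (hAB.symm.trans (Set.inter_self _))
    · obtain rfl := eq_of_notMem i' hv
      exact trace_inr_ne A (hAB.trans (Set.inter_self _))
    · rw [trace_inr, trace_inr, Finset.coe_inj] at hAB
      exact hne (congrArg Sum.inr (Subtype.ext
        (Finset.eq_of_erase_eq_of_even_card_iff hAB (iff_of_true A.2.1 B.2.1))))

theorem card_middle_even_subsets (hk : 2 ≤ k) (hke : Even k) :
    #{A : Finset (Fin k) | Even #A ∧ 2 ≤ #A ∧ #A ≤ k - 2} = 2 ^ (k - 1) - 2 := by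
  have hne : (Finset.univ : Finset (Fin k)).Nonempty :=
    Finset.univ_nonempty_iff.2 ⟨⟨0, by omega⟩⟩
  have hmiddle : ({A | Even #A ∧ 2 ≤ #A ∧ #A ≤ k - 2} : Finset (Finset (Fin k))) =
      (({A | Even #A} : Finset (Finset (Fin k))).erase Finset.univ).erase ∅ := by
    ext A
    simp only [Finset.mem_filter, Finset.mem_erase, Finset.mem_univ, true_and]
    have hle : #A ≤ k := by simpa using Finset.card_le_univ A
    rw [Ne, ← Finset.card_eq_zero, Ne, ← Finset.card_eq_iff_eq_univ, Fintype.card_fin]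
    obtain ⟨a, ha⟩ := hke
    constructor
    · rintro ⟨⟨b, hb⟩, h2, hk2⟩
      exact ⟨by omega, by omega, b, hb⟩
    · rintro ⟨h0, hk', b, hb⟩
      exact ⟨⟨b, hb⟩, by omega, by omega⟩
  have huniv : Finset.univ ∈ ({A | Even #A} : Finset (Finset (Fin k))) := by simpa using hke
  have hempty : ∅ ∈ ({A | Even #A} : Finset (Finset (Fin k))).erase Finset.univ :=
    Finset.mem_erase.2 ⟨(Finset.nonempty_iff_ne_empty.1 hne).symm, by simp⟩
  rw [hmiddle, Finset.card_erase_of_mem hempty, Finset.card_erase_of_mem huniv,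
    ← Finset.powerset_univ, Finset.card_filter_even_card_powerset hne, Finset.card_univ,
    Fintype.card_fin]
  omega

theorem card_V6 (hk : 2 ≤ k) (hke : Even k) : Fintype.card (V6 k) = 2 ^ (k - 1) + k - 2 := by
  have hpow : 2 ≤ 2 ^ (k - 1) := by
    simpa using Nat.pow_le_pow_right two_pos (by omega : 1 ≤ k - 1)
  have hsum : Fintype.card (V6 k) =
      Fintype.card (Fin k ⊕ {A : Finset (Fin k) // Even #A ∧ 2 ≤ #A ∧ #A ≤ k - 2}) :=
    Fintype.card_congr (Equiv.refl _)
  rw [hsum, Fintype.card_sum, Fintype.card_fin, Fintype.card_subtype,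
    card_middle_even_subsets hk hke]
  omega

end G6

theorem stmt6 (k : ℕ) (hk : 2 ≤ k) (hke : Even k) :
    Fintype.card (V6 k) = 2 ^ (k - 1) + k - 2 ∧
    IsRedLDSet (G6 k) {a : V6 k | ∃ i : Fin k, a = Sum.inl i} ∧
    ({a : V6 k | ∃ i : Fin k, a = Sum.inl i}).ncard = k := by
  have hclique : {a : V6 k | ∃ i : Fin k, a = Sum.inl i} = G6.cliqueVertex '' Set.univ := by
    rw [Set.image_univ]
    exact Set.ext fun _ => exists_congr fun _ => eq_comm
  refine ⟨G6.card_V6 hk hke, ⟨?_, ?_⟩, ?_⟩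
  · rw [hclique]
    exact G6.isLDSet_image_univ
  · rintro _ ⟨j, rfl⟩
    change IsLDSet (G6 k) (_ \ {G6.cliqueVertex j})
    rw [hclique, ← Set.image_singleton, ← Set.image_sdiff G6.cliqueVertex_injective,
      ← Set.compl_eq_univ_sdiff]
    exact G6.isLDSet_image_compl_singleton hk j
  · rw [hclique, Set.ncard_image_of_injective _ G6.cliqueVertex_injective, Set.ncard_univ,
      Nat.card_fin]
end

section
/- Let G be a connected graph on n ≥ 3 vertices. Then every redundant locating-dominating set of G must equal V(G) (i.e., RED:LD(G) = n) if and only if every vertex of G is a leaf, a support vertex, or is a twin with some other vertex. -/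
open scoped symmDiff

/-- Distinct vertices are twins if they have equal open or equal closed neighborhoods. -/
def IsTwin {V : Type*} (G : SimpleGraph V) (v : V) : Prop :=
  ∃ u, u ≠ v ∧ (G.neighborSet u = G.neighborSet v ∨
    insert u (G.neighborSet u) = insert v (G.neighborSet v))

private lemma exists_neighbor' {V : Type*} [Fintype V] (G : SimpleGraph V)
    (hconn : G.Connected) (hn : 3 ≤ Fintype.card V) (v : V) :
    ∃ w, G.Adj v w := by
  have hnt : Nontrivial V := Fintype.one_lt_card_iff_nontrivial.mp (by omega)
  obtain ⟨w, hw⟩ := exists_ne v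
  obtain ⟨p⟩ := hconn.preconnected v w
  cases p with
  | nil => exact absurd rfl hw.symm
  | cons h q => exact ⟨_, h⟩

theorem stmt7 {V : Type*} [Fintype V] (G : SimpleGraph V)
    (hconn : G.Connected) (hn : 3 ≤ Fintype.card V) :
    (∀ S : Set V, IsRedLDSet G S → S = Set.univ) ↔
      (∀ v : V, IsLeaf G v ∨ IsSupport G v ∨ IsTwin G v) := by
  have hdeg : ∀ x : V, ∃ w, G.Adj x w := exists_neighbor' G hconn hn
  constructor
  · -- forward direction, by contraposition
    intro hall
    by_contra hne
    push_neg at hne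
    obtain ⟨v, hleaf, hsupp, htwin⟩ := hne
    -- v has at least two distinct neighbors
    have hv2 : ∃ a b, G.Adj v a ∧ G.Adj v b ∧ a ≠ b := by
      have hfin : (G.neighborSet v).Finite := Set.toFinite _
      have hne : (G.neighborSet v).Nonempty := by
        obtain ⟨w, hw⟩ := hdeg v; exact ⟨w, hw⟩
      have h1 : 0 < (G.neighborSet v).ncard := (Set.ncard_pos hfin).mpr hne
      have h2 : 1 < (G.neighborSet v).ncard := by
        have h3 : (G.neighborSet v).ncard ≠ 1 := hleaf
        omega
      obtain ⟨a, b, ha, hb, hab⟩ := (Set.one_lt_ncard_iff hfin).mp h2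
      exact ⟨a, b, ha, hb, hab⟩
    have hred : IsRedLDSet G {v}ᶜ := by
      constructor
      · constructor
        · intro w hw
          simp only [Set.mem_compl_iff, Set.mem_singleton_iff, not_not] at hw
          subst hw
          obtain ⟨a, ha⟩ := hdeg w
          exact ⟨a, ha, by simp [ha.ne']⟩
        · intro u hu w hw huw
          simp only [Set.mem_compl_iff, Set.mem_singleton_iff, not_not] at hu hw
          exact absurd (hu.trans hw.symm) huw
      · intro u hu
        simp only [Set.mem_compl_iff, Set.mem_singleton_iff] at hu
        have hTmem : ∀ x : V, x ∉ ({v}ᶜ \ {u} : Set V) ↔ (x = v ∨ x = u) := by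
          intro x
          simp only [Set.mem_diff, Set.mem_compl_iff, Set.mem_singleton_iff]
          tauto
        have hTmem' : ∀ x : V, x ∈ ({v}ᶜ \ {u} : Set V) ↔ (x ≠ v ∧ x ≠ u) := by
          intro x
          simp only [Set.mem_diff, Set.mem_compl_iff, Set.mem_singleton_iff]
        -- u has a neighbor other than v
        have huN : ∃ w, G.Adj u w ∧ w ≠ v := by
          by_contra hcon
          push_neg at hcon
          obtain ⟨w, hw⟩ := hdeg u
          have hwv : w = v := hcon w hw
          subst hwv
          have : G.neighborSet u = {w} := by
            ext x
            simp only [SimpleGraph.mem_neighborSet, Set.mem_singleton_iff]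
            exact ⟨fun h => hcon x h, fun h => h ▸ hw⟩
          exact hsupp ⟨u, hw.symm, by rw [IsLeaf, this]; simp⟩
        -- key: traces of u and v on {v}ᶜ \ {u} must differ, else twins
        have hdist : G.neighborSet v ∩ ({v}ᶜ \ {u}) ≠ G.neighborSet u ∩ ({v}ᶜ \ {u}) := by
          intro heq
          apply htwin
          refine ⟨u, hu, ?_⟩
          have hpt : ∀ x, (G.Adj v x ∧ x ≠ u) ↔ (G.Adj u x ∧ x ≠ v) := by
            intro x
            have h1 := Set.ext_iff.mp heq x
            simp only [Set.mem_inter_iff, SimpleGraph.mem_neighborSet, Set.mem_diff,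
              Set.mem_compl_iff, Set.mem_singleton_iff] at h1
            constructor
            · intro ⟨h, hx⟩
              have := h1.mp ⟨h, h.ne', hx⟩
              exact ⟨this.1, this.2.1⟩
            · intro ⟨h, hx⟩
              have := h1.mpr ⟨h, hx, h.ne'⟩
              exact ⟨this.1, this.2.2⟩
          by_cases hadj : G.Adj u v
          · right
            ext x
            simp only [Set.mem_insert_iff, SimpleGraph.mem_neighborSet]
            constructor
            · rintro (rfl | h)
              · exact Or.inr hadj.symm
              · by_cases hxv : x = v
                · exact Or.inl hxv
                · exact Or.inr ((hpt x).mpr ⟨h, hxv⟩).1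
            · rintro (rfl | h)
              · exact Or.inr hadj
              · by_cases hxu : x = u
                · exact Or.inl hxu
                · exact Or.inr ((hpt x).mp ⟨h, hxu⟩).1
          · left
            ext x
            simp only [SimpleGraph.mem_neighborSet]
            constructor
            · intro h
              have hxv : x ≠ v := fun hx => hadj (hx ▸ h)
              exact ((hpt x).mpr ⟨h, hxv⟩).1
            · intro h
              have hxu : x ≠ u := fun hx => hadj (hx ▸ h).symm
              exact ((hpt x).mp ⟨h, hxu⟩).1
        constructor
        · intro x hx
          rw [hTmem x] at hx
          rcases hx with rfl | rfl
          · obtain ⟨a, b, ha, hb, hab⟩ := hv2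
            by_cases hau : a = u
            · exact ⟨b, hb, (hTmem' b).mpr ⟨hb.ne', by rw [← hau]; exact fun h => hab h.symm⟩⟩
            · exact ⟨a, ha, (hTmem' a).mpr ⟨ha.ne', hau⟩⟩
          · obtain ⟨w, hw, hwv⟩ := huN
            exact ⟨w, hw, (hTmem' w).mpr ⟨hwv, hw.ne'⟩⟩
        · intro x hx y hy hxy
          rw [hTmem x] at hx
          rw [hTmem y] at hy
          rcases hx with rfl | rfl <;> rcases hy with rfl | rfl
          · exact absurd rfl hxy
          · exact hdist
          · exact hdist.symm
          · exact absurd rfl hxy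
    have := hall _ hred
    have : v ∈ ({v}ᶜ : Set V) := this ▸ Set.mem_univ v
    simp at this
  · -- reverse direction
    intro hall S hS
    obtain ⟨hLD, hR⟩ := hS
    by_contra hne
    have : ∃ v, v ∉ S := by
      by_contra h
      push_neg at h
      exact hne (Set.eq_univ_of_forall h)
    obtain ⟨v, hv⟩ := this
    -- Lemma A: every non-detector has two neighbors in S
    have hA : ∀ x ∉ S, ∃ a b, a ∈ G.neighborSet x ∩ S ∧ b ∈ G.neighborSet x ∩ S ∧ a ≠ b := by
      intro x hx
      obtain ⟨s, hs⟩ := hLD.1 x hx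
      have hx' : x ∉ S \ {s} := fun h => hx h.1
      obtain ⟨t, ht⟩ := (hR s hs.2).1 x hx'
      refine ⟨s, t, hs, ⟨ht.1, ht.2.1⟩, fun h => ht.2.2 (h ▸ rfl)⟩
    rcases hall v with hleaf | hsupp | htwin
    · -- leaf case
      obtain ⟨a, ha⟩ := Set.ncard_eq_one.mp hleaf
      obtain ⟨s, t, hs, ht, hst⟩ := hA v hv
      have hsa : s = a := by have := hs.1; rw [ha] at this; exact this
      have hta : t = a := by have := ht.1; rw [ha] at this; exact this
      exact hst (hsa.trans hta.symm)
    · -- support case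
      obtain ⟨u, hadj, hu⟩ := hsupp
      obtain ⟨a, ha⟩ := Set.ncard_eq_one.mp hu
      have hav : a = v := by
        have : v ∈ G.neighborSet u := hadj.symm
        rw [ha] at this; exact this.symm
      subst hav
      by_cases huS : u ∈ S
      · have hu' : u ∉ S \ {u} := by simp
        obtain ⟨t, ht⟩ := (hR u huS).1 u hu'
        have : t = a := by have := ht.1; rw [ha] at this; exact this
        exact hv (this ▸ ht.2.1)
      · obtain ⟨s, t, hs, ht, hst⟩ := hA u huS
        have hsa : s = a := by have := hs.1; rw [ha] at this; exact this
        have hta : t = a := by have := ht.1; rw [ha] at this; exact this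
        exact hst (hsa.trans hta.symm)
    · -- twin case
      obtain ⟨u, hune, hcase⟩ := htwin
      by_cases huS : u ∈ S
      · -- use redundancy at u
        have hv' : v ∉ S \ {u} := fun h => hv h.1
        have hu' : u ∉ S \ {u} := by simp
        apply (hR u huS).2 v hv' u hu' (Ne.symm hune)
        rcases hcase with heq | heq
        · rw [heq]
        · ext x
          simp only [Set.mem_inter_iff, SimpleGraph.mem_neighborSet, Set.mem_diff,
            Set.mem_singleton_iff]
          constructor
          · intro ⟨h, hxS, hxu⟩
            have : x ∈ insert u (G.neighborSet u) := by
              rw [heq]; exact Set.mem_insert_of_mem _ h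
            rcases this with h' | h'
            · exact absurd h' hxu
            · exact ⟨h', hxS, hxu⟩
          · intro ⟨h, hxS, hxu⟩
            have : x ∈ insert v (G.neighborSet v) := by
              rw [← heq]; exact Set.mem_insert_of_mem _ h
            rcases this with h' | h'
            · exact absurd (h' ▸ hxS) hv
            · exact ⟨h', hxS, hxu⟩
      · -- both outside S : violates LD
        apply hLD.2 v hv u huS (Ne.symm hune)
        rcases hcase with heq | heq
        · rw [heq]
        · ext x
          simp only [Set.mem_inter_iff, SimpleGraph.mem_neighborSet]
          constructor
          · intro ⟨h, hxS⟩
            have : x ∈ insert u (G.neighborSet u) := by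
              rw [heq]; exact Set.mem_insert_of_mem _ h
            rcases this with h' | h'
            · exact absurd (h' ▸ hxS) huS
            · exact ⟨h', hxS⟩
          · intro ⟨h, hxS⟩
            have : x ∈ insert v (G.neighborSet v) := by
              rw [← heq]; exact Set.mem_insert_of_mem _ h
            rcases this with h' | h'
            · exact absurd (h' ▸ hxS) hv
            · exact ⟨h', hxS⟩
end

section
/- For the cycle C_n with n ≥ 5, the minimum cardinality of a redundant locating-dominating set is ⌈2n/3⌉; for 3 ≤ n ≤ 4, it is n. -/
open scoped symmDiff

/-!
In a RED:LD set `S` every vertex outside `S` has two neighbours in `S` (delete the first one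
from `S`), and every vertex of `S` has a neighbour in `S` (delete the vertex itself). On the cycle
this forces `u + 1, u + 2 ∈ S` whenever `u ∉ S`, so `Sᶜ`, `Sᶜ + 1` and `Sᶜ + 2` are disjoint and
`3 |Sᶜ| ≤ n`. Conversely, for `n ≥ 5` every set with this property is a RED:LD set, and the
complement of `{0, 3, …, 3 (⌊n/3⌋ - 1)}` has it. For `n = 3, 4` every vertex `u` has a twin
(`u + 1`, resp. `u + 2`), and a RED:LD set contains both vertices of a pair of twins.
-/

open SimpleGraph Set Fin.CommRing

section General

variable {V : Type*} {G : SimpleGraph V} {S : Set V} {u v : V}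

def AreTwins (G : SimpleGraph V) (u v : V) : Prop :=
  ∀ w, w ≠ u → w ≠ v → (G.Adj u w ↔ G.Adj v w)

theorem IsLDSet.mem_or_mem_of_areTwins (hS : IsLDSet G S) (huv : u ≠ v) (h : AreTwins G u v) :
    u ∈ S ∨ v ∈ S := by
  by_contra! ⟨hu, hv⟩
  refine hS.2 u hu v hv huv (Set.ext fun w => ?_)
  exact and_congr_left fun hwS => h w (ne_of_mem_of_not_mem hwS hu) (ne_of_mem_of_not_mem hwS hv)

theorem IsRedLDSet.mem_of_areTwins (hS : IsRedLDSet G S) (huv : u ≠ v) (h : AreTwins G u v) :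
    u ∈ S := by
  by_contra hu
  have hv : v ∈ S := (hS.1.mem_or_mem_of_areTwins huv h).resolve_left hu
  exact ((hS.2 v hv).mem_or_mem_of_areTwins huv h).elim (fun h' => hu h'.1) fun h' => h'.2 rfl

theorem IsRedLDSet.nontrivial_neighborSet_inter (hS : IsRedLDSet G S) (hu : u ∉ S) :
    (G.neighborSet u ∩ S).Nontrivial := by
  obtain ⟨w, hw, hwS⟩ := hS.1.1 u hu
  obtain ⟨w', hw', hw'S, hne⟩ := (hS.2 w hwS).1 u fun h => hu h.1
  exact ⟨w, ⟨hw, hwS⟩, w', ⟨hw', hw'S⟩, Ne.symm hne⟩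

theorem IsRedLDSet.neighborSet_inter_nonempty (hS : IsRedLDSet G S) (v : V) :
    (G.neighborSet v ∩ S).Nonempty := by
  by_cases hv : v ∈ S
  · obtain ⟨w, hw, hwS, -⟩ := (hS.2 v hv).1 v fun h => h.2 rfl
    exact ⟨w, hw, hwS⟩
  · exact hS.1.1 v hv

theorem nonempty_neighborSet_inter_diff_singleton
    (hout : ∀ u ∉ S, (G.neighborSet u ∩ S).Nontrivial)
    (hin : ∀ v ∈ S, (G.neighborSet v ∩ S).Nonempty) (x : V) :
    ∀ v ∉ S \ {x}, (G.neighborSet v ∩ (S \ {x})).Nonempty := by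
  intro v hv
  by_cases hvS : v ∈ S
  · obtain rfl : v = x := by by_contra h; exact hv ⟨hvS, h⟩
    obtain ⟨w, hw, hwS⟩ := hin v hvS
    exact ⟨w, hw, hwS, (G.ne_of_adj hw).symm⟩
  · obtain ⟨w, ⟨hw, hwS⟩, hwx⟩ := (hout v hvS).exists_ne x
    exact ⟨w, hw, hwS, hwx⟩

theorem isRedLDSet_univ (hadj : ∀ v, ∃ w, G.Adj v w) : IsRedLDSet G univ := by
  have hin : ∀ v ∈ univ, (G.neighborSet v ∩ univ).Nonempty := fun v _ =>
    let ⟨w, hw⟩ := hadj v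
    ⟨w, hw, mem_univ w⟩
  refine ⟨⟨fun v hv => absurd (mem_univ v) hv, fun u hu => absurd (mem_univ u) hu⟩,
    fun x _ => ⟨nonempty_neighborSet_inter_diff_singleton
      (fun u hu => absurd (mem_univ u) hu) hin x, fun u hu v hv huv => absurd ?_ huv⟩⟩
  rw [mem_sdiff_singleton, not_and_not_right] at hu hv
  exact (hu (mem_univ u)).trans (hv (mem_univ v)).symm

theorem isLeast_ncard_isRedLDSet_of_forall_exists_areTwins (hadj : ∀ v, ∃ w, G.Adj v w)
    (htwin : ∀ u, ∃ v ≠ u, AreTwins G u v) :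
    IsLeast {m | ∃ S : Set V, IsRedLDSet G S ∧ S.ncard = m} (Nat.card V) := by
  refine ⟨⟨univ, isRedLDSet_univ hadj, ncard_univ V⟩, ?_⟩
  rintro _ ⟨S, hS, rfl⟩
  obtain rfl : S = univ := eq_univ_of_forall fun u =>
    let ⟨v, hvu, huv⟩ := htwin u
    hS.mem_of_areTwins hvu.symm huv
  exact (ncard_univ V).ge

end General

theorem three_mul_ncard_le_card {α : Type*} [AddGroup α] [Finite α] {T : Set α} (a : α)
    (hT : ∀ t ∈ T, t + a ∉ T ∧ t + (a + a) ∉ T) : 3 * T.ncard ≤ Nat.card α := by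
  have h₁ : Disjoint T ((· + a) '' T) := by
    rw [Set.disjoint_left]
    rintro _ ht ⟨s, hs, rfl⟩
    exact (hT s hs).1 ht
  have h₂ : Disjoint (T ∪ (· + a) '' T) ((· + (a + a)) '' T) := by
    rw [disjoint_union_left, Set.disjoint_left, Set.disjoint_left]
    refine ⟨?_, ?_⟩
    · rintro _ ht ⟨s, hs, rfl⟩
      exact (hT s hs).2 ht
    · rintro _ ⟨s, hs, rfl⟩ ⟨t, ht, hts⟩
      have hst : t + a = s := add_right_cancel (by rw [add_assoc]; exact hts)
      exact (hT t ht).1 (hst ▸ hs)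
  calc 3 * T.ncard = (T ∪ (· + a) '' T ∪ (· + (a + a)) '' T).ncard := by
        rw [ncard_union_eq h₂, ncard_union_eq h₁, ncard_image_of_injective _ (add_left_injective a),
          ncard_image_of_injective _ (add_left_injective (a + a))]
        ring
    _ ≤ Nat.card α := ncard_le_card _

theorem Fin.natCast_ne_zero_of_lt {n k : ℕ} [NeZero n] (hk : 0 < k) (hkn : k < n) :
    (k : Fin n) ≠ 0 := by
  rw [Ne, Fin.natCast_eq_zero]
  exact fun hd => absurd (Nat.le_of_dvd hk hd) (by omega)

section Cycle

variable {n : ℕ}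

theorem mem_neighborSet_cycleGraph {v w : Fin (n + 2)} :
    w ∈ (cycleGraph (n + 2)).neighborSet v ↔ w = v - 1 ∨ w = v + 1 := by
  rw [cycleGraph_neighborSet]
  rfl

theorem IsRedLDSet.add_mem_of_notMem_cycleGraph {S : Set (Fin (n + 2))}
    (hS : IsRedLDSet (cycleGraph (n + 2)) S) {u : Fin (n + 2)} (hu : u ∉ S) :
    u + 1 ∈ S ∧ u + 2 ∈ S := by
  obtain ⟨w, ⟨hw, hwS⟩, hwu⟩ := (hS.nontrivial_neighborSet_inter hu).exists_ne (u - 1)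
  obtain rfl := (mem_neighborSet_cycleGraph.1 hw).resolve_left hwu
  refine ⟨hwS, ?_⟩
  obtain ⟨w, hw, hwS'⟩ := hS.neighborSet_inter_nonempty (u + 1)
  rcases mem_neighborSet_cycleGraph.1 hw with rfl | rfl
  · rw [add_sub_cancel_right] at hwS'
    exact absurd hwS' hu
  · rwa [add_assoc, one_add_one_eq_two] at hwS'

theorem IsRedLDSet.two_mul_le_three_mul_ncard_cycleGraph {S : Set (Fin (n + 2))}
    (hS : IsRedLDSet (cycleGraph (n + 2)) S) : 2 * (n + 2) ≤ 3 * S.ncard := by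
  have hcompl : 3 * Sᶜ.ncard ≤ n + 2 := by
    simpa using three_mul_ncard_le_card (T := Sᶜ) 1 fun t ht => by
      simpa [one_add_one_eq_two] using hS.add_mem_of_notMem_cycleGraph ht
  have hsum := ncard_add_ncard_compl S
  rw [Nat.card_fin] at hsum
  omega

theorem isLDSet_cycleGraph_of {S : Set (Fin (n + 5))}
    (hdom : ∀ v ∉ S, ((cycleGraph (n + 5)).neighborSet v ∩ S).Nonempty)
    (hsep : ∀ u, u ∉ S → u + 2 ∉ S → u - 1 ∈ S ∨ u + 3 ∈ S) :
    IsLDSet (cycleGraph (n + 5)) S := by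
  have h₂ : ((2 : ℕ) : Fin (n + 5)) ≠ 0 := Fin.natCast_ne_zero_of_lt (by norm_num) (by omega)
  have h₄ : ((4 : ℕ) : Fin (n + 5)) ≠ 0 := Fin.natCast_ne_zero_of_lt (by norm_num) (by omega)
  have distinct_of_add_two : ∀ u, u ∉ S → u + 2 ∉ S →
      (cycleGraph (n + 5)).neighborSet u ∩ S ≠ (cycleGraph (n + 5)).neighborSet (u + 2) ∩ S := by
    intro u hu hu₂ heq
    rcases hsep u hu hu₂ with h | h
    · have hmem : u - 1 ∈ (cycleGraph (n + 5)).neighborSet (u + 2) ∩ S :=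
        heq ▸ ⟨mem_neighborSet_cycleGraph.2 (Or.inl rfl), h⟩
      rcases mem_neighborSet_cycleGraph.1 hmem.1 with h' | h'
      · exact h₂ (by linear_combination -h')
      · exact h₄ (by linear_combination -h')
    · have hmem : u + 3 ∈ (cycleGraph (n + 5)).neighborSet u ∩ S :=
        heq ▸ ⟨mem_neighborSet_cycleGraph.2 (Or.inr (by ring)), h⟩
      rcases mem_neighborSet_cycleGraph.1 hmem.1 with h' | h'
      · exact h₄ (by linear_combination h')
      · exact h₂ (by linear_combination h')
  refine ⟨hdom, fun u hu v hv huv heq => ?_⟩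
  obtain ⟨w, hwu, hwS⟩ := hdom u hu
  have hwv : w ∈ (cycleGraph (n + 5)).neighborSet v := (heq ▸ ⟨hwu, hwS⟩ : w ∈ _ ∩ S).1
  rcases mem_neighborSet_cycleGraph.1 hwu with rfl | rfl <;>
    rcases mem_neighborSet_cycleGraph.1 hwv with h | h
  · exact huv (by linear_combination h)
  · obtain rfl : u = v + 2 := by linear_combination h
    exact distinct_of_add_two v hv hu heq.symm
  · obtain rfl : v = u + 2 := by linear_combination -h
    exact distinct_of_add_two u hu hv heq
  · exact huv (by linear_combination h)

theorem isRedLDSet_cycleGraph_of {S : Set (Fin (n + 5))}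
    (hS : ∀ u ∉ S, u + 1 ∈ S ∧ u + 2 ∈ S) : IsRedLDSet (cycleGraph (n + 5)) S := by
  have h₂ : ((2 : ℕ) : Fin (n + 5)) ≠ 0 := Fin.natCast_ne_zero_of_lt (by norm_num) (by omega)
  have h₃ : ((3 : ℕ) : Fin (n + 5)) ≠ 0 := Fin.natCast_ne_zero_of_lt (by norm_num) (by omega)
  have sub_one_mem : ∀ u ∉ S, u - 1 ∈ S := fun u hu =>
    by_contra fun h => hu (by simpa using (hS _ h).1)
  have hout : ∀ u ∉ S, ((cycleGraph (n + 5)).neighborSet u ∩ S).Nontrivial := fun u hu =>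
    ⟨u - 1, ⟨mem_neighborSet_cycleGraph.2 (Or.inl rfl), sub_one_mem u hu⟩,
      u + 1, ⟨mem_neighborSet_cycleGraph.2 (Or.inr rfl), (hS u hu).1⟩,
      fun h => h₂ (by linear_combination -h)⟩
  have hin : ∀ v ∈ S, ((cycleGraph (n + 5)).neighborSet v ∩ S).Nonempty := by
    intro v _
    by_cases h : v - 1 ∈ S
    · exact ⟨v - 1, mem_neighborSet_cycleGraph.2 (Or.inl rfl), h⟩
    · refine ⟨v + 1, mem_neighborSet_cycleGraph.2 (Or.inr rfl), ?_⟩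
      have h' := (hS _ h).2
      rwa [show v - 1 + 2 = v + 1 by ring] at h'
  refine ⟨isLDSet_cycleGraph_of (fun v hv => (hout v hv).nonempty)
    (fun u hu hu₂ => absurd (hS u hu).2 hu₂), fun x hx => ?_⟩
  refine isLDSet_cycleGraph_of (nonempty_neighborSet_inter_diff_singleton hout hin x)
    fun u hu hu₂ => ?_
  by_cases huS : u ∈ S
  · obtain rfl : u = x := by by_contra h; exact hu ⟨huS, h⟩
    have hu₂S : u + 2 ∉ S := fun h =>
      hu₂ ⟨h, fun h' => h₂ (by linear_combination mem_singleton_iff.1 h')⟩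
    have hu₃S := (hS _ hu₂S).1
    rw [show u + 2 + 1 = u + 3 by ring] at hu₃S
    exact Or.inr ⟨hu₃S, fun h => h₃ (by linear_combination mem_singleton_iff.1 h)⟩
  · obtain rfl : u + 2 = x := by by_contra h; exact hu₂ ⟨(hS u huS).2, h⟩
    exact Or.inl ⟨sub_one_mem u huS, fun h => h₃ (by linear_combination -mem_singleton_iff.1 h)⟩

end Cycle

def everyThird (n : ℕ) : Set (Fin n) := {v | 3 ∣ v.val ∧ v.val + 3 ≤ n}

theorem ncard_everyThird (n : ℕ) : (everyThird n).ncard = n / 3 := by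
  refine ncard_eq_of_bijective (fun j hj => ⟨3 * j, by omega⟩) ?_ ?_ ?_
  · rintro v ⟨⟨j, hj⟩, hv⟩
    exact ⟨j, by omega, Fin.ext hj.symm⟩
  · intro j hj
    exact ⟨dvd_mul_right 3 j, by simp only; omega⟩
  · intro i j _ _ h
    simpa using congrArg Fin.val h

theorem add_notMem_everyThird {n : ℕ} [NeZero n] {u : Fin n} (hu : u ∈ everyThird n) :
    u + 1 ∉ everyThird n ∧ u + 2 ∉ everyThird n := by
  obtain ⟨hdvd, hlt⟩ := hu
  have val_add {k : ℕ} (hk : k < 3) : (u + k).val = u.val + k := by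
    rw [Fin.val_add, Fin.val_natCast, Nat.add_mod_mod, Nat.mod_eq_of_lt (by omega)]
  have h₁ := val_add (k := 1) (by norm_num)
  have h₂ := val_add (k := 2) (by norm_num)
  push_cast at h₁ h₂
  simp only [everyThird, mem_ofPred_eq, h₁, h₂]
  omega

theorem stmt8 (n : ℕ) :
    (5 ≤ n → IsLeast {m : ℕ | ∃ S : Set (Fin n),
        IsRedLDSet (SimpleGraph.cycleGraph n) S ∧ S.ncard = m} ((2 * n + 2) / 3)) ∧
    (3 ≤ n → n ≤ 4 → IsLeast {m : ℕ | ∃ S : Set (Fin n),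
        IsRedLDSet (SimpleGraph.cycleGraph n) S ∧ S.ncard = m} n) := by
  refine ⟨fun hn => ?_, fun hn₃ hn₄ => ?_⟩
  · obtain ⟨n, rfl⟩ : ∃ m, n = m + 5 := ⟨n - 5, by omega⟩
    refine ⟨⟨(everyThird (n + 5))ᶜ,
      isRedLDSet_cycleGraph_of fun u hu => add_notMem_everyThird (notMem_compl_iff.1 hu), ?_⟩, ?_⟩
    · have hsum := ncard_add_ncard_compl (everyThird (n + 5))
      rw [ncard_everyThird, Nat.card_fin] at hsum
      omega
    · rintro _ ⟨S, hS, rfl⟩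
      have := hS.two_mul_le_three_mul_ncard_cycleGraph
      omega
  · interval_cases n
    · simpa using isLeast_ncard_isRedLDSet_of_forall_exists_areTwins (G := cycleGraph 3)
        (by decide) (by unfold AreTwins; decide)
    · simpa using isLeast_ncard_isRedLDSet_of_forall_exists_areTwins (G := cycleGraph 4)
        (by decide) (by unfold AreTwins; decide)
end

section
/- For the path P_n on n ≥ 2 vertices, the minimum cardinality of a redundant locating-dominating set is ⌈(2n+2)/3⌉. -/
open scoped symmDiff

/-- LD is upward closed. -/
lemma ld_mono {V : Type*} (G : SimpleGraph V) {S S' : Set V} (h : IsLDSet G S)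
    (hss : S ⊆ S') : IsLDSet G S' := by
  constructor
  · intro v hv
    obtain ⟨x, hx1, hx2⟩ := h.1 v (fun hc => hv (hss hc))
    exact ⟨x, hx1, hss hx2⟩
  · intro u hu v hv huv heq
    apply h.2 u (fun hc => hu (hss hc)) v (fun hc => hv (hss hc)) huv
    calc G.neighborSet u ∩ S = (G.neighborSet u ∩ S') ∩ S := by
          rw [Set.inter_assoc, Set.inter_eq_right.mpr hss]
      _ = (G.neighborSet v ∩ S') ∩ S := by rw [heq]
      _ = G.neighborSet v ∩ S := by rw [Set.inter_assoc, Set.inter_eq_right.mpr hss]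

/-- The optimal RED:LD set in the path `P_n`. -/
def Scon (n : ℕ) : Set (Fin n) := {i | i.val % 3 ≠ 2 ∨ n < i.val + 3}

lemma mem_Scon_diff {n : ℕ} {w v : Fin n} :
    v ∈ Scon n \ {w} ↔ ((v.val % 3 ≠ 2 ∨ n < v.val + 3) ∧ v.val ≠ w.val) := by
  simp [Scon, Set.mem_diff, Fin.ext_iff]

lemma dist_helper (n a b c0 : ℕ) (hn : 2 ≤ n) (ha : a < n) (hb : b < n) (hab : a < b)
    (hnda : (a % 3 = 2 ∧ a + 3 ≤ n) ∨ a = c0)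
    (hndb : (b % 3 = 2 ∧ b + 3 ≤ n) ∨ b = c0) :
    ∃ c < n, ((a + 1 = c ∨ c + 1 = a) ∧ ¬(b + 1 = c ∨ c + 1 = b) ∧
        (c % 3 ≠ 2 ∨ n < c + 3) ∧ c ≠ c0) ∨
      ((b + 1 = c ∨ c + 1 = b) ∧ ¬(a + 1 = c ∨ c + 1 = a) ∧
        (c % 3 ≠ 2 ∨ n < c + 3) ∧ c ≠ c0) := by
  by_cases h1 : a + 1 < n ∧ ¬(b + 1 = a + 1 ∨ a + 2 = b) ∧ ((a+1) % 3 ≠ 2 ∨ n < a + 4) ∧ a + 1 ≠ c0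
  · exact ⟨a + 1, by omega⟩
  by_cases h2 : 1 ≤ a ∧ ¬(b + 2 = a ∨ a = b) ∧ ((a-1) % 3 ≠ 2 ∨ n < a + 2) ∧ a - 1 ≠ c0
  · exact ⟨a - 1, by omega⟩
  by_cases h3 : b + 1 < n ∧ ¬(a = b ∨ b + 2 = a) ∧ ((b+1) % 3 ≠ 2 ∨ n < b + 4) ∧ b + 1 ≠ c0
  · exact ⟨b + 1, by omega⟩
  exact ⟨b - 1, by omega⟩

lemma trace_ne {n : ℕ} (hn : 2 ≤ n) (w : Fin n) {u v : Fin n}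
    (hu : u ∉ Scon n \ {w}) (hv : v ∉ Scon n \ {w}) (hlt : u.val < v.val) :
    (SimpleGraph.pathGraph n).neighborSet u ∩ (Scon n \ {w}) ≠
      (SimpleGraph.pathGraph n).neighborSet v ∩ (Scon n \ {w}) := by
  rw [mem_Scon_diff] at hu hv
  have hu' : (u.val % 3 = 2 ∧ u.val + 3 ≤ n) ∨ u.val = w.val := by omega
  have hv' : (v.val % 3 = 2 ∧ v.val + 3 ≤ n) ∨ v.val = w.val := by omega
  obtain ⟨c, hcn, H⟩ := dist_helper n u.val v.val w.val hn u.isLt v.isLt hlt hu' hv'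
  intro heq
  rcases H with ⟨h1, h2, h3, h4⟩ | ⟨h1, h2, h3, h4⟩
  · have hx : (⟨c, hcn⟩ : Fin n) ∈ (SimpleGraph.pathGraph n).neighborSet u ∩ (Scon n \ {w}) :=
      ⟨SimpleGraph.pathGraph_adj.mpr h1, mem_Scon_diff.mpr ⟨h3, h4⟩⟩
    rw [heq] at hx
    exact h2 (SimpleGraph.pathGraph_adj.mp hx.1)
  · have hx : (⟨c, hcn⟩ : Fin n) ∈ (SimpleGraph.pathGraph n).neighborSet v ∩ (Scon n \ {w}) :=
      ⟨SimpleGraph.pathGraph_adj.mpr h1, mem_Scon_diff.mpr ⟨h3, h4⟩⟩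
    rw [← heq] at hx
    exact h2 (SimpleGraph.pathGraph_adj.mp hx.1)

lemma ld_del {n : ℕ} (hn : 2 ≤ n) (w : Fin n) :
    IsLDSet (SimpleGraph.pathGraph n) (Scon n \ {w}) := by
  constructor
  · intro v hv
    rw [mem_Scon_diff] at hv
    have hvn := v.isLt
    have hwn := w.isLt
    by_cases h1 : v.val + 1 < n ∧ ((v.val+1) % 3 ≠ 2 ∨ n < v.val + 4) ∧ v.val + 1 ≠ w.val
    · exact ⟨⟨v.val + 1, h1.1⟩, SimpleGraph.pathGraph_adj.mpr (Or.inl rfl),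
        mem_Scon_diff.mpr ⟨h1.2.1, h1.2.2⟩⟩
    · refine ⟨⟨v.val - 1, by omega⟩, SimpleGraph.pathGraph_adj.mpr (Or.inr (by simp; omega)),
        mem_Scon_diff.mpr ⟨by simp; omega, by simp; omega⟩⟩
  · intro x hx y hy hxy
    rcases lt_trichotomy x.val y.val with h | h | h
    · exact trace_ne hn w hx hy h
    · exact absurd (Fin.val_injective h) hxy
    · exact (trace_ne hn w hy hx h).symm

lemma Scon_redld {n : ℕ} (hn : 2 ≤ n) : IsRedLDSet (SimpleGraph.pathGraph n) (Scon n) := by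
  constructor
  · exact ld_mono _ (ld_del hn ⟨0, by omega⟩) Set.diff_subset
  · exact fun w _ => ld_del hn w

lemma Scon_ncard {n : ℕ} (hn : 2 ≤ n) : (Scon n).ncard = (2 * n + 4) / 3 := by
  have himg : Fin.val '' (Scon n)ᶜ = (fun j => 3 * j + 2) '' ↑(Finset.range ((n - 2) / 3)) := by
    ext a
    simp only [Set.mem_image, Set.mem_compl_iff, Scon, Set.mem_setOf_eq, Finset.coe_range,
      Set.mem_Iio]
    constructor
    · rintro ⟨i, hi, rfl⟩
      have := i.isLt
      exact ⟨(i.val - 2) / 3, by omega, by omega⟩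
    · rintro ⟨j, hj, rfl⟩
      exact ⟨⟨3 * j + 2, by omega⟩, by simp; omega, rfl⟩
  have h1 : ((Scon n)ᶜ).ncard = (n - 2) / 3 := by
    rw [← Set.ncard_image_of_injective _ Fin.val_injective, himg,
      Set.ncard_image_of_injOn (by intro x _ y _ h; simp only [] at h; omega),
      Set.ncard_coe_finset, Finset.card_range]
  have h2 := Set.ncard_add_ncard_compl (Scon n)
  rw [Nat.card_eq_fintype_card, Fintype.card_fin] at h2
  omega

section lower
variable {n : ℕ} {S : Set (Fin n)}

lemma dom_of_ld {S'' : Set (Fin n)} (h : IsLDSet (SimpleGraph.pathGraph n) S'')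
    {v : Fin n} (hv : v ∉ S'') :
    ∃ x : Fin n, (v.val + 1 = x.val ∨ x.val + 1 = v.val) ∧ x ∈ S'' := by
  obtain ⟨x, hx1, hx2⟩ := h.1 v hv
  exact ⟨x, SimpleGraph.pathGraph_adj.mp hx1, hx2⟩

lemma no_adjacent (hS : IsRedLDSet (SimpleGraph.pathGraph n) S) {t u : Fin n}
    (ht : t ∉ S) (hu : u ∉ S) (htu : u.val = t.val + 1) : False := by
  obtain ⟨x, hadj, hxS⟩ := dom_of_ld hS.1 ht
  have hx : x.val + 1 = t.val := by
    rcases hadj with h | h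
    · exact absurd hxS (by rw [Fin.val_injective (show x.val = u.val by omega)]; exact hu)
    · exact h
  obtain ⟨y, hyadj, hyS⟩ := dom_of_ld (hS.2 x hxS) (fun hc : t ∈ S \ {x} => ht hc.1)
  rcases hyadj with h | h
  · exact hu (by rw [← Fin.val_injective (show y.val = u.val by omega)]; exact hyS.1)
  · exact hyS.2 (Fin.val_injective (show y.val = x.val by omega))

lemma left_bd (hS : IsRedLDSet (SimpleGraph.pathGraph n) S) (hn : 2 ≤ n) {t : Fin n}
    (ht : t ∉ S) : 2 ≤ t.val := by
  by_contra hc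
  push_neg at hc
  interval_cases h : t.val
  · have hu : (⟨1, by omega⟩ : Fin n) ∈ S := by
      by_contra hu
      exact no_adjacent hS ht hu (by simp [h])
    obtain ⟨y, hyadj, hyS⟩ :=
      dom_of_ld (hS.2 _ hu) (fun hc : t ∈ S \ {(⟨1, by omega⟩ : Fin n)} => ht hc.1)
    exact hyS.2 (Fin.val_injective (show y.val = 1 by have := y.isLt; omega))
  · have hz : (⟨0, by omega⟩ : Fin n) ∈ S := by
      by_contra hz
      exact no_adjacent hS hz ht (by simp [h])
    obtain ⟨y, hyadj, hyS⟩ :=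
      dom_of_ld (hS.2 _ hz) (fun hc : (⟨0, by omega⟩ : Fin n) ∈ S \ {(⟨0, by omega⟩ : Fin n)} =>
        hc.2 rfl)
    have : y = t := Fin.val_injective (show y.val = t.val by simp at hyadj; omega)
    exact ht (this ▸ hyS.1)

lemma right_bd (hS : IsRedLDSet (SimpleGraph.pathGraph n) S) (hn : 2 ≤ n) {t : Fin n}
    (ht : t ∉ S) : t.val + 3 ≤ n := by
  have htn := t.isLt
  by_contra hc
  push_neg at hc
  rcases (show t.val = n - 1 ∨ t.val = n - 2 by omega) with h | h
  · have hu : (⟨n - 2, by omega⟩ : Fin n) ∈ S := by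
      by_contra hu
      exact no_adjacent hS hu ht (by simp; omega)
    obtain ⟨y, hyadj, hyS⟩ :=
      dom_of_ld (hS.2 _ hu) (fun hc : t ∈ S \ {(⟨n-2, by omega⟩ : Fin n)} => ht hc.1)
    have := y.isLt
    exact hyS.2 (Fin.val_injective (show y.val = n - 2 by omega))
  · have hu : (⟨n - 1, by omega⟩ : Fin n) ∈ S := by
      by_contra hu
      exact no_adjacent hS ht hu (by simp; omega)
    obtain ⟨y, hyadj, hyS⟩ :=
      dom_of_ld (hS.2 _ hu) (fun hc : (⟨n-1, by omega⟩ : Fin n) ∈ S \ {(⟨n-1, by omega⟩ : Fin n)} =>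
        hc.2 rfl)
    have := y.isLt
    have : y = t := Fin.val_injective (show y.val = t.val by simp at hyadj; omega)
    exact ht (this ▸ hyS.1)

lemma sep_bd (hS : IsRedLDSet (SimpleGraph.pathGraph n) S) {t t' : Fin n}
    (ht : t ∉ S) (ht' : t' ∉ S) (hlt : t.val < t'.val) : t.val + 3 ≤ t'.val := by
  have htn := t'.isLt
  by_contra hc
  push_neg at hc
  rcases (show t'.val = t.val + 1 ∨ t'.val = t.val + 2 by omega) with h | h
  · exact no_adjacent hS ht ht' h
  · have hm : (⟨t.val + 1, by omega⟩ : Fin n) ∈ S := by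
      by_contra hm
      exact no_adjacent hS ht hm (by simp)
    obtain ⟨y, hyadj, hyS⟩ :=
      dom_of_ld (hS.2 _ hm)
        (fun hc : (⟨t.val+1, by omega⟩ : Fin n) ∈ S \ {(⟨t.val+1, by omega⟩ : Fin n)} =>
          hc.2 rfl)
    simp at hyadj
    rcases hyadj with hy | hy
    · exact ht' (Fin.val_injective (show y.val = t'.val by omega) ▸ hyS.1)
    · exact ht (Fin.val_injective (show y.val = t.val by omega) ▸ hyS.1)

lemma lower_bound (hS : IsRedLDSet (SimpleGraph.pathGraph n) S) (hn : 2 ≤ n) :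
    (2 * n + 4) / 3 ≤ S.ncard := by
  have hinj : Set.InjOn (fun t : Fin n => (t.val - 2) / 3) Sᶜ := by
    intro x hx y hy hxy
    simp only [] at hxy
    rcases lt_trichotomy x.val y.val with h | h | h
    · have := sep_bd hS hx hy h
      have := left_bd hS hn hx
      omega
    · exact Fin.val_injective h
    · have := sep_bd hS hy hx h
      have := left_bd hS hn hy
      omega
  have hcard : (Sᶜ).ncard ≤ (n - 2) / 3 := by
    calc (Sᶜ).ncard = ((fun t : Fin n => (t.val - 2) / 3) '' Sᶜ).ncard :=
          (Set.ncard_image_of_injOn hinj).symm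
      _ ≤ (↑(Finset.range ((n - 2) / 3)) : Set ℕ).ncard := by
          apply Set.ncard_le_ncard
          · rintro _ ⟨t, ht, rfl⟩
            have h1 := left_bd hS hn ht
            have h2 := right_bd hS hn ht
            simp only [Finset.coe_range, Set.mem_Iio]
            omega
          · exact Set.toFinite _
      _ = (n - 2) / 3 := by rw [Set.ncard_coe_finset, Finset.card_range]
  have h2 := Set.ncard_add_ncard_compl S
  rw [Nat.card_eq_fintype_card, Fintype.card_fin] at h2
  omega

end lower

theorem stmt9 (n : ℕ) (hn : 2 ≤ n) :
    IsLeast {m : ℕ | ∃ S : Set (Fin n),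
      IsRedLDSet (SimpleGraph.pathGraph n) S ∧ S.ncard = m} ((2 * n + 4) / 3) := by
  constructor
  · exact ⟨Scon n, Scon_redld hn, Scon_ncard hn⟩
  · rintro m ⟨S, hS, rfl⟩
    exact lower_bound hS hn
end

section
/- For the ladder graph G = P_k □ P_2 with k ≥ 1, the minimum cardinality of a redundant locating-dominating set is k + 1 if k is odd, and k + 2 if k is even. -/
open scoped symmDiff

/-!
Count the vertices of a RED:LD set `S` of `P_k □ P_2` column by column. A vertex outside `S` needs
two neighbours in `S`, so an empty column forces both neighbouring columns to be full: any two
consecutive columns carry at least two vertices, and the end columns are nonempty. If an end column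
carries a single vertex of `S`, both of its vertices need a neighbour in the next column, which is
therefore full; the locating condition after deleting the vertex of that column in the row of the
end vertex of `S` forces the column after that to be nonempty. So the three columns at either end
carry at least four vertices, and summing gives `2 * (k / 2 + 1)`, which is `k + 1` or `k + 2`.
The columns of even index together with the last column form a RED:LD set of exactly that size.
-/

open SimpleGraph

namespace IsLDSet

variable {V W : Type*} {G : SimpleGraph V} {H : SimpleGraph W}

theorem mono {S T : Set V} (h : IsLDSet G S) (hST : S ⊆ T) : IsLDSet G T := by
  refine ⟨fun v hv => (h.1 v fun hvS => hv (hST hvS)).mono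
    (Set.inter_subset_inter_right _ hST), fun u hu v hv huv heq => ?_⟩
  refine h.2 u (fun huS => hu (hST huS)) v (fun hvS => hv (hST hvS)) huv ?_
  simpa [Set.inter_assoc, Set.inter_eq_right.2 hST] using congrArg (· ∩ S) heq

theorem preimage_iso {S : Set W} (h : IsLDSet H S) (φ : G ≃g H) : IsLDSet G (φ ⁻¹' S) := by
  have htrace : ∀ v, G.neighborSet v ∩ φ ⁻¹' S = φ ⁻¹' (H.neighborSet (φ v) ∩ S) := by
    intro v; ext x; simp [φ.map_adj_iff]
  refine ⟨fun v hv => ?_, fun u hu v hv huv => ?_⟩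
  · rw [htrace]; exact (h.1 (φ v) hv).preimage φ.surjective
  · rw [htrace, htrace, (Set.preimage_injective.2 φ.surjective).ne_iff]
    exact h.2 _ hu _ hv (φ.injective.ne huv)

end IsLDSet

namespace IsRedLDSet

variable {V W : Type*} {G : SimpleGraph V} {H : SimpleGraph W}

theorem of_sdiff_singleton {S : Set V} (hne : S.Nonempty) (h : ∀ v, IsLDSet G (S \ {v})) :
    IsRedLDSet G S :=
  ⟨(h hne.some).mono Set.sdiff_subset, fun v _ => h v⟩

theorem preimage_iso {S : Set W} (h : IsRedLDSet H S) (φ : G ≃g H) :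
    IsRedLDSet G (φ ⁻¹' S) := by
  refine ⟨h.1.preimage_iso φ, fun v hv => ?_⟩
  have := (h.2 (φ v) hv).preimage_iso φ
  rwa [Set.preimage_sdiff, ← Set.image_singleton, Set.preimage_image_eq _ φ.injective] at this

variable {S : Set V}

theorem nontrivial_neighborSet_inter_s10 (h : IsRedLDSet G S) {u : V} (hu : u ∉ S) :
    (G.neighborSet u ∩ S).Nontrivial := by
  obtain ⟨x, hx⟩ := h.1.1 u hu
  obtain ⟨y, hyu, hyS, hyx⟩ := (h.2 x hx.2).1 u fun hu' => hu hu'.1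
  exact ⟨y, ⟨hyu, hyS⟩, x, hx, hyx⟩

theorem exists_adj_mem (h : IsRedLDSet G S) {v : V} (hv : v ∈ S) : ∃ w ∈ S, G.Adj v w :=
  let ⟨w, hvw, hwS, _⟩ := (h.2 v hv).1 v fun hv' => hv'.2 rfl
  ⟨w, hwS, hvw⟩

theorem exists_mem_ne_not_adj_iff (h : IsRedLDSet G S) {u v : V} (hu : u ∉ S) (hv : v ∈ S) :
    ∃ w ∈ S, w ≠ v ∧ ¬(G.Adj u w ↔ G.Adj v w) := by
  by_contra! hsame
  refine (h.2 v hv).2 u (fun hu' => hu hu'.1) v (fun hv' => hv'.2 rfl)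
    (by rintro rfl; exact hu hv) ?_
  exact Set.ext fun w => and_congr_left fun ⟨hwS, hwv⟩ => hsame w hwS hwv

end IsRedLDSet

theorem SimpleGraph.eq_or_adj_of_neighborSet_inter_sdiff_eq {V : Type*} {G : SimpleGraph V}
    {T : Set V} {u u' v w : V}
    (h : G.neighborSet u ∩ (T \ {v}) = G.neighborSet u' ∩ (T \ {v})) (hw : w ∈ T)
    (huw : G.Adj u w) : w = v ∨ G.Adj u' w := by
  by_cases hwv : w = v
  · exact Or.inl hwv
  · exact Or.inr ((Set.ext_iff.1 h w).1 ⟨huw, hw, hwv⟩).1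

theorem two_mul_half_add_one_le_sum {k : ℕ} {t : ℕ → ℕ} (hk : 0 < k)
    (hpair : ∀ i, i + 1 < k → 2 ≤ t i + t (i + 1))
    (hfirst : 1 ≤ t 0 ∧ (t 0 = 1 → 2 ≤ t 1 ∧ 1 ≤ t 2 ∧ 3 ≤ k))
    (hlast : 1 ≤ t (k - 1) ∧ (t (k - 1) = 1 → 2 ≤ t (k - 2) ∧ 1 ≤ t (k - 3) ∧ 3 ≤ k)) :
    2 * (k / 2 + 1) ≤ ∑ i ∈ Finset.range k, t i := by
  have hprefix : ∀ m, 2 * m + 3 ≤ k → 2 * m + 4 ≤ ∑ i ∈ Finset.range (2 * m + 3), t i := by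
    intro m
    induction m with
    | zero =>
      intro h
      have : 2 ≤ t 1 + t 2 := hpair 1 (by omega)
      simp only [Finset.sum_range_succ, Finset.sum_range_zero]
      omega
    | succ m ih =>
      intro h
      have hsum : ∑ i ∈ Finset.range (2 * (m + 1) + 3), t i =
          ∑ i ∈ Finset.range (2 * m + 3), t i + t (2 * m + 3) + t (2 * m + 4) := by
        rw [show 2 * (m + 1) + 3 = 2 * m + 4 + 1 by ring, Finset.sum_range_succ,
          Finset.sum_range_succ]
      have : 2 ≤ t (2 * m + 3) + t (2 * m + 4) := hpair _ (by omega)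
      have := ih (by omega)
      omega
  rcases (by omega : k = 1 ∨ k = 2 ∨ k = 4 ∨ (3 ≤ k ∧ k ≠ 4)) with rfl | rfl | rfl | ⟨hk3, hk4⟩
  · simp only [Finset.sum_range_one]
    omega
  · have hlast : 1 ≤ t 1 ∧ (t 1 = 1 → 2 ≤ t 0 ∧ 1 ≤ t 0 ∧ 3 ≤ 2) := hlast
    simp only [Finset.sum_range_succ, Finset.sum_range_zero]
    omega
  · have hlast : 1 ≤ t 3 ∧ (t 3 = 1 → 2 ≤ t 2 ∧ 1 ≤ t 1 ∧ 3 ≤ 4) := hlast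
    have : 2 ≤ t 1 + t 2 := hpair 1 (by omega)
    simp only [Finset.sum_range_succ, Finset.sum_range_zero]
    omega
  · obtain ⟨n, rfl⟩ : ∃ n, k = n + 3 := ⟨k - 3, by omega⟩
    have hsplit : ∑ i ∈ Finset.range (n + 3), t i =
        ∑ i ∈ Finset.range n, t i + (t n + t (n + 1) + t (n + 2)) := by
      simp only [Finset.sum_range_succ]; ring
    have hlast : 1 ≤ t (n + 2) ∧ (t (n + 2) = 1 → 2 ≤ t (n + 1) ∧ 1 ≤ t n ∧ 3 ≤ n + 3) := by
      simpa only [show n + 3 - 1 = n + 2 by omega, show n + 3 - 2 = n + 1 by omega,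
        show n + 3 - 3 = n by omega] using hlast
    have := hpair n (by omega)
    rcases Nat.even_or_odd' n with ⟨m, rfl | rfl⟩
    · have := hprefix m (by omega)
      omega
    · have := hprefix (m - 1) (by omega)
      rw [show 2 * (m - 1) + 3 = 2 * m + 1 by omega] at this
      omega

theorem sum_range_ite_mod_two (n : ℕ) :
    ∑ i ∈ Finset.range n, (if i % 2 = 0 then 2 else 0) = 2 * ((n + 1) / 2) := by
  induction n with
  | zero => rfl
  | succ n ih =>
    rw [Finset.sum_range_succ, ih]
    split_ifs <;> omega

abbrev ladder (k : ℕ) : SimpleGraph (Fin k × Fin 2) := pathGraph k □ pathGraph 2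

namespace Ladder

variable {k : ℕ}

theorem adj_iff {p q : Fin k × Fin 2} : (ladder k).Adj p q ↔
    ((p.2 : ℕ) = q.2 ∧ ((p.1 : ℕ) + 1 = q.1 ∨ (q.1 : ℕ) + 1 = p.1)) ∨
      ((p.1 : ℕ) = q.1 ∧ (p.2 : ℕ) ≠ q.2) := by
  rw [boxProd_adj, pathGraph_adj, pathGraph_adj]
  omega

def reflect (k : ℕ) : ladder k ≃g ladder k where
  toEquiv := Fin.revPerm.prodCongr (Equiv.refl _)
  map_rel_iff' := by
    intro p q
    simp only [Equiv.prodCongr_apply, Prod.map, Fin.revPerm_apply, Equiv.refl_apply, adj_iff,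
      Fin.val_rev]
    omega

@[simp]
theorem reflect_apply (p : Fin k × Fin 2) : reflect k p = (p.1.rev, p.2) := rfl

-- Coordinates are natural numbers, so that neighbouring columns are `i - 1` and `i + 1`;
-- `MemAt S i b` is false outside the ladder, and `colCard S i = 0` for `k ≤ i`.
def MemAt (S : Set (Fin k × Fin 2)) (i b : ℕ) : Prop :=
  ∃ p ∈ S, (p.1 : ℕ) = i ∧ (p.2 : ℕ) = b

open Classical in
noncomputable def colCard (S : Set (Fin k × Fin 2)) (i : ℕ) : ℕ :=
  (if MemAt S i 0 then 1 else 0) + (if MemAt S i 1 then 1 else 0)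

variable {S : Set (Fin k × Fin 2)}

theorem memAt_iff_mem {i : Fin k} {b : Fin 2} : MemAt S i b ↔ (i, b) ∈ S :=
  ⟨fun ⟨p, hp, hi, hb⟩ => (Prod.ext (Fin.ext hi) (Fin.ext hb) : p = (i, b)) ▸ hp,
    fun h => ⟨_, h, rfl, rfl⟩⟩

theorem ncard_eq_sum_colCard (S : Set (Fin k × Fin 2)) :
    S.ncard = ∑ i ∈ Finset.range k, colCard S i := by
  classical
  rw [Set.ncard_eq_toFinset_card', ← Fin.sum_univ_eq_sum_range, Finset.card_eq_sum_ones,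
    ← Set.filter_mem_univ_eq_toFinset, Finset.sum_filter, Fintype.sum_prod_type]
  refine Finset.sum_congr rfl fun i _ => ?_
  have h0 : MemAt S i 0 ↔ (i, 0) ∈ S := memAt_iff_mem (b := 0)
  have h1 : MemAt S i 1 ↔ (i, 1) ∈ S := memAt_iff_mem (b := 1)
  simp only [Fin.sum_univ_two, colCard, h0, h1]

theorem memAt_preimage_reflect {i b : ℕ} (hi : i < k) :
    MemAt (reflect k ⁻¹' S) i b ↔ MemAt S (k - 1 - i) b := by
  constructor
  · rintro ⟨p, hp, rfl, rfl⟩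
    exact ⟨_, hp, by simp only [reflect_apply, Fin.val_rev]; omega, rfl⟩
  · rintro ⟨p, hp, hpi, rfl⟩
    refine ⟨reflect k p, by simpa using hp, ?_, rfl⟩
    simp only [reflect_apply, Fin.val_rev]
    omega

theorem colCard_preimage_reflect {i : ℕ} (hi : i < k) :
    colCard (reflect k ⁻¹' S) i = colCard S (k - 1 - i) := by
  classical
  have h0 := memAt_preimage_reflect (S := S) (b := 0) hi
  have h1 := memAt_preimage_reflect (S := S) (b := 1) hi
  simp only [colCard, h0, h1]

theorem lt_of_memAt {i b : ℕ} (h : MemAt S i b) : i < k ∧ b < 2 := by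
  obtain ⟨p, -, rfl, rfl⟩ := h
  exact ⟨p.1.isLt, p.2.isLt⟩

theorem one_le_colCard {i b : ℕ} (h : MemAt S i b) : 1 ≤ colCard S i := by
  have := (lt_of_memAt h).2
  interval_cases b <;> simp [colCard, h]

theorem colCard_eq_zero_iff {i : ℕ} : colCard S i = 0 ↔ ∀ b, ¬MemAt S i b := by
  classical
  refine ⟨fun h b hb => ?_, fun h => by simp [colCard, h]⟩
  have := (lt_of_memAt hb).2
  interval_cases b <;> simp [colCard, hb] at h

theorem two_le_colCard {i : ℕ} (h0 : MemAt S i 0) (h1 : MemAt S i 1) : 2 ≤ colCard S i := by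
  simp [colCard, h0, h1]

theorem exists_of_colCard_eq_one {i : ℕ} (h : colCard S i = 1) :
    ∃ b < 2, MemAt S i b ∧ ¬MemAt S i (1 - b) := by
  unfold colCard at h
  split_ifs at h with h0 h1 h1
  · omega
  · exact ⟨0, by norm_num, h0, h1⟩
  · exact ⟨1, by norm_num, h1, h0⟩
  · omega

theorem memAt_adjacent_of_colCard_eq_zero (hS : IsRedLDSet (ladder k) S) {i b : ℕ} (hi : i < k)
    (hb : b < 2) (h : colCard S i = 0) : MemAt S (i - 1) b ∧ MemAt S (i + 1) b := by
  have hcol := colCard_eq_zero_iff.1 h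
  obtain ⟨x, ⟨hux, hx⟩, y, ⟨huy, hy⟩, hxy⟩ :=
    hS.nontrivial_neighborSet_inter_s10 (u := (⟨i, hi⟩, ⟨b, hb⟩)) fun hu => hcol b ⟨_, hu, rfl, rfl⟩
  have hxi : (x.1 : ℕ) ≠ i := fun h => hcol _ ⟨x, hx, h, rfl⟩
  have hyi : (y.1 : ℕ) ≠ i := fun h => hcol _ ⟨y, hy, h, rfl⟩
  rw [mem_neighborSet, adj_iff] at hux huy
  rw [Ne, Prod.ext_iff, Fin.ext_iff, Fin.ext_iff] at hxy
  simp only at hux huy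
  obtain ⟨⟨hx1, hy1⟩ | ⟨hx1, hy1⟩, hx2, hy2⟩ :
      ((x.1 : ℕ) + 1 = i ∧ (y.1 : ℕ) = i + 1 ∨ (x.1 : ℕ) = i + 1 ∧ (y.1 : ℕ) + 1 = i) ∧
        (x.2 : ℕ) = b ∧ (y.2 : ℕ) = b := by omega
  · exact ⟨⟨x, hx, by omega, hx2⟩, ⟨y, hy, hy1, hy2⟩⟩
  · exact ⟨⟨y, hy, by omega, hy2⟩, ⟨x, hx, hx1, hx2⟩⟩

theorem memAt_of_end (hS : IsRedLDSet (ladder k) S) {b : ℕ} (h0 : MemAt S 0 b)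
    (h1 : ¬MemAt S 0 (1 - b)) : MemAt S 1 b ∧ MemAt S 1 (1 - b) ∧ MemAt S 2 b := by
  obtain ⟨v, hv, hv1, hv2⟩ := h0
  obtain ⟨u, hu1, hu2⟩ : ∃ u : Fin k × Fin 2, (u.1 : ℕ) = 0 ∧ (u.2 : ℕ) = 1 - b :=
    ⟨(v.1, ⟨1 - b, by omega⟩), hv1, rfl⟩
  have hu : u ∉ S := fun hu => h1 ⟨u, hu, hu1, hu2⟩
  have hS0 : ∀ p ∈ S, ¬((p.1 : ℕ) = 0 ∧ (p.2 : ℕ) = 1 - b) := fun p hp h => h1 ⟨p, hp, h⟩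
  obtain ⟨w, hw, hvw⟩ := hS.exists_adj_mem hv
  have hw' : (w.1 : ℕ) = 1 ∧ (w.2 : ℕ) = b := by
    have := hS0 w hw
    rw [adj_iff] at hvw
    omega
  have hcol1 : MemAt S 1 (1 - b) := by
    obtain ⟨x, ⟨hux, hx⟩, y, ⟨huy, hy⟩, hxy⟩ := hS.nontrivial_neighborSet_inter_s10 hu
    have := hS0 x hx
    have := hS0 y hy
    rw [mem_neighborSet, adj_iff] at hux huy
    rw [Ne, Prod.ext_iff, Fin.ext_iff, Fin.ext_iff] at hxy
    obtain hx' | hy' : (x.1 : ℕ) = 1 ∧ (x.2 : ℕ) = 1 - b ∨ (y.1 : ℕ) = 1 ∧ (y.2 : ℕ) = 1 - b := by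
      omega
    exacts [⟨x, hx, hx'⟩, ⟨y, hy, hy'⟩]
  -- Some vertex of `S` other than `w` separates `u` from `w`; the only candidate is `(2, b)`.
  obtain ⟨z, hz, -, hz'⟩ := hS.exists_mem_ne_not_adj_iff hu hw
  rw [adj_iff, adj_iff] at hz'
  exact ⟨⟨w, hw, hw'⟩, hcol1, ⟨z, hz, by omega, by omega⟩⟩

theorem two_le_colCard_add (hS : IsRedLDSet (ladder k) S) {i : ℕ} (hi : i + 1 < k) :
    2 ≤ colCard S i + colCard S (i + 1) := by
  by_cases h : colCard S i = 0
  · have := two_le_colCard (memAt_adjacent_of_colCard_eq_zero hS (by omega) zero_lt_two h).2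
      (memAt_adjacent_of_colCard_eq_zero hS (by omega) one_lt_two h).2
    omega
  by_cases h' : colCard S (i + 1) = 0
  · have := two_le_colCard (memAt_adjacent_of_colCard_eq_zero hS hi zero_lt_two h').1
      (memAt_adjacent_of_colCard_eq_zero hS hi one_lt_two h').1
    simp only [add_tsub_cancel_right] at this
    omega
  omega

theorem colCard_first (hS : IsRedLDSet (ladder k) S) (hk : 0 < k) :
    1 ≤ colCard S 0 ∧ (colCard S 0 = 1 → 2 ≤ colCard S 1 ∧ 1 ≤ colCard S 2 ∧ 3 ≤ k) := by
  refine ⟨Nat.one_le_iff_ne_zero.2 fun h => ?_, fun h => ?_⟩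
  · -- Column `0 - 1 = 0` would have to be full.
    exact colCard_eq_zero_iff.1 h 0 (memAt_adjacent_of_colCard_eq_zero hS hk zero_lt_two h).1
  · obtain ⟨b, hb, h0, h1⟩ := exists_of_colCard_eq_one h
    obtain ⟨hb1, hb1', hb2⟩ := memAt_of_end hS h0 h1
    refine ⟨?_, one_le_colCard hb2, by have := (lt_of_memAt hb2).1; omega⟩
    interval_cases b
    exacts [two_le_colCard hb1 hb1', two_le_colCard hb1' hb1]

theorem colCard_last (hS : IsRedLDSet (ladder k) S) (hk : 0 < k) :
    1 ≤ colCard S (k - 1) ∧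
      (colCard S (k - 1) = 1 → 2 ≤ colCard S (k - 2) ∧ 1 ≤ colCard S (k - 3) ∧ 3 ≤ k) := by
  obtain ⟨hfirst, hnext⟩ := colCard_first (hS.preimage_iso (reflect k)) hk
  rw [colCard_preimage_reflect hk] at hfirst hnext
  refine ⟨hfirst, fun h => ?_⟩
  obtain ⟨h1, h2, hk3⟩ := hnext h
  rw [colCard_preimage_reflect (by omega), show k - 1 - 1 = k - 2 by omega] at h1
  rw [colCard_preimage_reflect (by omega), show k - 1 - 2 = k - 3 by omega] at h2
  exact ⟨h1, h2, hk3⟩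

theorem two_mul_le_ncard (hS : IsRedLDSet (ladder k) S)
    (hk : 0 < k) : 2 * (k / 2 + 1) ≤ S.ncard := by
  rw [ncard_eq_sum_colCard]
  exact two_mul_half_add_one_le_sum hk (fun _ hi => two_le_colCard_add hS hi)
    (colCard_first hS hk) (colCard_last hS hk)

def evenOrLastColumns (k : ℕ) : Set (Fin k × Fin 2) := {p | (p.1 : ℕ) % 2 = 0 ∨ (p.1 : ℕ) + 1 = k}

theorem mem_evenOrLastColumns {p : Fin k × Fin 2} :
    p ∈ evenOrLastColumns k ↔ (p.1 : ℕ) % 2 = 0 ∨ (p.1 : ℕ) + 1 = k := Iff.rfl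

theorem exists_column_neighbors {u : Fin k × Fin 2} (hu : u ∉ evenOrLastColumns k) :
    ∃ L R : Fin k × Fin 2, L ∈ evenOrLastColumns k ∧ R ∈ evenOrLastColumns k ∧
      (L.1 : ℕ) + 1 = u.1 ∧ (R.1 : ℕ) = u.1 + 1 ∧ L.2 = u.2 ∧ R.2 = u.2 := by
  rw [mem_evenOrLastColumns] at hu
  refine ⟨(⟨u.1 - 1, by omega⟩, u.2), (⟨u.1 + 1, by omega⟩, u.2), ?_, ?_, ?_, rfl, rfl, rfl⟩ <;>
    simp only [mem_evenOrLastColumns] <;> omega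

theorem neighborSet_inter_evenOrLastColumns_sdiff_ne {u u' v : Fin k × Fin 2}
    (hu : u ∉ evenOrLastColumns k) (hu' : u' ∉ evenOrLastColumns k \ {v}) (hne : u ≠ u') :
    (ladder k).neighborSet u ∩ (evenOrLastColumns k \ {v}) ≠
      (ladder k).neighborSet u' ∩ (evenOrLastColumns k \ {v}) := by
  intro heq
  obtain ⟨L, R, hL, hR, hL1, hR1, hL2, hR2⟩ := exists_column_neighbors hu
  have hLv := eq_or_adj_of_neighborSet_inter_sdiff_eq heq hL (by rw [adj_iff]; omega)
  have hRv := eq_or_adj_of_neighborSet_inter_sdiff_eq heq hR (by rw [adj_iff]; omega)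
  rw [Ne, Prod.ext_iff, Fin.ext_iff, Fin.ext_iff] at hne
  rw [mem_evenOrLastColumns] at hu
  by_cases hu'E : u' ∈ evenOrLastColumns k
  · obtain rfl : u' = v := by simpa [hu'E] using hu'
    have hPv := eq_or_adj_of_neighborSet_inter_sdiff_eq heq.symm (w := (u'.1, u'.2.rev)) hu'E
      (by rw [adj_iff]; dsimp only; rw [Fin.val_rev]; omega)
    simp only [Prod.ext_iff, Fin.ext_iff, adj_iff, Fin.val_rev] at hLv hRv hPv
    omega
  · obtain ⟨L', R', hL', hR', hL1', hR1', hL2', hR2'⟩ := exists_column_neighbors hu'E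
    have hLv' := eq_or_adj_of_neighborSet_inter_sdiff_eq heq.symm hL' (by rw [adj_iff]; omega)
    have hRv' := eq_or_adj_of_neighborSet_inter_sdiff_eq heq.symm hR' (by rw [adj_iff]; omega)
    rw [mem_evenOrLastColumns] at hu'E
    simp only [Prod.ext_iff, Fin.ext_iff, adj_iff] at hLv hRv hLv' hRv'
    omega

theorem isLDSet_evenOrLastColumns_sdiff (v : Fin k × Fin 2) :
    IsLDSet (ladder k) (evenOrLastColumns k \ {v}) := by
  have hsame : ∀ u ∉ evenOrLastColumns k \ {v}, u ∈ evenOrLastColumns k → u = v := by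
    intro u hu huE
    simpa [huE] using hu
  refine ⟨fun u hu => ?_, fun u hu u' hu' hne => ?_⟩
  · by_cases huE : u ∈ evenOrLastColumns k
    · obtain rfl := hsame u hu huE
      refine ⟨(u.1, u.2.rev), ?_, huE, ?_⟩
      · rw [mem_neighborSet, adj_iff]; dsimp only; rw [Fin.val_rev]; omega
      · simp only [Set.mem_singleton_iff, Prod.ext_iff, Fin.ext_iff, Fin.val_rev]; omega
    · obtain ⟨L, R, hL, hR, hL1, hR1, hL2, hR2⟩ := exists_column_neighbors huE
      by_cases hLv : L = v
      · refine ⟨R, by rw [mem_neighborSet, adj_iff]; omega, hR, ?_⟩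
        rintro rfl
        simp only [Prod.ext_iff, Fin.ext_iff] at hLv
        omega
      · exact ⟨L, by rw [mem_neighborSet, adj_iff]; omega, hL, hLv⟩
  · by_cases huE : u ∈ evenOrLastColumns k
    · by_cases hu'E : u' ∈ evenOrLastColumns k
      · exact absurd ((hsame u hu huE).trans (hsame u' hu' hu'E).symm) hne
      · exact fun h => neighborSet_inter_evenOrLastColumns_sdiff_ne hu'E hu hne.symm h.symm
    · exact neighborSet_inter_evenOrLastColumns_sdiff_ne huE hu' hne

theorem isRedLDSet_evenOrLastColumns (hk : 0 < k) :
    IsRedLDSet (ladder k) (evenOrLastColumns k) :=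
  .of_sdiff_singleton ⟨(⟨0, hk⟩, 0), Or.inl rfl⟩ isLDSet_evenOrLastColumns_sdiff

theorem ncard_evenOrLastColumns (hk : 0 < k) : (evenOrLastColumns k).ncard = 2 * (k / 2 + 1) := by
  classical
  have hcol : ∀ i < k,
      colCard (evenOrLastColumns k) i = if i % 2 = 0 ∨ i + 1 = k then 2 else 0 := by
    intro i hi
    have hmem : ∀ b < 2, MemAt (evenOrLastColumns k) i b ↔ i % 2 = 0 ∨ i + 1 = k :=
      fun b hb => ⟨fun ⟨p, hp, hpi, _⟩ => hpi ▸ hp, fun h => ⟨(⟨i, hi⟩, ⟨b, hb⟩), h, rfl, rfl⟩⟩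
    simp only [colCard, hmem 0 two_pos, hmem 1 one_lt_two]
    split_ifs <;> rfl
  obtain ⟨n, rfl⟩ : ∃ n, k = n + 1 := ⟨k - 1, by omega⟩
  rw [ncard_eq_sum_colCard, Finset.sum_range_succ, hcol n (by omega), if_pos (Or.inr rfl)]
  have hinit : ∑ i ∈ Finset.range n, colCard (evenOrLastColumns (n + 1)) i =
      ∑ i ∈ Finset.range n, (if i % 2 = 0 then 2 else 0) := by
    refine Finset.sum_congr rfl fun i hi => ?_
    have := Finset.mem_range.1 hi
    rw [hcol i (by omega)]
    exact if_congr (or_iff_left (by omega)) rfl rfl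
  rw [hinit, sum_range_ite_mod_two]
  omega

end Ladder

theorem stmt10 (k : ℕ) (hk : 1 ≤ k) :
    IsLeast {m : ℕ | ∃ S : Set (Fin k × Fin 2),
        IsRedLDSet ((SimpleGraph.pathGraph k).boxProd (SimpleGraph.pathGraph 2)) S ∧
          S.ncard = m}
      (if Odd k then k + 1 else k + 2) := by
  have hvalue : (if Odd k then k + 1 else k + 2) = 2 * (k / 2 + 1) := by
    split_ifs with hodd
    · rw [Nat.odd_iff] at hodd; omega
    · rw [Nat.not_odd_iff_even, Nat.even_iff] at hodd; omega
  rw [hvalue]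
  refine ⟨⟨_, Ladder.isRedLDSet_evenOrLastColumns hk, Ladder.ncard_evenOrLastColumns hk⟩, ?_⟩
  rintro _ ⟨S, hS, rfl⟩
  exact Ladder.two_mul_le_ncard hS hk
end

section
/- Let T be a tree and S ⊆ V(T) a set such that every vertex v ∈ V(T) satisfies |N[v] ∩ S| ≥ 2. Then S is a redundant locating-dominating set of T. -/
open scoped symmDiff

/-- In a tree, two distinct vertices cannot have two distinct common neighbors. -/
lemma tree_no4 {V : Type*} {G : SimpleGraph V} (hT : G.IsTree) {u w a b : V}
    (huw : u ≠ w) (hab : a ≠ b) (h1 : G.Adj u a) (h2 : G.Adj a w)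
    (h3 : G.Adj u b) (h4 : G.Adj b w) : False := by
  have hp1 : (SimpleGraph.Walk.cons h1 (SimpleGraph.Walk.cons h2 SimpleGraph.Walk.nil)).IsPath := by
    simp [SimpleGraph.Walk.isPath_def, h1.ne, h2.ne, huw]
  have hp2 : (SimpleGraph.Walk.cons h3 (SimpleGraph.Walk.cons h4 SimpleGraph.Walk.nil)).IsPath := by
    simp [SimpleGraph.Walk.isPath_def, h3.ne, h4.ne, huw]
  have := (hT.existsUnique_path u w).unique hp1 hp2
  have := congrArg SimpleGraph.Walk.support this
  simp at this
  exact hab this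

/-- A tree has no triangles. -/
lemma tree_no3 {V : Type*} {G : SimpleGraph V} (hT : G.IsTree) {u w a : V}
    (huw : G.Adj u w) (h1 : G.Adj u a) (h2 : G.Adj a w) : False := by
  have hp1 : (SimpleGraph.Walk.cons huw SimpleGraph.Walk.nil).IsPath := by
    simp [SimpleGraph.Walk.isPath_def, huw.ne]
  have hp2 : (SimpleGraph.Walk.cons h1 (SimpleGraph.Walk.cons h2 SimpleGraph.Walk.nil)).IsPath := by
    simp [SimpleGraph.Walk.isPath_def, h1.ne, h2.ne, huw.ne]
  have := (hT.existsUnique_path u w).unique hp1 hp2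
  simpa using congrArg SimpleGraph.Walk.length this

lemma ld_of_diff {V : Type*} [Fintype V] (G : SimpleGraph V) (hT : G.IsTree) (S : Set V)
    (hdom : ∀ v : V, 2 ≤ ((insert v (G.neighborSet v)) ∩ S).ncard)
    (x : V) : IsLDSet G (S \ {x}) := by
  -- basic counting facts
  have hS2 : ∀ v ∉ S, 2 ≤ (G.neighborSet v ∩ S).ncard := by
    intro v hv
    have he : insert v (G.neighborSet v) ∩ S = G.neighborSet v ∩ S := by
      ext y
      simp only [Set.mem_inter_iff, Set.mem_insert_iff]
      constructor
      · rintro ⟨(rfl | h), hs⟩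
        · exact absurd hs hv
        · exact ⟨h, hs⟩
      · rintro ⟨h, hs⟩; exact ⟨Or.inr h, hs⟩
    have := hdom v; rwa [he] at this
  have hS1 : ∀ v ∈ S, (G.neighborSet v ∩ S).Nonempty := by
    intro v hv
    have he : insert v (G.neighborSet v) ∩ S = insert v (G.neighborSet v ∩ S) := by
      ext y
      simp only [Set.mem_inter_iff, Set.mem_insert_iff]
      constructor
      · rintro ⟨(rfl | h), hs⟩
        · exact Or.inl rfl
        · exact Or.inr ⟨h, hs⟩
      · rintro (rfl | ⟨h, hs⟩)
        · exact ⟨Or.inl rfl, hv⟩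
        · exact ⟨Or.inr h, hs⟩
    have h2 := hdom v
    rw [he] at h2
    have hle := Set.ncard_insert_le v (G.neighborSet v ∩ S)
    have : 1 ≤ (G.neighborSet v ∩ S).ncard := by omega
    exact Set.nonempty_of_ncard_ne_zero (by omega)
  -- two distinct S-neighbors for non-detectors
  have htwo : ∀ v ∉ S, ∃ a ∈ G.neighborSet v ∩ S, ∃ b ∈ G.neighborSet v ∩ S, a ≠ b := by
    intro v hv
    have := hS2 v hv
    obtain ⟨a, b, ha, hb, hab⟩ := (Set.one_lt_ncard_iff (Set.toFinite (G.neighborSet v ∩ S))).mp (by omega)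
    exact ⟨a, ha, b, hb, hab⟩
  -- domination for S \ {x}
  have hdom' : ∀ v ∉ S \ {x}, (G.neighborSet v ∩ (S \ {x})).Nonempty := by
    intro v hv
    by_cases hvS : v ∈ S
    · -- then v = x
      have hvx : v = x := by
        by_contra h
        exact hv ⟨hvS, h⟩
      subst hvx
      obtain ⟨a, ha, haS⟩ := hS1 v hvS
      refine ⟨a, ha, haS, ?_⟩
      intro h; rw [Set.mem_singleton_iff] at h; subst h
      exact G.irrefl ha
    · obtain ⟨a, ⟨ha, haS⟩, b, ⟨hb, hbS⟩, hab⟩ := htwo v hvS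
      by_cases hax : a = x
      · subst hax
        exact ⟨b, hb, hbS, by simpa [Set.mem_singleton_iff] using hab.symm⟩
      · exact ⟨a, ha, haS, hax⟩
  refine ⟨hdom', ?_⟩
  intro u hu w hw huw heq
  set C := G.neighborSet u ∩ (S \ {x}) with hC
  have hCne : C.Nonempty := hdom' u hu
  by_cases h2C : 2 ≤ C.ncard
  · obtain ⟨a, b, ha, hb, hab⟩ := (Set.one_lt_ncard_iff (Set.toFinite C)).mp (by omega)
    have haw : a ∈ G.neighborSet w := by have := heq ▸ ha; exact this.1
    have hbw : b ∈ G.neighborSet w := by have := heq ▸ hb; exact this.1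
    exact tree_no4 hT huw hab ha.1 haw.symm hb.1 hbw.symm
  · -- C has exactly one element a
    have h1C : C.ncard = 1 := by
      have := (Set.ncard_pos (Set.toFinite C)).mpr hCne
      omega
    obtain ⟨a, haC⟩ := Set.ncard_eq_one.mp h1C
    have haU : a ∈ C := haC ▸ rfl
    have haSx : a ∈ S \ {x} := haU.2
    have hau : G.Adj u a := haU.1
    have haw : G.Adj w a := by
      have : a ∈ G.neighborSet w ∩ (S \ {x}) := heq ▸ haU
      exact this.1
    -- key claim: if v ∉ S and N(v)∩(S\{x}) = C then x ∈ N(v)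
    have key : ∀ v, v ∉ S → G.neighborSet v ∩ (S \ {x}) = C → x ∈ G.neighborSet v := by
      intro v hvS hveq
      by_contra hxN
      have : G.neighborSet v ∩ S = G.neighborSet v ∩ (S \ {x}) := by
        ext y
        simp only [Set.mem_inter_iff, Set.mem_diff, Set.mem_singleton_iff]
        constructor
        · rintro ⟨hy, hyS⟩
          refine ⟨hy, hyS, ?_⟩
          rintro rfl; exact hxN hy
        · rintro ⟨hy, hyS, _⟩; exact ⟨hy, hyS⟩
      have hcard := hS2 v hvS
      rw [this, hveq, h1C] at hcard
      omega
    by_cases huS : u ∈ S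
    · have hux : u = x := by by_contra h; exact hu ⟨huS, h⟩
      have hwS : w ∉ S := by
        intro hwS
        have : w = x := by by_contra h; exact hw ⟨hwS, h⟩
        exact huw (hux.trans this.symm)
      have hxw : x ∈ G.neighborSet w := key w hwS heq.symm
      subst hux
      exact tree_no3 hT hxw.symm hau haw.symm
    · have hxu : x ∈ G.neighborSet u := key u huS rfl
      by_cases hwS : w ∈ S
      · have hwx : w = x := by by_contra h; exact hw ⟨hwS, h⟩
        subst hwx
        exact tree_no3 hT hxu hau haw.symm
      · have hxw : x ∈ G.neighborSet w := key w hwS heq.symm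
        have hax : a ≠ x := haSx.2
        exact tree_no4 hT huw hax hau haw.symm hxu hxw.symm

theorem stmt11 {V : Type*} [Fintype V] (G : SimpleGraph V) (hT : G.IsTree) (S : Set V)
    (hdom : ∀ v : V, 2 ≤ ((insert v (G.neighborSet v)) ∩ S).ncard) :
    IsRedLDSet G S := by
  refine ⟨?_, fun v _ => ld_of_diff G hT S hdom v⟩
  by_cases h : ∃ x, x ∉ S
  · obtain ⟨x, hx⟩ := h
    have hSx : S \ {x} = S := by
      ext y
      simp only [Set.mem_diff, Set.mem_singleton_iff]
      constructor
      · rintro ⟨hy, _⟩; exact hy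
      · intro hy
        refine ⟨hy, ?_⟩
        rintro rfl; exact hx hy
    have := ld_of_diff G hT S hdom x
    rwa [hSx] at this
  · push_neg at h
    exact ⟨fun v hv => absurd (h v) hv, fun u hu _ _ _ _ => absurd (h u) hu⟩
end

section
/- For every tree T on n ≥ 2 vertices, every redundant locating-dominating set of T has cardinality at least ⌈(2n+2)/3⌉. -/
open scoped symmDiff

/-!
Every vertex outside a redundant locating-dominating set `S` has at least two neighbours in `S`
(removing one of its neighbours from `S` must leave it dominated), and every vertex of `S` has a
neighbour in `S` (removing the vertex itself must leave it dominated). Counting the edges of the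
tree at their endpoints in `S` then gives `|S| + 4 (n - |S|) ≤ 2 (n - 1)`, i.e. `3 |S| ≥ 2n + 2`.
-/

open Finset

namespace IsRedLDSet

variable {V : Type*} {G : SimpleGraph V} {S : Set V}

theorem exists_adj_mem_of_mem (hS : IsRedLDSet G S) {v : V} (hv : v ∈ S) :
    ∃ u ∈ S, G.Adj v u := by
  obtain ⟨u, hvu, huS, -⟩ := (hS.2 v hv).1 v (by simp)
  exact ⟨u, huS, hvu⟩

theorem exists_two_adj_mem_of_notMem (hS : IsRedLDSet G S) {v : V} (hv : v ∉ S) :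
    ∃ a ∈ S, ∃ b ∈ S, a ≠ b ∧ G.Adj v a ∧ G.Adj v b := by
  obtain ⟨a, hva, haS⟩ := hS.1.1 v hv
  obtain ⟨b, hvb, hbS, hba⟩ := (hS.2 a haS).1 v (by simp [hv])
  exact ⟨a, haS, b, hbS, Ne.symm hba, hva, hvb⟩

variable [Fintype V] [DecidableEq V] [DecidableRel G.Adj] {s : Finset V}

theorem one_le_card_neighborFinset_inter (hS : IsRedLDSet G s) {v : V} (hv : v ∈ s) :
    1 ≤ #(G.neighborFinset v ∩ s) := by
  obtain ⟨u, hus, hvu⟩ := hS.exists_adj_mem_of_mem hv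
  exact card_pos.2 ⟨u, mem_inter.2 ⟨(G.mem_neighborFinset v u).2 hvu, hus⟩⟩

theorem two_le_card_neighborFinset_inter (hS : IsRedLDSet G s) {v : V} (hv : v ∉ s) :
    2 ≤ #(G.neighborFinset v ∩ s) := by
  obtain ⟨a, has, b, hbs, hab, hva, hvb⟩ := hS.exists_two_adj_mem_of_notMem hv
  exact one_lt_card_iff.2 ⟨a, b, mem_inter.2 ⟨(G.mem_neighborFinset v a).2 hva, has⟩,
    mem_inter.2 ⟨(G.mem_neighborFinset v b).2 hvb, hbs⟩, hab⟩

end IsRedLDSet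

namespace SimpleGraph

variable {V : Type*} [Fintype V] [DecidableEq V] (G : SimpleGraph V) [DecidableRel G.Adj]

theorem sum_card_neighborFinset_inter (s : Finset V) :
    ∑ v, #(G.neighborFinset v ∩ s) = ∑ v ∈ s, G.degree v := by
  have key := sum_card_bipartiteAbove_eq_sum_card_bipartiteBelow (s := univ) (t := s) (r := G.Adj)
  convert key using 3 with v - v -
  · ext u; simp [bipartiteAbove, and_comm]
  · rw [← card_neighborFinset_eq_degree]
    congr 1
    ext u; simp [bipartiteBelow, G.adj_comm]

theorem card_add_four_mul_card_compl_le_two_mul_card_edgeFinset (s : Finset V)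
    (hin : ∀ v ∈ s, 1 ≤ #(G.neighborFinset v ∩ s))
    (hout : ∀ v ∉ s, 2 ≤ #(G.neighborFinset v ∩ s)) :
    #s + 4 * #sᶜ ≤ 2 * #G.edgeFinset := by
  have hdeg_in : #s + 2 * #sᶜ ≤ ∑ v ∈ s, G.degree v := by
    rw [← sum_card_neighborFinset_inter, ← sum_add_sum_compl s]
    gcongr
    · simpa using sum_le_sum hin
    · simpa [mul_comm] using sum_le_sum fun v hv => hout v (mem_compl.1 hv)
  have hdeg_out : 2 * #sᶜ ≤ ∑ v ∈ sᶜ, G.degree v := by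
    simpa [mul_comm] using sum_le_sum fun v hv =>
      (hout v (mem_compl.1 hv)).trans ((card_le_card inter_subset_left).trans
        (G.card_neighborFinset_eq_degree v).le)
  rw [← sum_degrees_eq_twice_card_edges, ← sum_add_sum_compl s]
  omega

end SimpleGraph

theorem stmt12_general {V : Type*} [Fintype V] (G : SimpleGraph V) (hT : G.IsTree)
    (S : Set V) (hS : IsRedLDSet G S) :
    (2 * Fintype.card V + 4) / 3 ≤ S.ncard := by
  classical
  obtain ⟨s, rfl⟩ : ∃ s : Finset V, ↑s = S := ⟨S.toFinset, S.coe_toFinset⟩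
  have hcount := G.card_add_four_mul_card_compl_le_two_mul_card_edgeFinset s
    (fun _ hv => hS.one_le_card_neighborFinset_inter hv)
    (fun _ hv => hS.two_le_card_neighborFinset_inter hv)
  have hedges : #G.edgeFinset + 1 = Fintype.card V := hT.card_edgeFinset
  have hsplit : #s + #sᶜ = Fintype.card V := card_add_card_compl s
  rw [Set.ncard_coe_finset]
  omega

theorem stmt12 {V : Type*} [Fintype V] (G : SimpleGraph V) (hT : G.IsTree)
    (hn : 2 ≤ Fintype.card V) (S : Set V) (hS : IsRedLDSet G S) :
    (2 * Fintype.card V + 4) / 3 ≤ S.ncard :=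
  stmt12_general G hT S hS
end

section
/- A tree T on n ≥ 2 vertices satisfies RED:LD(T) = n (the only redundant locating-dominating set is the full vertex set) if and only if every vertex of T is a leaf or a support vertex. -/
open scoped symmDiff

open SimpleGraph

lemma myNbrNonempty {V : Type*} [Fintype V] {G : SimpleGraph V} (hc : G.Connected)
    (hn : 2 ≤ Fintype.card V) (v : V) : (G.neighborSet v).Nonempty := by
  obtain ⟨u, hu⟩ := Fintype.exists_ne_of_one_lt_card (by omega) v
  obtain ⟨p⟩ := hc.preconnected v u
  cases p with
  | nil => exact absurd rfl hu.symm
  | cons h q => exact ⟨_, h⟩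

lemma myNoC4 {V : Type*} {G : SimpleGraph V} (hac : G.IsAcyclic) {v u w b : V}
    (hvu : v ≠ u) (hwb : w ≠ b) (hwu : w ≠ u) (hbu : b ≠ u)
    (h1 : G.Adj v w) (h2 : G.Adj u w) (h3 : G.Adj v b) (h4 : G.Adj u b) : False := by
  have huniq := isAcyclic_iff_path_unique.mp hac
    (⟨Walk.cons h1 (Walk.cons h2.symm Walk.nil), by
      simp [Walk.isPath_def, hvu, hwu, h1.ne, h1.ne']⟩ : G.Path v u)
    ⟨Walk.cons h3 (Walk.cons h4.symm Walk.nil), by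
      simp [Walk.isPath_def, hvu, hbu, h3.ne, h3.ne']⟩
  have hs := congrArg (fun p : G.Path v u => p.1.support) huniq
  simp at hs
  exact hwb hs

lemma myNoC3 {V : Type*} {G : SimpleGraph V} (hac : G.IsAcyclic) {v u w : V}
    (h1 : G.Adj v u) (h2 : G.Adj v w) (h3 : G.Adj u w) : False := by
  have huniq := isAcyclic_iff_path_unique.mp hac
    (⟨Walk.cons h1 Walk.nil, by simp [Walk.isPath_def, h1.ne]⟩ : G.Path v u)
    ⟨Walk.cons h2 (Walk.cons h3.symm Walk.nil), by
      simp [Walk.isPath_def, h1.ne, h3.ne', h2.ne, h2.ne']⟩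
  have hs := congrArg (fun p : G.Path v u => p.1.length) huniq
  simp at hs

-- the core contradiction for the forward direction
lemma myCore {V : Type*} [Fintype V] {G : SimpleGraph V} (hac : G.IsAcyclic) {v u : V}
    (hvu : v ≠ u) (hdeg : 2 ≤ (G.neighborSet v).ncard)
    (hpt : ∀ x, x ≠ v → x ≠ u → (G.Adj v x ↔ G.Adj u x)) : False := by
  -- get a neighbor of v distinct from u
  obtain ⟨a, ha, a', ha', haa'⟩ := (Set.one_lt_ncard (s := G.neighborSet v) (Set.toFinite _)).mp (by omega)
  have hnb : ∃ w, G.Adj v w ∧ w ≠ u := by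
    by_cases h : a = u
    · exact ⟨a', ha', fun he => haa' (h.trans he.symm)⟩
    · exact ⟨a, ha, h⟩
  obtain ⟨w, hvw, hwu⟩ := hnb
  have huw : G.Adj u w := (hpt w hvw.ne' hwu).mp hvw
  by_cases hb : ∃ b, G.Adj v b ∧ b ≠ u ∧ b ≠ w
  · obtain ⟨b, hvb, hbu, hbw⟩ := hb
    exact myNoC4 hac hvu (Ne.symm hbw) hwu hbu hvw huw hvb ((hpt b hvb.ne' hbu).mp hvb)
  · push_neg at hb
    -- every neighbor of v is u or w; with deg ≥ 2 get Adj v u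
    have hvu' : G.Adj v u := by
      by_cases h : a = u
      · exact h ▸ ha
      · have haw : a = w := hb a ha h
        have h' : a' = u := by
          by_contra h'
          exact haa' (haw.trans (hb a' ha' h').symm)
        exact h' ▸ ha'
    exact myNoC3 hac hvu' hvw huw

theorem stmt14 {V : Type*} [Fintype V] (G : SimpleGraph V) (hT : G.IsTree)
    (hn : 2 ≤ Fintype.card V) :
    (∀ S : Set V, IsRedLDSet G S → S = Set.univ) ↔
      (∀ v : V, IsLeaf G v ∨ IsSupport G v) := by
  constructor
  · intro hAll v
    by_contra h
    push_neg at h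
    obtain ⟨hleaf, hsupp⟩ := h
    have hnbr : ∀ x : V, (G.neighborSet x).Nonempty :=
      myNbrNonempty hT.isConnected hn
    have hdeg2 : 2 ≤ (G.neighborSet v).ncard := by
      have h1 : 0 < (G.neighborSet v).ncard :=
        (Set.ncard_pos (Set.toFinite _)).mpr (hnbr v)
      have h2 : (G.neighborSet v).ncard ≠ 1 := hleaf
      omega
    -- helper: for any u, v has a neighbor ≠ u
    have hnb2 : ∀ u : V, ∃ w, G.Adj v w ∧ w ≠ u := by
      intro u
      obtain ⟨a, ha, a', ha', haa'⟩ := (Set.one_lt_ncard (s := G.neighborSet v) (Set.toFinite _)).mp (by omega)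
      by_cases h : a = u
      · exact ⟨a', ha', fun he => haa' (h.trans he.symm)⟩
      · exact ⟨a, ha, h⟩
    have hRed : IsRedLDSet G ({v}ᶜ : Set V) := by
      constructor
      · constructor
        · intro x hx
          simp only [Set.mem_compl_iff, Set.mem_singleton_iff, not_not] at hx
          subst hx
          obtain ⟨w, hw⟩ := hnbr x
          exact ⟨w, hw, by simp [(hw : G.Adj x w).ne']⟩
        · intro a ha b hb hab
          simp only [Set.mem_compl_iff, Set.mem_singleton_iff, not_not] at ha hb
          exact absurd (ha.trans hb.symm) hab
      · intro u hu
        have huv : u ≠ v := by simpa using hu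
        constructor
        · intro x hx
          simp only [Set.mem_diff, Set.mem_compl_iff, Set.mem_singleton_iff, not_and,
            not_not] at hx
          by_cases hxv : x = v
          · subst hxv
            obtain ⟨w, hvw, hwu⟩ := hnb2 u
            exact ⟨w, hvw, by simp [hvw.ne', hwu]⟩
          · have hxu : x = u := hx hxv
            subst hxu
            -- x = u : need a neighbor of u that is not v
            have : ∃ w, G.Adj x w ∧ w ≠ v := by
              by_contra hcon
              push_neg at hcon
              obtain ⟨w, hw⟩ := hnbr x
              have hwv : w = v := hcon w hw
              subst hwv
              -- N(x) = {w}: every neighbor of x equals v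
              have hNx : G.neighborSet x = {w} := by
                ext y
                simp only [Set.mem_singleton_iff, mem_neighborSet]
                exact ⟨fun hy => hcon y hy, fun hy => hy ▸ hw⟩
              exact hsupp ⟨x, hw.symm, by simp [IsLeaf, hNx]⟩
            obtain ⟨w, hw, hwv⟩ := this
            exact ⟨w, hw, by simp [hwv, hw.ne']⟩
        · intro a ha b hb hab heq
          have hmem : ∀ y, y ∉ ({v}ᶜ \ {u} : Set V) → y = v ∨ y = u := by
            intro y hy
            simp only [Set.mem_diff, Set.mem_compl_iff, Set.mem_singleton_iff, not_and,
              not_not] at hy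
            by_cases h : y = v
            · exact Or.inl h
            · exact Or.inr (hy (by simpa using h))
          have key : ∀ p q : V, p = v → q = u →
              G.neighborSet p ∩ ({v}ᶜ \ {u}) = G.neighborSet q ∩ ({v}ᶜ \ {u}) → False := by
            rintro p q rfl rfl heq'
            refine myCore hT.IsAcyclic huv.symm hdeg2 ?_
            intro x hxv hxu
            have := Set.ext_iff.mp heq' x
            simpa [hxv, hxu] using this
          rcases hmem a ha with h1 | h1 <;> rcases hmem b hb with h2 | h2
          · exact hab (h1.trans h2.symm)
          · exact key a b h1 h2 heq
          · exact key b a h2 h1 heq.symm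
          · exact hab (h1.trans h2.symm)
    have := hAll _ hRed
    have hv : v ∈ ({v}ᶜ : Set V) := this ▸ Set.mem_univ v
    simp at hv
  · intro hLS S hS
    rw [Set.eq_univ_iff_forall]
    by_contra hcon
    push_neg at hcon
    obtain ⟨v, hv⟩ := hcon
    rcases hLS v with hleaf | hsupp
    · -- v leaf not in S: contradiction via redundancy at its neighbor
      obtain ⟨a, hNa⟩ := Set.ncard_eq_one.mp hleaf
      obtain ⟨w, hw, hwS⟩ := hS.1.1 v hv
      have hwa : w = a := by rw [hNa] at hw; simpa using hw
      subst hwa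
      obtain ⟨w', hw', hw'S⟩ := (hS.2 w hwS).1 v (by simp [hv])
      have : w' = w := by rw [hNa] at hw'; simpa using hw'
      subst this
      exact hw'S.2 rfl
    · obtain ⟨u, hvu, hu⟩ := hsupp
      obtain ⟨a, hNa⟩ := Set.ncard_eq_one.mp hu
      have hav : a = v := by
        have : v ∈ G.neighborSet u := hvu.symm
        rw [hNa] at this; simpa using this.symm
      subst hav
      by_cases huS : u ∈ S
      · obtain ⟨w, hw, hwS⟩ := (hS.2 u huS).1 u (by simp)
        rw [hNa] at hw
        simp only [Set.mem_singleton_iff] at hw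
        subst hw
        exact hv hwS.1
      · obtain ⟨w, hw, hwS⟩ := hS.1.1 u huS
        rw [hNa] at hw
        simp only [Set.mem_singleton_iff] at hw
        subst hw
        exact hv hwS
end

section
/- Let T be a tree on n ≥ 3 vertices in which every vertex is a leaf or a support vertex. Then there exists a leaf v ∈ V(T) such that in T − v every vertex is again a leaf or a support vertex. -/
open scoped symmDiff

/-! If every support vertex had exactly one leaf neighbour and degree at least 3, the leaves
would inject into the non-leaves, whereas the degree sum `2 (n - 1)` of a tree whose non-leaves
all have degree at least 3 forces at least two more leaves than non-leaves. Hence some leaf `v`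
has a support vertex `s` that carries a second leaf or has degree 2. Deleting `v` keeps `s` a
support vertex, resp. turns it into a leaf, and changes no other degree; as `s` is not a leaf
(two adjacent leaves would make up the whole tree), every other leaf and support vertex
survives. -/

namespace IsLeaf

variable {V : Type*} {G : SimpleGraph V} {v s x : V}

lemma neighborSet_eq (hv : IsLeaf G v) (hs : G.Adj v s) : G.neighborSet v = {s} := by
  obtain ⟨a, ha⟩ := Set.ncard_eq_one.mp hv
  have hs' : s ∈ G.neighborSet v := hs
  rw [ha, Set.mem_singleton_iff] at hs'
  rw [ha, hs']

lemma eq_of_adj (hv : IsLeaf G v) (hs : G.Adj v s) (hx : G.Adj v x) : x = s := by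
  have hx' : x ∈ G.neighborSet v := hx
  rwa [hv.neighborSet_eq hs] at hx'

lemma exists_adj (hv : IsLeaf G v) : ∃ s, G.Adj v s := by
  obtain ⟨a, ha⟩ := Set.ncard_eq_one.mp hv
  exact ⟨a, show a ∈ G.neighborSet v by simp [ha]⟩

lemma eq_or_eq_of_adj_isLeaf (hc : G.Preconnected) (hv : IsLeaf G v) (hs : IsLeaf G s)
    (hvs : G.Adj v s) (x : V) : x = v ∨ x = s := by
  by_contra hx
  obtain ⟨d, -, hd, hd'⟩ := (hc v x).some.exists_boundary_dart {v, s} (by simp) (by simpa using hx)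
  rcases hd with hd | hd <;> apply hd' <;> simp only [Set.mem_insert_iff, Set.mem_singleton_iff]
  · exact .inr (hv.eq_of_adj hvs (hd ▸ d.adj))
  · exact .inl (hs.eq_of_adj hvs.symm (hd ▸ d.adj))

lemma not_isLeaf_of_adj [Fintype V] (hc : G.Connected) (hn : 3 ≤ Fintype.card V)
    (hv : IsLeaf G v) (hvs : G.Adj v s) : ¬IsLeaf G s := by
  classical
  intro hs
  have hsub : (Finset.univ : Finset V) ⊆ {v, s} := fun x _ => by
    simpa using hv.eq_or_eq_of_adj_isLeaf hc.preconnected hs hvs x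
  have := (Finset.card_le_card hsub).trans (Finset.card_le_two (a := v) (b := s))
  rw [Finset.card_univ] at this
  omega

end IsLeaf

section Counting

variable {V : Type*} [Fintype V] {G : SimpleGraph V}

open Classical in
lemma ncard_isLeaf_le_ncard_not_isLeaf (hc : G.Connected) (hn : 3 ≤ Fintype.card V)
    (huniq : ∀ s u w, IsLeaf G u → IsLeaf G w → G.Adj s u → G.Adj s w → u = w) :
    {v | IsLeaf G v}.ncard ≤ {v | ¬IsLeaf G v}.ncard := by
  rw [← Finset.coe_filter_univ, ← Finset.coe_filter_univ, Set.ncard_coe_finset,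
    Set.ncard_coe_finset]
  refine Finset.card_le_card_of_forall_subsingleton G.Adj (fun v hv => ?_) fun s _ u hu w hw => ?_
  · rw [Finset.mem_filter_univ] at hv
    obtain ⟨s, hvs⟩ := hv.exists_adj
    exact ⟨s, (Finset.mem_filter_univ s).mpr (hv.not_isLeaf_of_adj hc hn hvs), hvs⟩
  · simp only [Set.mem_ofPred_eq, Finset.mem_filter_univ] at hu hw
    exact huniq s u w hu.1 hw.1 hu.2.symm hw.2.symm

open Classical in
lemma SimpleGraph.IsTree.ncard_not_isLeaf_add_two_le (hT : G.IsTree)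
    (hdeg : ∀ v, ¬IsLeaf G v → 3 ≤ (G.neighborSet v).ncard) :
    {v | ¬IsLeaf G v}.ncard + 2 ≤ {v | IsLeaf G v}.ncard := by
  rw [← Finset.coe_filter_univ, ← Finset.coe_filter_univ, Set.ncard_coe_finset,
    Set.ncard_coe_finset, ← Finset.compl_filter]
  set L := Finset.univ.filter (IsLeaf G)
  have hdeg' : ∀ v, (G.neighborSet v).ncard = G.degree v := fun v => by
    rw [Set.ncard_eq_toFinset_card', ← SimpleGraph.card_neighborSet_eq_degree, Set.toFinset_card]
  have hsum : ∑ v, (G.neighborSet v).ncard = 2 * G.edgeFinset.card := by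
    simp only [hdeg', G.sum_degrees_eq_twice_card_edges]
  have hedges := hT.card_edgeFinset
  have hleaves : ∑ v ∈ L, (G.neighborSet v).ncard = L.card := by
    rw [Finset.sum_eq_card_nsmul (fun v hv => ((Finset.mem_filter_univ v).mp hv : IsLeaf G v)),
      smul_eq_mul, mul_one]
  have hinner : Lᶜ.card * 3 ≤ ∑ v ∈ Lᶜ, (G.neighborSet v).ncard :=
    Finset.card_nsmul_le_sum _ _ _ fun v hv => hdeg v (by simpa [L] using hv)
  have hcard := Finset.card_add_card_compl L
  rw [← Finset.sum_add_sum_compl L, hleaves] at hsum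
  omega

end Counting

section DeleteVertex

variable {V : Type*} {G : SimpleGraph V} {v : V}

lemma ncard_neighborSet_induce (S : Set V) (x : S) :
    ((G.induce S).neighborSet x).ncard = (G.neighborSet x ∩ S).ncard := by
  rw [SimpleGraph.neighborSet_induce, ← Set.ncard_image_of_injective _ Subtype.val_injective,
    Subtype.image_preimage_coe, Set.inter_comm]

lemma ncard_neighborSet_induce_ne (x : {w : V | w ≠ v}) :
    ((G.induce {w | w ≠ v}).neighborSet x).ncard = (G.neighborSet x \ {v}).ncard :=
  ncard_neighborSet_induce _ x

lemma isLeaf_induce_ne_iff (x : {w : V | w ≠ v}) (hxv : ¬G.Adj x v) :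
    IsLeaf (G.induce {w | w ≠ v}) x ↔ IsLeaf G x := by
  rw [IsLeaf, IsLeaf, ncard_neighborSet_induce_ne,
    Set.sdiff_singleton_eq_self (show v ∉ G.neighborSet x from hxv)]

lemma isLeaf_induce_ne_of_ncard_eq_two (x : {w : V | w ≠ v}) (hxv : G.Adj x v)
    (hx : (G.neighborSet x).ncard = 2) : IsLeaf (G.induce {w | w ≠ v}) x := by
  rw [IsLeaf, ncard_neighborSet_induce_ne,
    Set.ncard_sdiff_singleton_of_mem (show v ∈ G.neighborSet x from hxv), hx]

end DeleteVertex

lemma SimpleGraph.IsTree.exists_isLeaf_adj_of_forall_isLeaf_or_isSupport {V : Type*} [Fintype V]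
    {G : SimpleGraph V} (hT : G.IsTree) (hn : 3 ≤ Fintype.card V)
    (hall : ∀ v, IsLeaf G v ∨ IsSupport G v) :
    ∃ v s, IsLeaf G v ∧ G.Adj v s ∧
      ((∃ u ≠ v, IsLeaf G u ∧ G.Adj s u) ∨ (G.neighborSet s).ncard = 2) := by
  by_contra! h
  have hdeg : ∀ s, ¬IsLeaf G s → 3 ≤ (G.neighborSet s).ncard := by
    intro s hs
    obtain ⟨u, hsu, hu⟩ := (hall s).resolve_left hs
    have hne_one : (G.neighborSet s).ncard ≠ 1 := hs
    have hne_two := (h u s hu hsu.symm).2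
    have hpos : 0 < (G.neighborSet s).ncard := (Set.ncard_pos (Set.toFinite _)).mpr ⟨u, hsu⟩
    omega
  have huniq : ∀ s u w, IsLeaf G u → IsLeaf G w → G.Adj s u → G.Adj s w → u = w := by
    intro s u w hu hw hsu hsw
    by_contra hne
    exact (h w s hw hsw.symm).1 u hne hu hsu
  have := ncard_isLeaf_le_ncard_not_isLeaf hT.connected hn huniq
  have := hT.ncard_not_isLeaf_add_two_le hdeg
  omega

theorem stmt16 {V : Type*} [Fintype V] (G : SimpleGraph V) (hT : G.IsTree)
    (hn : 3 ≤ Fintype.card V) (hall : ∀ v : V, IsLeaf G v ∨ IsSupport G v) :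
    ∃ v : V, IsLeaf G v ∧
      ∀ x : ({w : V | w ≠ v} : Set V),
        IsLeaf (G.induce {w : V | w ≠ v}) x ∨ IsSupport (G.induce {w : V | w ≠ v}) x := by
  obtain ⟨v, s, hv, hvs, hs⟩ := hT.exists_isLeaf_adj_of_forall_isLeaf_or_isSupport hn hall
  have hs_not_leaf := hv.not_isLeaf_of_adj hT.connected hn hvs
  have hadj_v : ∀ {x}, G.Adj x v → x = s := fun hx => hv.eq_of_adj hvs hx.symm
  refine ⟨v, hv, fun ⟨x, _⟩ => ?_⟩
  by_cases hxs : x = s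
  · subst hxs
    rcases hs with ⟨u, huv, hu, hxu⟩ | hdeg
    · have hu_not_adj : ¬G.Adj u v := fun h => G.ne_of_adj hxu (hadj_v h).symm
      exact .inr ⟨⟨u, huv⟩, hxu, (isLeaf_induce_ne_iff _ hu_not_adj).2 hu⟩
    · exact .inl (isLeaf_induce_ne_of_ncard_eq_two _ hvs.symm hdeg)
  · have hxv : ¬G.Adj x v := fun h => hxs (hadj_v h)
    rcases hall x with hx_leaf | ⟨u, hxu, hu⟩
    · exact .inl ((isLeaf_induce_ne_iff _ hxv).2 hx_leaf)
    · have hu_not_adj : ¬G.Adj u v := fun h => hs_not_leaf (hadj_v h ▸ hu)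
      exact .inr ⟨⟨u, fun h => hxv (h ▸ hxu)⟩, hxu, (isLeaf_induce_ne_iff _ hu_not_adj).2 hu⟩
end

section
/- Let T₁ and T₂ be trees with |V(T₁)| = 3k₁ + 2 and |V(T₂)| = 3k₂ + 2, each admitting a redundant locating-dominating set S₁, S₂ of sizes 2k₁ + 2 and 2k₂ + 2 respectively. Form T by adding a new vertex v adjacent to a vertex w₁ ∈ S₁ and a vertex w₂ ∈ S₂. Then |V(T)| = 3(k₁+k₂+1) + 2 and S₁ ∪ S₂ is a redundant locating-dominating set of T of size 2(k₁+k₂+1) + 2, which is minimum (equal to ⌈(2|V(T)|+2)/3⌉). -/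
open scoped symmDiff

/-! ### Auxiliary lemmas -/

lemma one_adj' {V : Type*} {G : SimpleGraph V} {S : Set V} (h : IsRedLDSet G S)
    {v : V} (hv : v ∈ S) : ∃ u ∈ S, G.Adj v u := by
  obtain ⟨u, hu⟩ := (h.2 v hv).1 v (fun h' => h'.2 rfl)
  exact ⟨u, hu.2.1, hu.1⟩

lemma two_adj' {V : Type*} {G : SimpleGraph V} {S : Set V} (h : IsRedLDSet G S)
    {v : V} (hv : v ∉ S) : ∃ u ∈ S, ∃ u' ∈ S, u ≠ u' ∧ G.Adj v u ∧ G.Adj v u' := by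
  obtain ⟨u, hu⟩ := h.1.1 v hv
  obtain ⟨u', hu'⟩ := (h.2 u hu.2).1 v (fun h' => hv h'.1)
  exact ⟨u, hu.2, u', hu'.2.1, fun e => hu'.2.2 (Set.mem_singleton_iff.mpr e.symm),
    hu.1, hu'.1⟩

lemma two_dets' {V : Type*} {G : SimpleGraph V} {S : Set V} (h : IsRedLDSet G S)
    {v : V} (hv : v ∉ S) {w : V} (hwS : w ∈ S) : G.neighborSet v ∩ S ≠ {w} := by
  intro he
  obtain ⟨u, hu⟩ := (h.2 w hwS).1 v (fun hv' => hv hv'.1)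
  have : u ∈ G.neighborSet v ∩ S := ⟨hu.1, hu.2.1⟩
  rw [he] at this
  exact hu.2.2 this

lemma red_count' {W : Type*} [Fintype W] [DecidableEq W] (T : SimpleGraph W)
    [DecidableRel T.Adj] (S : Finset W)
    (h1 : ∀ v ∈ S, ∃ u ∈ S, T.Adj v u)
    (h2 : ∀ v ∉ S, ∃ u ∈ S, ∃ u' ∈ S, u ≠ u' ∧ T.Adj v u ∧ T.Adj v u') :
    S.card + 4 * Sᶜ.card ≤ ∑ v : W, (Finset.univ.filter (T.Adj v)).card := by
  classical
  set dIn : W → ℕ := fun v => (S.filter (fun u => T.Adj v u)).card with hdIn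
  set dOut : W → ℕ := fun v => (Sᶜ.filter (fun u => T.Adj v u)).card with hdOut
  have hsplit : ∀ v, (Finset.univ.filter (T.Adj v)).card = dIn v + dOut v := by
    intro v
    rw [hdIn, hdOut]
    rw [← Finset.card_union_of_disjoint (Finset.disjoint_filter_filter disjoint_compl_right)]
    congr 1
    rw [← Finset.filter_union, Finset.union_compl]
  have hswap : ∑ v ∈ S, dOut v = ∑ u ∈ Sᶜ, dIn u := by
    simp only [hdIn, hdOut, Finset.card_filter]
    rw [Finset.sum_comm]
    refine Finset.sum_congr rfl fun u hu => Finset.sum_congr rfl fun v hv => ?_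
    exact if_congr (T.adj_comm v u) rfl rfl
  have hin1 : ∀ v ∈ S, 1 ≤ dIn v := by
    intro v hv
    obtain ⟨u, hu, hadj⟩ := h1 v hv
    exact Finset.card_pos.mpr ⟨u, Finset.mem_filter.mpr ⟨hu, hadj⟩⟩
  have hin2 : ∀ v ∈ Sᶜ, 2 ≤ dIn v := by
    intro v hv
    obtain ⟨u, hu, u', hu', hne, ha, ha'⟩ := h2 v (Finset.mem_compl.mp hv)
    exact Finset.one_lt_card.mpr ⟨u, Finset.mem_filter.mpr ⟨hu, ha⟩,
      u', Finset.mem_filter.mpr ⟨hu', ha'⟩, hne⟩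
  have key : ∑ v : W, (Finset.univ.filter (T.Adj v)).card
      = (∑ v ∈ S, dIn v + ∑ v ∈ S, dOut v) + (∑ v ∈ Sᶜ, dIn v + ∑ v ∈ Sᶜ, dOut v) := by
    rw [← Finset.sum_add_sum_compl S]
    simp only [hsplit, Finset.sum_add_distrib]
  have b1 : S.card ≤ ∑ v ∈ S, dIn v := by
    calc S.card = ∑ _v ∈ S, 1 := by simp
    _ ≤ _ := Finset.sum_le_sum hin1
  have b2 : 2 * Sᶜ.card ≤ ∑ v ∈ Sᶜ, dIn v := by
    calc 2 * Sᶜ.card = ∑ _v ∈ Sᶜ, 2 := by simp [mul_comm]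
    _ ≤ _ := Finset.sum_le_sum hin2
  rw [key, hswap]
  omega

section Glue

variable {V₁ V₂ : Type*} {G₁ : SimpleGraph V₁} {G₂ : SimpleGraph V₂} {w₁ : V₁} {w₂ : V₂}
  {T : SimpleGraph (Option (V₁ ⊕ V₂))}

lemma sdiff₁' (A : Set V₁) (B : Set V₂) (z : V₁) :
    (((fun a => some (Sum.inl a)) '' A ∪ (fun b => some (Sum.inr b)) '' B) :
        Set (Option (V₁ ⊕ V₂))) \ {some (Sum.inl z)}
      = (fun a => some (Sum.inl a)) '' (A \ {z}) ∪ (fun b => some (Sum.inr b)) '' B := by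
  ext u
  obtain _ | (a | b) := u <;> simp

lemma sdiff₂' (A : Set V₁) (B : Set V₂) (z : V₂) :
    (((fun a => some (Sum.inl a)) '' A ∪ (fun b => some (Sum.inr b)) '' B) :
        Set (Option (V₁ ⊕ V₂))) \ {some (Sum.inr z)}
      = (fun a => some (Sum.inl a)) '' A ∪ (fun b => some (Sum.inr b)) '' (B \ {z}) := by
  ext u
  obtain _ | (a | b) := u <;> simp

variable (hT : ∀ a b : Option (V₁ ⊕ V₂), T.Adj a b ↔
      ((∃ x y : V₁, a = some (Sum.inl x) ∧ b = some (Sum.inl y) ∧ G₁.Adj x y) ∨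
       (∃ x y : V₂, a = some (Sum.inr x) ∧ b = some (Sum.inr y) ∧ G₂.Adj x y) ∨
       (a = none ∧ (b = some (Sum.inl w₁) ∨ b = some (Sum.inr w₂))) ∨
       (b = none ∧ (a = some (Sum.inl w₁) ∨ a = some (Sum.inr w₂)))))

include hT

lemma trace₁' (A : Set V₁) (B : Set V₂) (x : V₁) :
    T.neighborSet (some (Sum.inl x)) ∩
        ((fun a => some (Sum.inl a)) '' A ∪ (fun b => some (Sum.inr b)) '' B)
      = (fun a => (some (Sum.inl a) : Option (V₁ ⊕ V₂))) '' (G₁.neighborSet x ∩ A) := by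
  ext u
  obtain _ | (a | b) := u
  · simp [SimpleGraph.mem_neighborSet]
  · simp [SimpleGraph.mem_neighborSet, hT, and_comm]
  · simp [SimpleGraph.mem_neighborSet, hT]

lemma trace₂' (A : Set V₁) (B : Set V₂) (y : V₂) :
    T.neighborSet (some (Sum.inr y)) ∩
        ((fun a => some (Sum.inl a)) '' A ∪ (fun b => some (Sum.inr b)) '' B)
      = (fun b => (some (Sum.inr b) : Option (V₁ ⊕ V₂))) '' (G₂.neighborSet y ∩ B) := by
  ext u
  obtain _ | (a | b) := u
  · simp [SimpleGraph.mem_neighborSet]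
  · simp [SimpleGraph.mem_neighborSet, hT]
  · simp [SimpleGraph.mem_neighborSet, hT, and_comm]

lemma trace_none' (A : Set V₁) (B : Set V₂) :
    T.neighborSet none ∩
        ((fun a => some (Sum.inl a)) '' A ∪ (fun b => some (Sum.inr b)) '' B)
      = (fun a => (some (Sum.inl a) : Option (V₁ ⊕ V₂))) '' ({w₁} ∩ A)
        ∪ (fun b => (some (Sum.inr b) : Option (V₁ ⊕ V₂))) '' ({w₂} ∩ B) := by
  ext u
  obtain _ | (a | b) := u
  · simp [SimpleGraph.mem_neighborSet]
  · simp [SimpleGraph.mem_neighborSet, hT, and_comm, eq_comm]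
  · simp [SimpleGraph.mem_neighborSet, hT, and_comm, eq_comm]

lemma glue_LD' (A : Set V₁) (B : Set V₂)
    (hA : IsLDSet G₁ A) (hB : IsLDSet G₂ B)
    (hw : (w₁ ∈ A ∧ w₂ ∈ B) ∨
          (w₂ ∈ B ∧ ∀ y ∉ B, G₂.neighborSet y ∩ B ≠ {w₂}) ∨
          (w₁ ∈ A ∧ ∀ x ∉ A, G₁.neighborSet x ∩ A ≠ {w₁})) :
    IsLDSet T ((fun a => some (Sum.inl a)) '' A ∪ (fun b => some (Sum.inr b)) '' B) := by
  have inj₁ : Function.Injective (fun a : V₁ => (some (Sum.inl a) : Option (V₁ ⊕ V₂))) := by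
    intro a b h; simpa using h
  have inj₂ : Function.Injective (fun b : V₂ => (some (Sum.inr b) : Option (V₁ ⊕ V₂))) := by
    intro a b h; simpa using h
  have mem₁ : ∀ x : V₁, ((some (Sum.inl x) : Option (V₁ ⊕ V₂)) ∈
      (fun a => some (Sum.inl a)) '' A ∪ (fun b => some (Sum.inr b)) '' B) ↔ x ∈ A := by
    intro x; simp
  have mem₂ : ∀ y : V₂, ((some (Sum.inr y) : Option (V₁ ⊕ V₂)) ∈
      (fun a => some (Sum.inl a)) '' A ∪ (fun b => some (Sum.inr b)) '' B) ↔ y ∈ B := by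
    intro y; simp
  have d11 : ∀ x ∉ A, ∀ x' ∉ A, x ≠ x' →
      T.neighborSet (some (Sum.inl x)) ∩ ((fun a => some (Sum.inl a)) '' A ∪ (fun b => some (Sum.inr b)) '' B)
        ≠ T.neighborSet (some (Sum.inl x')) ∩ ((fun a => some (Sum.inl a)) '' A ∪ (fun b => some (Sum.inr b)) '' B) := by
    intro x hx x' hx' hne
    rw [trace₁' hT, trace₁' hT]
    intro h
    exact hA.2 x hx x' hx' hne ((Set.image_injective.mpr inj₁) h)
  have d22 : ∀ y ∉ B, ∀ y' ∉ B, y ≠ y' →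
      T.neighborSet (some (Sum.inr y)) ∩ ((fun a => some (Sum.inl a)) '' A ∪ (fun b => some (Sum.inr b)) '' B)
        ≠ T.neighborSet (some (Sum.inr y')) ∩ ((fun a => some (Sum.inl a)) '' A ∪ (fun b => some (Sum.inr b)) '' B) := by
    intro y hy y' hy' hne
    rw [trace₂' hT, trace₂' hT]
    intro h
    exact hB.2 y hy y' hy' hne ((Set.image_injective.mpr inj₂) h)
  have d12 : ∀ x ∉ A, ∀ y ∉ B,
      T.neighborSet (some (Sum.inl x)) ∩ ((fun a => some (Sum.inl a)) '' A ∪ (fun b => some (Sum.inr b)) '' B)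
        ≠ T.neighborSet (some (Sum.inr y)) ∩ ((fun a => some (Sum.inl a)) '' A ∪ (fun b => some (Sum.inr b)) '' B) := by
    intro x hx y hy
    rw [trace₁' hT, trace₂' hT]
    intro h
    obtain ⟨a, ha⟩ := hA.1 x hx
    have : (some (Sum.inl a) : Option (V₁ ⊕ V₂)) ∈
        (fun b => (some (Sum.inr b) : Option (V₁ ⊕ V₂))) '' (G₂.neighborSet y ∩ B) :=
      h ▸ ⟨a, ha, rfl⟩
    obtain ⟨b, -, hb⟩ := this
    simp at hb
  have d1n : ∀ x ∉ A,
      T.neighborSet (some (Sum.inl x)) ∩ ((fun a => some (Sum.inl a)) '' A ∪ (fun b => some (Sum.inr b)) '' B)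
        ≠ T.neighborSet none ∩ ((fun a => some (Sum.inl a)) '' A ∪ (fun b => some (Sum.inr b)) '' B) := by
    intro x hx
    rw [trace₁' hT, trace_none' hT]
    intro h
    by_cases hw2 : w₂ ∈ B
    · have : (some (Sum.inr w₂) : Option (V₁ ⊕ V₂)) ∈
          (fun a => (some (Sum.inl a) : Option (V₁ ⊕ V₂))) '' (G₁.neighborSet x ∩ A) := by
        rw [h]; exact Or.inr ⟨w₂, ⟨rfl, hw2⟩, rfl⟩
      obtain ⟨a, -, ha⟩ := this
      simp at ha
    · rcases hw with ⟨-, h2⟩ | ⟨h2, -⟩ | ⟨h1, hcond⟩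
      · exact hw2 h2
      · exact hw2 h2
      · have hBe : ({w₂} : Set V₂) ∩ B = ∅ := by
          ext b; simp only [Set.mem_inter_iff, Set.mem_singleton_iff, Set.mem_empty_iff_false,
            iff_false, not_and]
          rintro rfl; exact hw2
        have h1A : ({w₁} : Set V₁) ∩ A = {w₁} :=
          Set.inter_eq_left.mpr (Set.singleton_subset_iff.mpr h1)
        rw [hBe, h1A, Set.image_empty, Set.union_empty] at h
        exact hcond x hx ((Set.image_injective.mpr inj₁) h)
  have d2n : ∀ y ∉ B,
      T.neighborSet (some (Sum.inr y)) ∩ ((fun a => some (Sum.inl a)) '' A ∪ (fun b => some (Sum.inr b)) '' B)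
        ≠ T.neighborSet none ∩ ((fun a => some (Sum.inl a)) '' A ∪ (fun b => some (Sum.inr b)) '' B) := by
    intro y hy
    rw [trace₂' hT, trace_none' hT]
    intro h
    by_cases hw1 : w₁ ∈ A
    · have : (some (Sum.inl w₁) : Option (V₁ ⊕ V₂)) ∈
          (fun b => (some (Sum.inr b) : Option (V₁ ⊕ V₂))) '' (G₂.neighborSet y ∩ B) := by
        rw [h]; exact Or.inl ⟨w₁, ⟨rfl, hw1⟩, rfl⟩
      obtain ⟨b, -, hb⟩ := this
      simp at hb
    · rcases hw with ⟨h1, -⟩ | ⟨h2, hcond⟩ | ⟨h1, -⟩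
      · exact hw1 h1
      · have hAe : ({w₁} : Set V₁) ∩ A = ∅ := by
          ext a; simp only [Set.mem_inter_iff, Set.mem_singleton_iff, Set.mem_empty_iff_false,
            iff_false, not_and]
          rintro rfl; exact hw1
        have h2B : ({w₂} : Set V₂) ∩ B = {w₂} :=
          Set.inter_eq_left.mpr (Set.singleton_subset_iff.mpr h2)
        rw [hAe, h2B, Set.image_empty, Set.empty_union] at h
        exact hcond y hy ((Set.image_injective.mpr inj₂) h)
      · exact hw1 h1
  constructor
  · intro v hv
    obtain _ | (x | y) := v
    · rw [trace_none' hT]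
      rcases hw with ⟨h1, -⟩ | ⟨h2, -⟩ | ⟨h1, -⟩
      · exact ⟨some (Sum.inl w₁), Or.inl ⟨w₁, ⟨rfl, h1⟩, rfl⟩⟩
      · exact ⟨some (Sum.inr w₂), Or.inr ⟨w₂, ⟨rfl, h2⟩, rfl⟩⟩
      · exact ⟨some (Sum.inl w₁), Or.inl ⟨w₁, ⟨rfl, h1⟩, rfl⟩⟩
    · rw [trace₁' hT]
      exact (hA.1 x (fun h => hv ((mem₁ x).mpr h))).image _
    · rw [trace₂' hT]
      exact (hB.1 y (fun h => hv ((mem₂ y).mpr h))).image _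
  · intro u hu v hv hne
    obtain _ | (x | y) := u <;> obtain _ | (x' | y') := v
    · exact absurd rfl hne
    · exact (d1n x' (fun h => hv ((mem₁ x').mpr h))).symm
    · exact (d2n y' (fun h => hv ((mem₂ y').mpr h))).symm
    · exact d1n x (fun h => hu ((mem₁ x).mpr h))
    · exact d11 x (fun h => hu ((mem₁ x).mpr h)) x' (fun h => hv ((mem₁ x').mpr h))
        (fun e => hne (by rw [e]))
    · exact d12 x (fun h => hu ((mem₁ x).mpr h)) y' (fun h => hv ((mem₂ y').mpr h))
    · exact d2n y (fun h => hu ((mem₂ y).mpr h))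
    · exact (d12 x' (fun h => hv ((mem₁ x').mpr h)) y (fun h => hu ((mem₂ y).mpr h))).symm
    · exact d22 y (fun h => hu ((mem₂ y).mpr h)) y' (fun h => hv ((mem₂ y').mpr h))
        (fun e => hne (by rw [e]))

end Glue

theorem stmt18 {V₁ V₂ : Type*} [Fintype V₁] [Fintype V₂]
    (G₁ : SimpleGraph V₁) (G₂ : SimpleGraph V₂) (hT₁ : G₁.IsTree) (hT₂ : G₂.IsTree)
    (k₁ k₂ : ℕ) (hcard₁ : Fintype.card V₁ = 3 * k₁ + 2) (hcard₂ : Fintype.card V₂ = 3 * k₂ + 2)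
    (S₁ : Set V₁) (S₂ : Set V₂)
    (hS₁ : IsRedLDSet G₁ S₁) (hS₂ : IsRedLDSet G₂ S₂)
    (hs₁ : S₁.ncard = 2 * k₁ + 2) (hs₂ : S₂.ncard = 2 * k₂ + 2)
    (w₁ : V₁) (w₂ : V₂) (hw₁ : w₁ ∈ S₁) (hw₂ : w₂ ∈ S₂)
    -- `T` is obtained from the disjoint union of `G₁` and `G₂` by adding a new
    -- vertex (`none`) adjacent exactly to `w₁` and `w₂`:
    (T : SimpleGraph (Option (V₁ ⊕ V₂)))
    (hT : ∀ a b : Option (V₁ ⊕ V₂), T.Adj a b ↔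
      ((∃ x y : V₁, a = some (Sum.inl x) ∧ b = some (Sum.inl y) ∧ G₁.Adj x y) ∨
       (∃ x y : V₂, a = some (Sum.inr x) ∧ b = some (Sum.inr y) ∧ G₂.Adj x y) ∨
       (a = none ∧ (b = some (Sum.inl w₁) ∨ b = some (Sum.inr w₂))) ∨
       (b = none ∧ (a = some (Sum.inl w₁) ∨ a = some (Sum.inr w₂))))) :
    Fintype.card (Option (V₁ ⊕ V₂)) = 3 * (k₁ + k₂ + 1) + 2 ∧
    IsRedLDSet T ((fun x => some (Sum.inl x)) '' S₁ ∪ (fun x => some (Sum.inr x)) '' S₂) ∧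
    ((fun x => some (Sum.inl x)) '' S₁ ∪ (fun x => some (Sum.inr x)) '' S₂).ncard
      = 2 * (k₁ + k₂ + 1) + 2 ∧
    2 * (k₁ + k₂ + 1) + 2 = (2 * Fintype.card (Option (V₁ ⊕ V₂)) + 4) / 3 ∧
    (∀ S' : Set (Option (V₁ ⊕ V₂)), IsRedLDSet T S' →
      2 * (k₁ + k₂ + 1) + 2 ≤ S'.ncard) := by
  classical
  have hcardW : Fintype.card (Option (V₁ ⊕ V₂)) = 3 * (k₁ + k₂ + 1) + 2 := by
    rw [Fintype.card_option, Fintype.card_sum, hcard₁, hcard₂]; ring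
  have inj₁ : Function.Injective (fun a : V₁ => (some (Sum.inl a) : Option (V₁ ⊕ V₂))) := by
    intro a b h; simpa using h
  have inj₂ : Function.Injective (fun b : V₂ => (some (Sum.inr b) : Option (V₁ ⊕ V₂))) := by
    intro a b h; simpa using h
  refine ⟨hcardW, ⟨?_, ?_⟩, ?_, ?_, ?_⟩
  · exact glue_LD' hT S₁ S₂ hS₁.1 hS₂.1 (Or.inl ⟨hw₁, hw₂⟩)
  · rintro v (⟨z, hz, rfl⟩ | ⟨z, hz, rfl⟩)
    · rw [sdiff₁']
      refine glue_LD' hT _ _ (hS₁.2 z hz) hS₂.1 ?_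
      by_cases hzw : z = w₁
      · subst hzw
        exact Or.inr (Or.inl ⟨hw₂, fun y hy => two_dets' hS₂ hy hw₂⟩)
      · exact Or.inl ⟨⟨hw₁, fun e => hzw (Set.mem_singleton_iff.mp e).symm⟩, hw₂⟩
    · rw [sdiff₂']
      refine glue_LD' hT _ _ hS₁.1 (hS₂.2 z hz) ?_
      by_cases hzw : z = w₂
      · subst hzw
        exact Or.inr (Or.inr ⟨hw₁, fun x hx => two_dets' hS₁ hx hw₁⟩)
      · exact Or.inl ⟨hw₁, ⟨hw₂, fun e => hzw (Set.mem_singleton_iff.mp e).symm⟩⟩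
  · have hdisj : Disjoint ((fun a : V₁ => (some (Sum.inl a) : Option (V₁ ⊕ V₂))) '' S₁)
        ((fun b : V₂ => (some (Sum.inr b) : Option (V₁ ⊕ V₂))) '' S₂) := by
      rw [Set.disjoint_left]
      rintro _ ⟨a, -, rfl⟩ ⟨b, -, hb⟩
      simp at hb
    rw [Set.ncard_union_eq hdisj, Set.ncard_image_of_injective _ inj₁,
      Set.ncard_image_of_injective _ inj₂, hs₁, hs₂]
    ring
  · rw [hcardW]; omega
  · intro S' hS'
    -- degree computations
    have deg_none : (Finset.univ.filter (T.Adj none)).card = 2 := by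
      have he : Finset.univ.filter (T.Adj none)
          = {some (Sum.inl w₁), some (Sum.inr w₂)} := by
        ext u; simp [hT]
      rw [he]
      rw [Finset.card_pair (by simp)]
    have deg_inl : ∀ x : V₁, (Finset.univ.filter (T.Adj (some (Sum.inl x)))).card
        = (Finset.univ.filter (G₁.Adj x)).card + (if x = w₁ then 1 else 0) := by
      intro x
      by_cases hx : x = w₁
      · have he : Finset.univ.filter (T.Adj (some (Sum.inl x)))
            = insert none ((Finset.univ.filter (G₁.Adj x)).image
                (fun a => (some (Sum.inl a) : Option (V₁ ⊕ V₂)))) := by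
          ext u
          obtain _ | (a | b) := u <;> simp [hT, hx]
        rw [he, Finset.card_insert_of_notMem (by simp),
          Finset.card_image_of_injective _ inj₁, if_pos hx]
      · have he : Finset.univ.filter (T.Adj (some (Sum.inl x)))
            = (Finset.univ.filter (G₁.Adj x)).image
                (fun a => (some (Sum.inl a) : Option (V₁ ⊕ V₂))) := by
          ext u
          obtain _ | (a | b) := u <;> simp [hT, hx]
        rw [he, Finset.card_image_of_injective _ inj₁, if_neg hx]
        omega
    have deg_inr : ∀ y : V₂, (Finset.univ.filter (T.Adj (some (Sum.inr y)))).card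
        = (Finset.univ.filter (G₂.Adj y)).card + (if y = w₂ then 1 else 0) := by
      intro y
      by_cases hy : y = w₂
      · have he : Finset.univ.filter (T.Adj (some (Sum.inr y)))
            = insert none ((Finset.univ.filter (G₂.Adj y)).image
                (fun b => (some (Sum.inr b) : Option (V₁ ⊕ V₂)))) := by
          ext u
          obtain _ | (a | b) := u <;> simp [hT, hy]
        rw [he, Finset.card_insert_of_notMem (by simp),
          Finset.card_image_of_injective _ inj₂, if_pos hy]
      · have he : Finset.univ.filter (T.Adj (some (Sum.inr y)))
            = (Finset.univ.filter (G₂.Adj y)).image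
                (fun b => (some (Sum.inr b) : Option (V₁ ⊕ V₂))) := by
          ext u
          obtain _ | (a | b) := u <;> simp [hT, hy]
        rw [he, Finset.card_image_of_injective _ inj₂, if_neg hy]
        omega
    have hfil₁ : ∑ x : V₁, (Finset.univ.filter (G₁.Adj x)).card = 2 * G₁.edgeFinset.card := by
      rw [← SimpleGraph.sum_degrees_eq_twice_card_edges]
      refine Finset.sum_congr rfl fun x _ => ?_
      rw [← SimpleGraph.neighborFinset_eq_filter]
      rfl
    have hfil₂ : ∑ y : V₂, (Finset.univ.filter (G₂.Adj y)).card = 2 * G₂.edgeFinset.card := by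
      rw [← SimpleGraph.sum_degrees_eq_twice_card_edges]
      refine Finset.sum_congr rfl fun y _ => ?_
      rw [← SimpleGraph.neighborFinset_eq_filter]
      rfl
    have he₁ : G₁.edgeFinset.card + 1 = Fintype.card V₁ := hT₁.card_edgeFinset
    have he₂ : G₂.edgeFinset.card + 1 = Fintype.card V₂ := hT₂.card_edgeFinset
    have hdeg : ∑ v : Option (V₁ ⊕ V₂), (Finset.univ.filter (T.Adj v)).card
        = 2 * Fintype.card V₁ + 2 * Fintype.card V₂ := by
      rw [Fintype.sum_option, Fintype.sum_sum_type]
      simp only [deg_inl, deg_inr, deg_none, Finset.sum_add_distrib, hfil₁, hfil₂]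
      rw [Finset.sum_ite_eq' Finset.univ w₁ (fun _ => 1),
        Finset.sum_ite_eq' Finset.univ w₂ (fun _ => 1)]
      simp only [Finset.mem_univ, if_pos]
      omega
    have h1' : ∀ v ∈ S'.toFinset, ∃ u ∈ S'.toFinset, T.Adj v u := by
      intro v hv
      obtain ⟨u, hu, ha⟩ := one_adj' hS' (Set.mem_toFinset.mp hv)
      exact ⟨u, Set.mem_toFinset.mpr hu, ha⟩
    have h2' : ∀ v ∉ S'.toFinset, ∃ u ∈ S'.toFinset, ∃ u' ∈ S'.toFinset,
        u ≠ u' ∧ T.Adj v u ∧ T.Adj v u' := by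
      intro v hv
      obtain ⟨u, hu, u', hu', hne, ha, ha'⟩ := two_adj' hS' (fun h => hv (Set.mem_toFinset.mpr h))
      exact ⟨u, Set.mem_toFinset.mpr hu, u', Set.mem_toFinset.mpr hu', hne, ha, ha'⟩
    have hle := red_count' T S'.toFinset h1' h2'
    rw [hdeg] at hle
    have hcompl : S'.toFinsetᶜ.card
        = Fintype.card (Option (V₁ ⊕ V₂)) - S'.toFinset.card := Finset.card_compl _
    have hub : S'.toFinset.card ≤ Fintype.card (Option (V₁ ⊕ V₂)) := Finset.card_le_univ _
    rw [Set.ncard_eq_toFinset_card']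
    rw [hcompl] at hle
    rw [hcardW] at hcompl hub
    omega
end

section
/- Let T be a complete k-ary tree of depth d with k ≥ 2. Then the minimum cardinality of a redundant locating-dominating set of T is: k+1 if d = 1; k² + k if d = 2; k³ + k² + 2 if d = 3; and for d ≥ 4 it satisfies RED:LD(T_d) = RED:LD(T_{d-3}) + k^d + k^{d-1}, where T_{d-3} is the complete k-ary tree of depth d−3. -/
open scoped symmDiff

/-- Vertices of the complete k-ary tree of depth d: sequences over `Fin k`
of length at most `d` (the root is the empty sequence). -/
def KVert (k d : ℕ) : Type :=
  Σ i : Fin (d + 1), List.Vector (Fin k) i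

instance (k d : ℕ) : Fintype (KVert k d) := by unfold KVert; infer_instance

/-- The complete k-ary tree of depth d: each vertex of depth `< d` has `k`
children, obtained by prepending a symbol to its sequence. -/
def karyTree (k d : ℕ) : SimpleGraph (KVert k d) where
  Adj a b := (∃ x : Fin k, a.2.toList = x :: b.2.toList) ∨
    (∃ x : Fin k, b.2.toList = x :: a.2.toList)
  symm := ⟨by rintro a b (h | h); exacts [Or.inr h, Or.inl h]⟩
  loopless := ⟨by
    rintro a (⟨x, h⟩ | ⟨x, h⟩) <;>
      · have := congrArg List.length h
        simp at this⟩

/-- The set of cardinalities of RED:LD sets of the complete k-ary tree of depth d. -/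
def redldCards (k d : ℕ) : Set ℕ :=
  {m : ℕ | ∃ S : Set (KVert k d), IsRedLDSet (karyTree k d) S ∧ S.ncard = m}


/-!
Every RED:LD set contains the two deepest levels, i.e. all leaves and support vertices: a leaf
outside `S` has no detector below it, and if a support vertex is outside `S` then the closed
neighbourhood of one of its leaf children holds fewer than two detectors. Conversely, a set
containing the two deepest levels is RED:LD as soon as it is LD and stays LD after deleting any
shallower vertex. This settles depths one and two; in depth three the closed neighbourhood of
the root needs two further detectors, and the root with one of its children suffices.

For depth `d + 4`, a RED:LD set `E` of the tree of depth `d + 1` sits in the first `d + 2`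
levels; adding the two deepest levels and leaving level `d + 2` empty gives a RED:LD set of size
`|E| + k^(d+4) + k^(d+3)`. Conversely, a RED:LD set `S` of depth `d + 4` pulls back, after
filling in the two deepest levels of the smaller tree, to a RED:LD set of depth `d + 1`. This
costs `k^(d+1) + k^d`, which is at most what `S` spends on levels `d`, `d + 1`, `d + 2`: every
vertex `c` of depth `d + 1` has a detector among `c` and its children, and a second one
whenever its parent is not a detector.
-/

section LocatingDominating

variable {V : Type*} {G : SimpleGraph V} {S T : Set V}

def HasPrivateNeighbor (G : SimpleGraph V) (T : Set V) (v : V) : Prop :=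
  ∃ c ∈ T, G.Adj v c ∧ ∀ w ∉ T, G.Adj w c → w = v

theorem isLDSet_of_hasPrivateNeighbor (P : V → Prop)
    (hpriv : ∀ v ∉ T, ¬ P v → HasPrivateNeighbor G T v)
    (hdom : ∀ v ∉ T, P v → (G.neighborSet v ∩ T).Nonempty)
    (hsep : ∀ u ∉ T, ∀ v ∉ T, P u → P v → u ≠ v →
      G.neighborSet u ∩ T ≠ G.neighborSet v ∩ T) :
    IsLDSet G T := by
  have key : ∀ u ∉ T, ∀ v ∉ T, ¬ P u → u ≠ v →
      G.neighborSet u ∩ T ≠ G.neighborSet v ∩ T := by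
    intro u hu v hv hPu huv htr
    obtain ⟨c, hcT, huc, hc⟩ := hpriv u hu hPu
    have hvc : c ∈ G.neighborSet v ∩ T := htr ▸ ⟨huc, hcT⟩
    exact huv (hc v hv hvc.1).symm
  refine ⟨fun v hv => ?_, fun u hu v hv huv => ?_⟩
  · by_cases hP : P v
    · exact hdom v hv hP
    · obtain ⟨c, hcT, hvc, -⟩ := hpriv v hv hP
      exact ⟨c, hvc, hcT⟩
  · by_cases hPu : P u
    · by_cases hPv : P v
      · exact hsep u hu v hv hPu hPv huv
      · exact (key v hv u hu hPv huv.symm).symm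
    · exact key u hu v hv hPu huv

theorem neighborSet_inter_sdiff_singleton {v z : V} (h : ¬ G.Adj v z) :
    G.neighborSet v ∩ (T \ {z}) = G.neighborSet v ∩ T := by
  ext w
  simp only [Set.mem_inter_iff, SimpleGraph.mem_neighborSet, Set.mem_sdiff,
    Set.mem_singleton_iff]
  exact ⟨fun hw => ⟨hw.1, hw.2.1⟩, fun hw => ⟨hw.1, hw.2, fun hwz => h (hwz ▸ hw.1)⟩⟩

theorem IsRedLDSet.nontrivial_inter_insert_neighborSet (hS : IsRedLDSet G S) (v : V) :
    (S ∩ insert v (G.neighborSet v)).Nontrivial := by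
  by_cases hv : v ∈ S
  · obtain ⟨a, hva, haS, hav⟩ := (hS.2 v hv).1 v (by simp)
    exact ⟨v, ⟨hv, Set.mem_insert v _⟩, a, ⟨haS, Set.mem_insert_of_mem v hva⟩, Ne.symm hav⟩
  · obtain ⟨a, hva, haS⟩ := hS.1.1 v hv
    obtain ⟨b, hvb, hbS, hba⟩ := (hS.2 a haS).1 v (fun h => hv h.1)
    exact ⟨a, ⟨haS, Set.mem_insert_of_mem v hva⟩, b, ⟨hbS, Set.mem_insert_of_mem v hvb⟩,
      Ne.symm hba⟩

end LocatingDominating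

namespace KVert

variable {k d : ℕ}

def toList (v : KVert k d) : List (Fin k) := v.2.toList

def depth (v : KVert k d) : ℕ := v.toList.length

theorem ext_toList {v w : KVert k d} (h : v.toList = w.toList) : v = w := by
  obtain ⟨⟨i, hi⟩, l, hl⟩ := v
  obtain ⟨⟨j, hj⟩, m, hm⟩ := w
  simp only [toList, List.Vector.toList] at h
  subst h
  obtain rfl : i = j := hl.symm.trans hm
  rfl

theorem depth_le (v : KVert k d) : v.depth ≤ d := by
  rw [depth, toList, v.2.toList_length]
  exact Nat.lt_succ_iff.mp v.1.isLt

def ofList (l : List (Fin k)) (h : l.length ≤ d) : KVert k d :=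
  ⟨⟨l.length, Nat.lt_succ_of_le h⟩, ⟨l, rfl⟩⟩

theorem eq_of_depth_eq_zero {u v : KVert k d} (hu : u.depth = 0) (hv : v.depth = 0) :
    u = v :=
  ext_toList <| by rw [List.length_eq_zero_iff.mp hu, List.length_eq_zero_iff.mp hv]

def children (v : KVert k d) : Set (KVert k d) := {w | ∃ x, w.toList = x :: v.toList}

theorem depth_of_mem_children {v w : KVert k d} (h : w ∈ v.children) :
    w.depth = v.depth + 1 := by
  obtain ⟨x, hx⟩ := h
  simp [depth, hx]

theorem eq_of_mem_children_of_mem_children {u v w : KVert k d} (hu : w ∈ u.children)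
    (hv : w ∈ v.children) : u = v := by
  obtain ⟨x, hx⟩ := hu
  obtain ⟨y, hy⟩ := hv
  exact ext_toList (List.cons_eq_cons.mp (hx.symm.trans hy)).2

def parent (v : KVert k d) : KVert k d :=
  ofList v.toList.tail (by rw [List.length_tail]; exact v.depth_le.trans' (Nat.sub_le _ 1))

theorem mem_children_parent {v : KVert k d} (hv : v.depth ≠ 0) : v ∈ v.parent.children := by
  have hne : v.toList ≠ [] := fun h => hv (by simp [depth, h])
  exact ⟨v.toList.head hne, (List.cons_head_tail hne).symm⟩

theorem parent_eq_of_mem_children {v w : KVert k d} (h : v ∈ w.children) : v.parent = w :=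
  eq_of_mem_children_of_mem_children
    (mem_children_parent (by rw [depth_of_mem_children h]; omega)) h

theorem adj_parent {v : KVert k d} (hv : v.depth ≠ 0) : (karyTree k d).Adj v v.parent :=
  Or.inl (mem_children_parent hv)

theorem mem_children_or_eq_parent_of_adj {v w : KVert k d} (h : (karyTree k d).Adj v w) :
    w ∈ v.children ∨ w = v.parent :=
  h.elim (fun h => Or.inr (parent_eq_of_mem_children h).symm) Or.inl

theorem depth_of_adj {v w : KVert k d} (h : (karyTree k d).Adj v w) :
    v.depth = w.depth + 1 ∨ w.depth = v.depth + 1 :=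
  h.imp depth_of_mem_children depth_of_mem_children

theorem eq_parent_of_adj_of_depth_eq {v w : KVert k d} (hv : v.depth = d)
    (h : (karyTree k d).Adj v w) : w = v.parent :=
  (mem_children_or_eq_parent_of_adj h).resolve_left fun hw => by
    have := w.depth_le
    rw [depth_of_mem_children hw] at this
    omega

theorem children_nontrivial (hk : 2 ≤ k) {v : KVert k d} (hv : v.depth < d) :
    v.children.Nontrivial :=
  ⟨ofList (⟨0, by omega⟩ :: v.toList) hv, ⟨_, rfl⟩, ofList (⟨1, by omega⟩ :: v.toList) hv,
    ⟨_, rfl⟩, fun h => by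
      have := congrArg toList h
      simp [ofList, toList] at this⟩

theorem children_nonempty (hk : 0 < k) {v : KVert k d} (hv : v.depth < d) :
    v.children.Nonempty :=
  ⟨ofList (⟨0, hk⟩ :: v.toList) hv, ⟨_, rfl⟩⟩

theorem depth_parent (v : KVert k d) : v.parent.depth = v.depth - 1 :=
  List.length_tail

theorem parent_ne_self {v : KVert k d} (hv : v.depth ≠ 0) : v.parent ≠ v := fun h => by
  have := congrArg depth h
  rw [depth_parent] at this
  omega

theorem ncard_setOf_depth_eq {j : ℕ} (hj : j ≤ d) :
    {v : KVert k d | v.depth = j}.ncard = k ^ j := by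
  let e : {v : KVert k d | v.depth = j} ≃ List.Vector (Fin k) j :=
    { toFun := fun v => ⟨v.1.toList, v.2⟩
      invFun := fun l => ⟨ofList l.toList (l.toList_length.trans_le hj), l.toList_length⟩
      left_inv := fun v => Subtype.ext (ext_toList rfl)
      right_inv := fun l => List.Vector.toList_injective rfl }
  rw [← Nat.card_coe_set_eq, Nat.card_congr e, Nat.card_eq_fintype_card, card_vector,
    Fintype.card_fin]

def deepLevels (k d : ℕ) : Set (KVert k d) := {v | d ≤ v.depth + 1}

theorem mem_deepLevels_iff {v : KVert k d} : v ∈ deepLevels k d ↔ d ≤ v.depth + 1 := Iff.rfl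

theorem ncard_deepLevels {j : ℕ} (hj : j + 1 = d) :
    (deepLevels k d).ncard = k ^ d + k ^ j := by
  have hsplit : deepLevels k d = {v | v.depth = d} ∪ {v | v.depth = j} := by
    ext v
    have := v.depth_le
    simp only [deepLevels, Set.mem_ofPred_eq, Set.mem_union]
    omega
  rw [hsplit, Set.ncard_union_eq, ncard_setOf_depth_eq le_rfl, ncard_setOf_depth_eq (by omega)]
  exact Set.disjoint_left.2 fun v h1 h2 => by
    simp only [Set.mem_ofPred_eq] at h1 h2
    omega

section CastLE

variable {d' : ℕ} (h : d ≤ d')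

def castLE (v : KVert k d) : KVert k d' := ofList v.toList (v.depth_le.trans h)

@[simp] theorem depth_castLE (v : KVert k d) : (castLE h v).depth = v.depth := rfl

theorem castLE_injective : Function.Injective (castLE (k := k) h) :=
  fun _ _ hvw => ext_toList (congrArg toList hvw :)

theorem adj_castLE_iff {v w : KVert k d} :
    (karyTree k d').Adj (castLE h v) (castLE h w) ↔ (karyTree k d).Adj v w :=
  Iff.rfl

theorem exists_castLE_eq {x : KVert k d'} (hx : x.depth ≤ d) : ∃ v, castLE h v = x :=
  ⟨ofList x.toList hx, ext_toList rfl⟩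

theorem neighborSet_castLE_inter {A : Set (KVert k d)} {B : Set (KVert k d')}
    {v : KVert k d} (hAB : ∀ x : KVert k d', x.depth ≤ v.depth + 1 → (x ∈ B ↔ x ∈ castLE h '' A)) :
    (karyTree k d').neighborSet (castLE h v) ∩ B =
      castLE h '' ((karyTree k d).neighborSet v ∩ A) := by
  ext x
  constructor
  · rintro ⟨hvx, hxB⟩
    have hx : x.depth ≤ v.depth + 1 := by
      rcases depth_of_adj hvx with hx | hx <;> simp only [depth_castLE] at hx <;> omega
    obtain ⟨w, hwA, rfl⟩ := (hAB x hx).1 hxB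
    exact ⟨w, ⟨(adj_castLE_iff h).1 hvx, hwA⟩, rfl⟩
  · rintro ⟨w, ⟨hvw, hwA⟩, rfl⟩
    have hw : w.depth ≤ v.depth + 1 := by rcases depth_of_adj hvw with hw | hw <;> omega
    exact ⟨(adj_castLE_iff h).2 hvw, (hAB _ hw).2 ⟨w, hwA, rfl⟩⟩

end CastLE

section Detectors

variable {S : Set (KVert k d)}

theorem _root_.IsRedLDSet.exists_mem_children (hS : IsRedLDSet (karyTree k d) S) {v : KVert k d}
    (hv : v ∉ S) : ∃ c ∈ v.children, c ∈ S := by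
  obtain ⟨a, ⟨haS, ha⟩, b, ⟨hbS, hb⟩, hab⟩ := hS.nontrivial_inter_insert_neighborSet v
  have hadj : ∀ x ∈ S, x ∈ insert v ((karyTree k d).neighborSet v) → (karyTree k d).Adj v x :=
    fun x hxS hx => (Set.mem_insert_iff.1 hx).resolve_left fun h => hv (h ▸ hxS)
  rcases mem_children_or_eq_parent_of_adj (hadj a haS ha) with ha | ha
  · exact ⟨a, ha, haS⟩
  rcases mem_children_or_eq_parent_of_adj (hadj b hbS hb) with hb | hb
  · exact ⟨b, hb, hbS⟩
  exact absurd (ha.trans hb.symm) hab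

theorem _root_.IsRedLDSet.deepLevels_subset (hk : 0 < k) (hS : IsRedLDSet (karyTree k d) S) :
    deepLevels k d ⊆ S := by
  have hleaf : ∀ v : KVert k d, v.depth = d → v ∈ S := fun v hv => by
    by_contra hvS
    obtain ⟨c, hc, -⟩ := hS.exists_mem_children hvS
    have := c.depth_le
    rw [depth_of_mem_children hc] at this
    omega
  intro v hv
  have := v.depth_le
  by_cases hvd : v.depth = d
  · exact hleaf v hvd
  by_contra hvS
  obtain ⟨c, hc⟩ := children_nonempty hk (v := v) (by omega)
  have hcd : c.depth = d := by
    rw [depth_of_mem_children hc]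
    exact le_antisymm (by omega) hv
  -- The only neighbour of the leaf `c` is `v`, so `c` alone would have to be two detectors.
  have honly : ∀ x ∈ S ∩ insert c ((karyTree k d).neighborSet c), x = c := by
    rintro x ⟨hxS, rfl | hx⟩
    · rfl
    rw [eq_parent_of_adj_of_depth_eq hcd hx, parent_eq_of_mem_children hc] at hxS
    exact absurd hxS hvS
  obtain ⟨a, ha, b, hb, hab⟩ := hS.nontrivial_inter_insert_neighborSet c
  exact hab ((honly a ha).trans (honly b hb).symm)

theorem _root_.IsRedLDSet.ncard_deepLevels_add_two_le (hk : 0 < k) (hd : 3 ≤ d)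
    (hS : IsRedLDSet (karyTree k d) S) : (deepLevels k d).ncard + 2 ≤ S.ncard := by
  let r : KVert k d := ofList [] (by simp)
  have hdisj : Disjoint (deepLevels k d) (S ∩ insert r ((karyTree k d).neighborSet r)) :=
    Set.disjoint_left.2 fun x hx ⟨_, hxr⟩ => by
      have hr : r.depth = 0 := rfl
      rw [mem_deepLevels_iff] at hx
      rcases hxr with rfl | hxr
      · omega
      · rcases depth_of_adj hxr with h | h <;> omega
  have := Set.ncard_le_ncard (Set.union_subset (hS.deepLevels_subset hk)
    (Set.inter_subset_left (t := insert r ((karyTree k d).neighborSet r))))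
  rw [Set.ncard_union_eq hdisj] at this
  have := Set.one_lt_ncard_iff_nontrivial.2 (hS.nontrivial_inter_insert_neighborSet r)
  omega

theorem _root_.IsRedLDSet.inter_insert_children_nonempty (hS : IsRedLDSet (karyTree k d) S)
    (c : KVert k d) : (S ∩ insert c c.children).Nonempty := by
  by_cases hc : c ∈ S
  · exact ⟨c, hc, Set.mem_insert c _⟩
  · obtain ⟨x, hx, hxS⟩ := hS.exists_mem_children hc
    exact ⟨x, hxS, Set.mem_insert_of_mem c hx⟩

theorem _root_.IsRedLDSet.inter_insert_children_nontrivial (hS : IsRedLDSet (karyTree k d) S)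
    {c v : KVert k d} (hc : c ∈ v.children) (hv : v ∉ S) :
    (S ∩ insert c c.children).Nontrivial := by
  refine (hS.nontrivial_inter_insert_neighborSet c).mono ?_
  rintro x ⟨hxS, rfl | hx⟩
  · exact ⟨hxS, Set.mem_insert _ _⟩
  refine ⟨hxS, Set.mem_insert_of_mem _ ?_⟩
  rcases mem_children_or_eq_parent_of_adj hx with hx | hx
  · exact hx
  · rw [hx, parent_eq_of_mem_children hc] at hxS
    exact absurd hxS hv

theorem eq_of_mem_insert_children {u v x : KVert k d} (hd : u.depth = v.depth)
    (hu : x ∈ insert u u.children) (hv : x ∈ insert v v.children) : u = v := by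
  rcases hu with rfl | hu <;> rcases hv with rfl | hv
  · rfl
  · have := depth_of_mem_children hv
    omega
  · have := depth_of_mem_children hu
    omega
  · exact eq_of_mem_children_of_mem_children hu hv

theorem depth_of_mem_insert_children {c x : KVert k d} (hx : x ∈ insert c c.children) :
    x.depth = c.depth ∨ x.depth = c.depth + 1 :=
  hx.imp (congrArg depth) depth_of_mem_children

theorem _root_.IsRedLDSet.exists_two_detectors (hS : IsRedLDSet (karyTree k d) S) :
    ∃ φ ψ : KVert k d → KVert k d, ∀ c, φ c ∈ S ∩ insert c c.children ∧
      ψ c ∈ S ∩ insert c c.children ∧ ∀ v, c ∈ v.children → v ∉ S → ψ c ≠ φ c := by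
  choose φ hφ using hS.inter_insert_children_nonempty
  have hψ : ∀ c, ∃ y ∈ S ∩ insert c c.children,
      (S ∩ insert c c.children).Nontrivial → y ≠ φ c := fun c => by
    by_cases h : (S ∩ insert c c.children).Nontrivial
    · obtain ⟨y, hy, hne⟩ := h.exists_ne (φ c)
      exact ⟨y, hy, fun _ => hne⟩
    · exact ⟨φ c, hφ c, fun h' => absurd h' h⟩
  choose ψ hψ hψφ using hψ
  exact ⟨φ, ψ, fun c => ⟨hφ c, hψ c, fun v hc hv =>
    hψφ c (hS.inter_insert_children_nontrivial hc hv)⟩⟩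

/-- An injection: a vertex `c` of depth `j + 1` goes to a detector among `c` and its children,
and a non-detector `v` of depth `j` to a second such detector for a fixed child of `v`. -/
theorem _root_.IsRedLDSet.pow_add_ncard_sdiff_le (hk : 0 < k) (hS : IsRedLDSet (karyTree k d) S)
    {j : ℕ} (hj : j + 1 ≤ d) :
    k ^ (j + 1) + ({v : KVert k d | v.depth = j} \ S).ncard ≤
      (S ∩ {v | j + 1 ≤ v.depth ∧ v.depth ≤ j + 2}).ncard := by
  obtain ⟨φ, ψ, hφψ⟩ := hS.exists_two_detectors
  choose c₀ hc₀ using fun v : KVert k d =>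
    (if hv : v.depth < d then (children_nonempty hk hv).imp fun _ hc _ => hc
      else ⟨v, fun h => absurd h hv⟩ : ∃ c, v.depth < d → c ∈ v.children)
  let A : Set (KVert k d) := {v | v.depth = j + 1}
  let B : Set (KVert k d) := {v | v.depth = j} \ S
  have hc₀B : ∀ v ∈ B, c₀ v ∈ v.children := fun v hv => hc₀ v (by rw [hv.1]; omega)
  have hc₀A : ∀ v ∈ B, c₀ v ∈ A := fun v hv => (depth_of_mem_children (hc₀B v hv)).trans
    (congrArg (· + 1) hv.1)
  let f : KVert k d → KVert k d := fun v => if v.depth = j + 1 then φ v else ψ (c₀ v)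
  have hfA : ∀ a ∈ A, f a = φ a := fun a ha => if_pos ha
  have hfB : ∀ b ∈ B, f b = ψ (c₀ b) := fun b hb => if_neg (by rw [hb.1]; omega)
  have hblock : ∀ c ∈ A, ∀ y ∈ S ∩ insert c c.children,
      y ∈ S ∩ {v | j + 1 ≤ v.depth ∧ v.depth ≤ j + 2} := fun c hc y hy => by
    have hc : c.depth = j + 1 := hc
    rcases depth_of_mem_insert_children hy.2 with h | h <;> exact ⟨hy.1, by omega, by omega⟩
  have hmaps : ∀ v ∈ A ∪ B, f v ∈ S ∩ {v | j + 1 ≤ v.depth ∧ v.depth ≤ j + 2} := by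
    rintro v (hv | hv)
    · exact hfA v hv ▸ hblock v hv _ (hφψ v).1
    · exact hfB v hv ▸ hblock _ (hc₀A v hv) _ (hφψ (c₀ v)).2.1
  have hAB : ∀ a ∈ A, ∀ b ∈ B, f a ≠ f b := by
    intro a ha b hb hab
    rw [hfA a ha, hfB b hb] at hab
    obtain rfl : a = c₀ b := eq_of_mem_insert_children (ha.trans (hc₀A b hb).symm)
      (hφψ a).1.2 (hab ▸ (hφψ (c₀ b)).2.1.2)
    exact (hφψ _).2.2 b (hc₀B b hb) hb.2 hab.symm
  have hinj : Set.InjOn f (A ∪ B) := by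
    rintro a (ha | ha) b (hb | hb) hab
    · rw [hfA a ha, hfA b hb] at hab
      exact eq_of_mem_insert_children (ha.trans hb.symm) (hφψ a).1.2 (hab ▸ (hφψ b).1.2)
    · exact absurd hab (hAB a ha b hb)
    · exact absurd hab.symm (hAB b hb a ha)
    · rw [hfB a ha, hfB b hb] at hab
      have hc : c₀ a = c₀ b := eq_of_mem_insert_children ((hc₀A a ha).trans (hc₀A b hb).symm)
        (hφψ _).2.1.2 (hab ▸ (hφψ _).2.1.2)
      rw [← parent_eq_of_mem_children (hc₀B a ha), hc, parent_eq_of_mem_children (hc₀B b hb)]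
  have hcard : (A ∪ B).ncard = k ^ (j + 1) + B.ncard := by
    rw [Set.ncard_union_eq, ncard_setOf_depth_eq hj]
    exact Set.disjoint_left.2 fun v (hv : v.depth = j + 1) hvB => by
      have : v.depth = j := hvB.1
      omega
  exact hcard ▸ Set.ncard_le_ncard_of_injOn f hmaps hinj

theorem _root_.IsRedLDSet.add_pow_le_ncard_inter (hk : 0 < k) (hS : IsRedLDSet (karyTree k d) S)
    {j : ℕ} (hj : j + 1 ≤ d) :
    k ^ (j + 1) + k ^ j ≤ (S ∩ {v | j ≤ v.depth ∧ v.depth ≤ j + 2}).ncard := by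
  have hlevel := Set.ncard_inter_add_ncard_sdiff_eq_ncard {v : KVert k d | v.depth = j} S
  rw [ncard_setOf_depth_eq (by omega)] at hlevel
  have hsub : {v : KVert k d | v.depth = j} ∩ S ∪ S ∩ {v | j + 1 ≤ v.depth ∧ v.depth ≤ j + 2} ⊆
      S ∩ {v | j ≤ v.depth ∧ v.depth ≤ j + 2} := by
    rintro v (⟨hv, hvS⟩ | ⟨hvS, hv⟩) <;>
      exact ⟨hvS, by simp only [Set.mem_ofPred_eq] at hv ⊢; omega⟩
  have hdisj : Disjoint ({v : KVert k d | v.depth = j} ∩ S)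
      (S ∩ {v | j + 1 ≤ v.depth ∧ v.depth ≤ j + 2}) :=
    Set.disjoint_left.2 fun v h1 h2 => by
      have := h1.1
      have := h2.2
      simp only [Set.mem_ofPred_eq] at *
      omega
  have := Set.ncard_le_ncard hsub
  rw [Set.ncard_union_eq hdisj] at this
  have := hS.pow_add_ncard_sdiff_le hk hj
  omega

end Detectors

theorem hasPrivateNeighbor_of_forall_mem (hk : 2 ≤ k) {T : Set (KVert k d)} {v z : KVert k d}
    (hv : v.depth < d) (h₁ : ∀ w : KVert k d, w.depth = v.depth + 1 → w ≠ z → w ∈ T)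
    (h₂ : ∀ w : KVert k d, w.depth = v.depth + 2 → w ∈ T) :
    HasPrivateNeighbor (karyTree k d) T v := by
  obtain ⟨c, hc, hcz⟩ := (children_nontrivial hk hv).exists_ne z
  refine ⟨c, h₁ c (depth_of_mem_children hc) hcz, Or.inr hc, fun w hw hwc => ?_⟩
  rcases hwc with hwc | hwc
  · exact absurd (h₂ w (by rw [depth_of_mem_children hwc, depth_of_mem_children hc])) hw
  · exact eq_of_mem_children_of_mem_children hwc hc

section DeepLevels

variable {T : Set (KVert k d)}

theorem neighborSet_inter_sdiff_singleton_ne (hk : 2 ≤ k) (hdeep : deepLevels k d ⊆ T)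
    {v z : KVert k d} (hz : z.depth = d) (hv : v ∉ T) :
    (karyTree k d).neighborSet z ∩ (T \ {z}) ≠ (karyTree k d).neighborSet v ∩ T := by
  intro heq
  have hz0 : z.depth ≠ 0 := fun h => hv (hdeep (by rw [mem_deepLevels_iff]; omega))
  have hpT : z.parent ∈ T \ {z} :=
    ⟨hdeep (by rw [mem_deepLevels_iff, depth_parent]; omega), parent_ne_self hz0⟩
  -- The trace of `z` is `{z.parent}`, so `v` would be a grandparent of `z`; but then `v` has
  -- a second child in `T`.
  have hvp : z.parent ∈ (karyTree k d).neighborSet v ∩ T := heq ▸ ⟨adj_parent hz0, hpT⟩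
  rcases hvp.1 with hvp | hpv
  · exact hv (hdeep (by rw [mem_deepLevels_iff, depth_of_mem_children hvp, depth_parent]; omega))
  have hpv := depth_of_mem_children hpv
  rw [depth_parent] at hpv
  obtain ⟨c, hc, hcp⟩ := (children_nontrivial hk (v := v) (by omega)).exists_ne z.parent
  have hcT : c ∈ T := hdeep (by rw [mem_deepLevels_iff, depth_of_mem_children hc]; omega)
  have hzc : c ∈ (karyTree k d).neighborSet z ∩ (T \ {z}) := heq ▸ ⟨Or.inr hc, hcT⟩
  exact hcp (eq_parent_of_adj_of_depth_eq hz hzc.1)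

theorem _root_.IsLDSet.diff_singleton_of_depth_eq (hk : 2 ≤ k) (hd : 0 < d)
    (hT : IsLDSet (karyTree k d) T) (hdeep : deepLevels k d ⊆ T) {z : KVert k d}
    (hz : z.depth = d) : IsLDSet (karyTree k d) (T \ {z}) := by
  have hnadj : ∀ v ∉ T, ¬ (karyTree k d).Adj v z := fun v hv hvz =>
    hv (eq_parent_of_adj_of_depth_eq hz hvz.symm ▸
      hdeep (by rw [mem_deepLevels_iff, depth_parent]; omega))
  have hnd : ∀ v ∉ T \ {z}, v = z ∨ v ∉ T := fun v hv => by
    by_cases h : v = z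
    · exact Or.inl h
    · exact Or.inr fun hvT => hv ⟨hvT, h⟩
  refine isLDSet_of_hasPrivateNeighbor (fun _ => True) (fun _ _ h => absurd trivial h)
    (fun v hv _ => ?_) (fun u hu v hv _ _ huv => ?_)
  · rcases hnd v hv with rfl | hvT
    · refine ⟨v.parent, adj_parent (by omega), hdeep ?_, parent_ne_self (by omega)⟩
      rw [mem_deepLevels_iff, depth_parent]
      omega
    · rw [neighborSet_inter_sdiff_singleton (hnadj v hvT)]
      exact hT.1 v hvT
  · rcases hnd u hu with rfl | huT <;> rcases hnd v hv with rfl | hvT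
    · exact absurd rfl huv
    · rw [neighborSet_inter_sdiff_singleton (hnadj v hvT)]
      exact neighborSet_inter_sdiff_singleton_ne hk hdeep hz hvT
    · rw [neighborSet_inter_sdiff_singleton (hnadj u huT)]
      exact (neighborSet_inter_sdiff_singleton_ne hk hdeep hz huT).symm
    · rw [neighborSet_inter_sdiff_singleton (hnadj u huT),
        neighborSet_inter_sdiff_singleton (hnadj v hvT)]
      exact hT.2 u huT v hvT huv

theorem _root_.IsLDSet.diff_singleton_of_depth_add_one_eq (hk : 2 ≤ k)
    (hT : IsLDSet (karyTree k d) T) (hdeep : deepLevels k d ⊆ T) {z : KVert k d}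
    (hz : z.depth + 1 = d) : IsLDSet (karyTree k d) (T \ {z}) := by
  have hmem : ∀ w : KVert k d, z.depth ≤ w.depth → w ≠ z → w ∈ T \ {z} :=
    fun w hw hwz => ⟨hdeep (by rw [mem_deepLevels_iff]; omega), hwz⟩
  have hnadj : ∀ v ∉ T, v ≠ z.parent → ¬ (karyTree k d).Adj v z := by
    rintro v hv hvp (hvz | hzv)
    · exact hv (hdeep (by rw [mem_deepLevels_iff, depth_of_mem_children hvz]; omega))
    · exact hvp (parent_eq_of_mem_children hzv).symm
  refine isLDSet_of_hasPrivateNeighbor (fun v => v ≠ z ∧ v ≠ z.parent)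
    (fun v hv hP => ?_) (fun v hv hP => ?_) (fun u hu v hv hPu hPv huv => ?_)
  · by_cases hvz : v = z
    · subst hvz
      exact hasPrivateNeighbor_of_forall_mem hk (z := v) (by omega)
        (fun w _ hwv => hmem w (by omega) hwv) (fun w hw => by have := w.depth_le; omega)
    have hvp : v = z.parent := by tauto
    have hz0 : z.depth ≠ 0 := fun h0 =>
      hvz (hvp ▸ eq_of_depth_eq_zero (by rw [depth_parent]; omega) h0)
    have hvd : v.depth + 1 = z.depth := by rw [hvp, depth_parent]; omega
    exact hasPrivateNeighbor_of_forall_mem hk (z := z) (by omega)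
      (fun w _ hwz => hmem w (by omega) hwz) (fun w hw => hmem w (by omega) (by rintro rfl; omega))
  · have hvT : v ∉ T := fun hvT => hv ⟨hvT, hP.1⟩
    rw [neighborSet_inter_sdiff_singleton (hnadj v hvT hP.2)]
    exact hT.1 v hvT
  · have huT : u ∉ T := fun huT => hu ⟨huT, hPu.1⟩
    have hvT : v ∉ T := fun hvT => hv ⟨hvT, hPv.1⟩
    rw [neighborSet_inter_sdiff_singleton (hnadj u huT hPu.2),
      neighborSet_inter_sdiff_singleton (hnadj v hvT hPv.2)]
    exact hT.2 u huT v hvT huv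

theorem isRedLDSet_of_deepLevels_subset (hk : 2 ≤ k) (hd : 0 < d)
    (hT : IsLDSet (karyTree k d) T) (hdeep : deepLevels k d ⊆ T)
    (hlow : ∀ z ∈ T, z ∉ deepLevels k d → IsLDSet (karyTree k d) (T \ {z})) :
    IsRedLDSet (karyTree k d) T := by
  refine ⟨hT, fun z hz => ?_⟩
  by_cases hzd : z ∈ deepLevels k d
  · have := z.depth_le
    rw [mem_deepLevels_iff] at hzd
    rcases (show z.depth = d ∨ z.depth + 1 = d by omega) with h | h
    · exact hT.diff_singleton_of_depth_eq hk hd hdeep h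
    · exact hT.diff_singleton_of_depth_add_one_eq hk hdeep h
  · exact hlow z hz hzd

theorem isLDSet_of_deepLevels_subset (hk : 2 ≤ k) (hd : d ≤ 3) (hdeep : deepLevels k d ⊆ T)
    (hroot : ∀ r : KVert k d, r.depth = 0 → r ∉ T → ∃ c ∈ r.children, c ∈ T) :
    IsLDSet (karyTree k d) T := by
  have hlow : ∀ v ∉ T, v.depth + 2 ≤ d := fun v hv => by
    by_contra h
    exact hv (hdeep (by rw [mem_deepLevels_iff]; omega))
  refine isLDSet_of_hasPrivateNeighbor (fun v => v.depth = 0) (fun v hv hv0 => ?_)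
    (fun r hr hr0 => ?_) (fun u _ v _ hu0 hv0 huv => absurd (eq_of_depth_eq_zero hu0 hv0) huv)
  · have := hlow v hv
    exact hasPrivateNeighbor_of_forall_mem hk (z := v) (by omega)
      (fun w hw _ => hdeep (by rw [mem_deepLevels_iff]; omega))
      (fun w hw => hdeep (by rw [mem_deepLevels_iff]; omega))
  · obtain ⟨c, hc, hcT⟩ := hroot r hr0 hr
    exact ⟨c, Or.inr hc, hcT⟩

end DeepLevels

theorem isLeast_redldCards {n : ℕ} {T : Set (KVert k d)} (hT : IsRedLDSet (karyTree k d) T)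
    (hTn : T.ncard ≤ n) (hn : ∀ S, IsRedLDSet (karyTree k d) S → n ≤ S.ncard) :
    IsLeast (redldCards k d) n :=
  ⟨⟨T, hT, le_antisymm hTn (hn T hT)⟩, fun _ ⟨S, hS, hSn⟩ => hSn ▸ hn S hS⟩

section Recursion

def pushDeep (E : Set (KVert k (d + 1))) : Set (KVert k (d + 4)) :=
  deepLevels k (d + 4) ∪ castLE (by omega) '' E

def pullDeep (S : Set (KVert k (d + 4))) : Set (KVert k (d + 1)) :=
  deepLevels k (d + 1) ∪ castLE (by omega) ⁻¹' S

theorem isLDSet_pushDeep (hk : 2 ≤ k) {E : Set (KVert k (d + 1))}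
    (hE : IsLDSet (karyTree k (d + 1)) E) : IsLDSet (karyTree k (d + 4)) (pushDeep E) := by
  set ι : KVert k (d + 1) → KVert k (d + 4) := castLE (by omega)
  have htr : ∀ w, (karyTree k (d + 4)).neighborSet (ι w) ∩ pushDeep E =
      ι '' ((karyTree k (d + 1)).neighborSet w ∩ E) := fun w =>
    neighborSet_castLE_inter _ fun x hx => by
      have : ¬ d + 4 ≤ x.depth + 1 := by have := w.depth_le; omega
      simp only [pushDeep, Set.mem_union, mem_deepLevels_iff, this, false_or]
  have hlow : ∀ v ∉ pushDeep E, v.depth ≤ d + 1 → ∃ w ∉ E, ι w = v := fun v hv hvd => by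
    obtain ⟨w, hwv⟩ := exists_castLE_eq (by omega) hvd
    exact ⟨w, fun hw => hv (Or.inr ⟨w, hw, hwv⟩), hwv⟩
  refine isLDSet_of_hasPrivateNeighbor (fun v => v.depth ≤ d + 1) (fun v hv hvd => ?_)
    (fun v hv hvd => ?_) (fun u hu v hv hud hvd huv => ?_)
  · have : v.depth + 1 < d + 4 := by
      by_contra h
      exact hv (Or.inl (by rw [mem_deepLevels_iff]; omega))
    exact hasPrivateNeighbor_of_forall_mem hk (z := v) (by omega)
      (fun w hw _ => Or.inl (by rw [mem_deepLevels_iff]; omega))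
      (fun w hw => Or.inl (by rw [mem_deepLevels_iff]; omega))
  · obtain ⟨w, hw, rfl⟩ := hlow v hv hvd
    rw [htr]
    exact (hE.1 w hw).image ι
  · obtain ⟨u', hu', rfl⟩ := hlow u hu hud
    obtain ⟨v', hv', rfl⟩ := hlow v hv hvd
    rw [htr, htr]
    exact fun h => hE.2 u' hu' v' hv' (fun h' => huv (h' ▸ rfl))
      ((Set.image_injective.2 (castLE_injective _)) h)

theorem isLDSet_pullDeep (hk : 2 ≤ k) {S : Set (KVert k (d + 4))}
    (hS : IsLDSet (karyTree k (d + 4)) S) : IsLDSet (karyTree k (d + 1)) (pullDeep S) := by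
  set ι : KVert k (d + 1) → KVert k (d + 4) := castLE (by omega)
  have htr : ∀ w : KVert k (d + 1), w.depth + 1 < d →
      (karyTree k (d + 4)).neighborSet (ι w) ∩ S =
        ι '' ((karyTree k (d + 1)).neighborSet w ∩ pullDeep S) := fun w hw =>
    neighborSet_castLE_inter _ fun x hx => by
      obtain ⟨y, hy⟩ := exists_castLE_eq (k := k) (by omega : d + 1 ≤ d + 4)
        (show x.depth ≤ d + 1 by omega)
      rw [← hy] at hx ⊢
      have : ¬ d + 1 ≤ y.depth + 1 := by rw [depth_castLE] at hx; omega
      rw [(castLE_injective _).mem_set_image]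
      simp only [pullDeep, Set.mem_union, mem_deepLevels_iff, this, false_or, Set.mem_preimage]
  have hnd : ∀ w ∉ pullDeep S, w.depth < d ∧ ι w ∉ S := fun w hw =>
    ⟨by by_contra h; exact hw (Or.inl (by rw [mem_deepLevels_iff]; omega)),
      fun h => hw (Or.inr h)⟩
  refine isLDSet_of_hasPrivateNeighbor (fun w => w.depth + 1 < d) (fun w hw hwd => ?_)
    (fun w hw hwd => ?_) (fun u hu v hv hud hvd huv h => ?_)
  · have := (hnd w hw).1
    exact hasPrivateNeighbor_of_forall_mem hk (z := w) (by omega)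
      (fun x hx _ => Or.inl (by rw [mem_deepLevels_iff]; omega))
      (fun x hx => Or.inl (by rw [mem_deepLevels_iff]; omega))
  · have := hS.1 (ι w) (hnd w hw).2
    rw [htr w hwd] at this
    exact this.of_image
  · refine hS.2 (ι u) (hnd u hu).2 (ι v) (hnd v hv).2 (fun h' => huv (castLE_injective _ h')) ?_
    rw [htr u hud, htr v hvd, h]

theorem pushDeep_sdiff_singleton (E : Set (KVert k (d + 1))) (w : KVert k (d + 1)) :
    pushDeep E \ {castLE (by omega) w} = pushDeep (E \ {w}) := by
  have hw : castLE (by omega) w ∉ deepLevels k (d + 4) := by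
    have := w.depth_le
    rw [mem_deepLevels_iff, depth_castLE]
    omega
  rw [pushDeep, pushDeep, Set.union_sdiff_distrib, Set.sdiff_singleton_eq_self hw,
    Set.image_sdiff (castLE_injective _), Set.image_singleton]

theorem pullDeep_sdiff_singleton (S : Set (KVert k (d + 4))) {z : KVert k (d + 1)}
    (hz : z ∉ deepLevels k (d + 1)) :
    pullDeep S \ {z} = pullDeep (S \ {castLE (by omega) z}) := by
  rw [pullDeep, pullDeep, Set.union_sdiff_distrib, Set.sdiff_singleton_eq_self hz,
    Set.preimage_sdiff, ← Set.image_singleton, (castLE_injective _).preimage_image]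

theorem _root_.IsRedLDSet.pushDeep (hk : 2 ≤ k) {E : Set (KVert k (d + 1))}
    (hE : IsRedLDSet (karyTree k (d + 1)) E) : IsRedLDSet (karyTree k (d + 4)) (pushDeep E) := by
  refine isRedLDSet_of_deepLevels_subset hk (by omega) (isLDSet_pushDeep hk hE.1)
    Set.subset_union_left fun z hz hzd => ?_
  obtain ⟨w, hw, rfl⟩ := hz.resolve_left hzd
  rw [pushDeep_sdiff_singleton]
  exact isLDSet_pushDeep hk (hE.2 w hw)

theorem _root_.IsRedLDSet.pullDeep (hk : 2 ≤ k) {S : Set (KVert k (d + 4))}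
    (hS : IsRedLDSet (karyTree k (d + 4)) S) : IsRedLDSet (karyTree k (d + 1)) (pullDeep S) := by
  refine isRedLDSet_of_deepLevels_subset hk (by omega) (isLDSet_pullDeep hk hS.1)
    Set.subset_union_left fun z hz hzd => ?_
  rw [pullDeep_sdiff_singleton S hzd]
  exact isLDSet_pullDeep hk (hS.2 _ (hz.resolve_left hzd))

theorem ncard_pushDeep_le (E : Set (KVert k (d + 1))) :
    (pushDeep E).ncard ≤ k ^ (d + 4) + k ^ (d + 3) + E.ncard :=
  calc (pushDeep E).ncard ≤ (deepLevels k (d + 4)).ncard + (castLE (by omega) '' E).ncard :=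
        Set.ncard_union_le _ _
    _ ≤ _ := by
      rw [ncard_deepLevels (d := d + 4) rfl]
      exact Nat.add_le_add_left Set.ncard_image_le _

theorem ncard_pullDeep_le (S : Set (KVert k (d + 4))) :
    (pullDeep S).ncard ≤ k ^ (d + 1) + k ^ d + (S ∩ {v | v.depth < d}).ncard := by
  have hsub : pullDeep S ⊆
      deepLevels k (d + 1) ∪ castLE (by omega) ⁻¹' (S ∩ {v | v.depth < d}) := by
    rintro w (hw | hw)
    · exact Or.inl hw
    by_cases hwd : w.depth < d
    · exact Or.inr ⟨hw, hwd⟩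
    · exact Or.inl (by rw [mem_deepLevels_iff]; omega)
  have hpre : (castLE (d := d + 1) (by omega) ⁻¹' (S ∩ {v | v.depth < d})).ncard =
      (S ∩ {v | v.depth < d}).ncard :=
    Set.ncard_preimage_of_injective_subset_range (castLE_injective _)
      fun x hx => exists_castLE_eq _ (Nat.le_succ_of_le (le_of_lt hx.2))
  calc (pullDeep S).ncard ≤ _ := Set.ncard_le_ncard hsub
    _ ≤ _ := Set.ncard_union_le _ _
    _ = _ := by rw [ncard_deepLevels (d := d + 1) rfl, hpre]

theorem _root_.IsRedLDSet.add_ncard_inter_le_ncard (hk : 0 < k) {S : Set (KVert k (d + 4))}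
    (hS : IsRedLDSet (karyTree k (d + 4)) S) :
    k ^ (d + 4) + k ^ (d + 3) + (k ^ (d + 1) + k ^ d) + (S ∩ {v | v.depth < d}).ncard ≤
      S.ncard := by
  have hmid := hS.add_pow_le_ncard_inter hk (j := d) (by omega)
  have hdisj₁ : Disjoint (S ∩ {v | d ≤ v.depth ∧ v.depth ≤ d + 2}) (S ∩ {v | v.depth < d}) :=
    Set.disjoint_left.2 fun v h₁ h₂ => by
      have := h₁.2
      have := h₂.2
      simp only [Set.mem_ofPred_eq] at *
      omega
  have hdisj₂ : Disjoint (deepLevels k (d + 4))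
      (S ∩ {v | d ≤ v.depth ∧ v.depth ≤ d + 2} ∪ S ∩ {v | v.depth < d}) :=
    Set.disjoint_left.2 fun v h₁ h₂ => by
      rw [mem_deepLevels_iff] at h₁
      rcases h₂ with ⟨-, h₂⟩ | ⟨-, h₂⟩ <;> simp only [Set.mem_ofPred_eq] at h₂ <;> omega
  have hsub := Set.union_subset (hS.deepLevels_subset hk)
    (Set.union_subset (Set.inter_subset_left (t := {v | d ≤ v.depth ∧ v.depth ≤ d + 2}))
      (Set.inter_subset_left (t := {v | v.depth < d})))
  have := Set.ncard_le_ncard hsub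
  rw [Set.ncard_union_eq hdisj₂, Set.ncard_union_eq hdisj₁,
    ncard_deepLevels (d := d + 4) rfl] at this
  omega

theorem isLeast_redldCards_add_four (hk : 2 ≤ k) {m : ℕ}
    (hm : IsLeast (redldCards k (d + 1)) m) :
    IsLeast (redldCards k (d + 4)) (m + k ^ (d + 4) + k ^ (d + 3)) := by
  obtain ⟨E, hE, hEm⟩ := hm.1
  refine isLeast_redldCards (hE.pushDeep hk) (by have := ncard_pushDeep_le E; omega)
    fun S hS => ?_
  have h₁ := hm.2 ⟨_, hS.pullDeep hk, rfl⟩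
  have h₂ := ncard_pullDeep_le S
  have h₃ := hS.add_ncard_inter_le_ncard (by omega)
  omega

end Recursion

theorem isLeast_redldCards_ncard_deepLevels (hk : 2 ≤ k) (hd : 0 < d) (hd₂ : d ≤ 2) :
    IsLeast (redldCards k d) (deepLevels k d).ncard := by
  refine isLeast_redldCards (T := deepLevels k d) ?_ le_rfl
    fun S hS => Set.ncard_le_ncard (hS.deepLevels_subset (by omega))
  refine isRedLDSet_of_deepLevels_subset hk hd
    (isLDSet_of_deepLevels_subset hk (by omega) subset_rfl fun r hr hrT => ?_) subset_rfl
    fun z hz hzd => absurd hz hzd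
  rw [mem_deepLevels_iff] at hrT
  obtain ⟨c, hc⟩ := children_nonempty (by omega) (v := r) (by omega)
  exact ⟨c, hc, by rw [mem_deepLevels_iff, depth_of_mem_children hc]; omega⟩

theorem isLeast_redldCards_three (hk : 2 ≤ k) :
    IsLeast (redldCards k 3) (k ^ 3 + k ^ 2 + 2) := by
  let r : KVert k 3 := ofList [] (by simp)
  let w : KVert k 3 := ofList [⟨0, by omega⟩] (by simp)
  have hw : w ∈ r.children := ⟨_, rfl⟩
  have hrw : r ≠ w := fun h => absurd (congrArg depth h) (show (0 : ℕ) ≠ 1 by omega)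
  have hLD : ∀ U : Set (KVert k 3), deepLevels k 3 ⊆ U → r ∈ U ∨ w ∈ U →
      IsLDSet (karyTree k 3) U := fun U hU hrwU =>
    isLDSet_of_deepLevels_subset hk le_rfl hU fun r' hr' hr'U => by
      obtain rfl : r' = r := eq_of_depth_eq_zero hr' rfl
      exact ⟨w, hw, hrwU.resolve_left hr'U⟩
  let T := insert r (insert w (deepLevels k 3))
  have hdeep : deepLevels k 3 ⊆ T := (Set.subset_insert _ _).trans (Set.subset_insert _ _)
  refine isLeast_redldCards (T := T) ?_ ?_ fun S hS => ?_
  · refine isRedLDSet_of_deepLevels_subset hk (by norm_num) (hLD T hdeep (Or.inl (Or.inl rfl)))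
      hdeep fun z hz hzd => hLD _ (fun x hx => ⟨hdeep hx, fun h => hzd (h ▸ hx)⟩) ?_
    rcases hz with rfl | rfl | hz
    · exact Or.inr ⟨Or.inr (Or.inl rfl), hrw.symm⟩
    · exact Or.inl ⟨Or.inl rfl, hrw⟩
    · exact absurd hz hzd
  · calc T.ncard ≤ (insert w (deepLevels k 3)).ncard + 1 := Set.ncard_insert_le _ _
      _ ≤ (deepLevels k 3).ncard + 1 + 1 := Nat.add_le_add_right (Set.ncard_insert_le _ _) 1
      _ = _ := by rw [ncard_deepLevels (d := 3) rfl]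
  · have := hS.ncard_deepLevels_add_two_le (by omega) le_rfl
    rwa [ncard_deepLevels (d := 3) rfl] at this

end KVert

theorem stmt19_general (k d : ℕ) (hk : 2 ≤ k) :
    (d = 1 → IsLeast (redldCards k 1) (k + 1)) ∧
    (d = 2 → IsLeast (redldCards k 2) (k ^ 2 + k)) ∧
    (d = 3 → IsLeast (redldCards k 3) (k ^ 3 + k ^ 2 + 2)) ∧
    (4 ≤ d → ∀ m : ℕ, IsLeast (redldCards k (d - 3)) m →
      IsLeast (redldCards k d) (m + k ^ d + k ^ (d - 1))) := by
  refine ⟨fun _ => ?_, fun _ => ?_, fun _ => KVert.isLeast_redldCards_three hk,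
    fun hd m hm => ?_⟩
  · simpa [KVert.ncard_deepLevels (d := 1) rfl] using
      KVert.isLeast_redldCards_ncard_deepLevels hk (d := 1) one_pos one_le_two
  · simpa [KVert.ncard_deepLevels (d := 2) rfl] using
      KVert.isLeast_redldCards_ncard_deepLevels hk (d := 2) two_pos le_rfl
  · obtain ⟨d, rfl⟩ : ∃ d', d = d' + 4 := ⟨d - 4, by omega⟩
    exact KVert.isLeast_redldCards_add_four hk hm

theorem stmt19 (k d : ℕ) (hk : 2 ≤ k) (hd : 1 ≤ d) :
    (d = 1 → IsLeast (redldCards k 1) (k + 1)) ∧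
    (d = 2 → IsLeast (redldCards k 2) (k ^ 2 + k)) ∧
    (d = 3 → IsLeast (redldCards k 3) (k ^ 3 + k ^ 2 + 2)) ∧
    (4 ≤ d → ∀ m : ℕ, IsLeast (redldCards k (d - 3)) m →
      IsLeast (redldCards k d) (m + k ^ d + k ^ (d - 1))) :=
  stmt19_general k d hk
end
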